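/- arXiv:2505.11207 — 12 statements merged into one kernel-verified Lean document; each statement's English description precedes it below -/
import Mathlib

section
/- For a primitive n-th root of unity ζ_n (n ≥ 2), the sum over pairs 1 ≤ i₁ ≤ i₂ ≤ n-1 of 1/((1-ζ_n^{i₁})(1-ζ_n^{i₂})) equals (n+1)(n-1)/12. -/
open Finset

lemma sum_cast_id' (n : ℕ) : ∑ j ∈ range n, (j:ℂ) = n*(n-1)/2 := by
  induction n with
  | zero => simp
  | succ k ih => rw [sum_range_succ, ih]; push_cast; ring

lemma sum_cast_sq' (n : ℕ) : ∑ j ∈ range n, (j:ℂ)^2 = n*(n-1)*(2*n-1)/6 := by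
  induction n with
  | zero => simp
  | succ k ih => rw [sum_range_succ, ih]; push_cast; ring

lemma key1 (z : ℂ) (n : ℕ) :
    (z - 1) * ∑ j ∈ range n, (j : ℂ) * z ^ j
      = ((n:ℂ) - 1) * z ^ n - (∑ j ∈ range n, z ^ j) + 1 := by
  induction n with
  | zero => simp
  | succ k ih =>
    rw [sum_range_succ, sum_range_succ]
    push_cast
    linear_combination ih

lemma inv_repr (n : ℕ) (hn : 0 < n) (z : ℂ) (hz : z ^ n = 1) (h1 : z ≠ 1) :
    (1 - z)⁻¹ = -(1/n) * ∑ j ∈ range n, (j:ℂ) * z ^ j := by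
  have hz1 : z - 1 ≠ 0 := sub_ne_zero.mpr h1
  have hg : ∑ j ∈ range n, z ^ j = 0 := by
    have h := geom_sum_mul z n
    rw [hz, sub_self] at h
    exact (mul_eq_zero.mp h).resolve_right hz1
  have h := key1 z n
  rw [hg, hz] at h
  have hn' : (n:ℂ) ≠ 0 := Nat.cast_ne_zero.mpr hn.ne'
  have h1z : (1:ℂ) - z ≠ 0 := by
    intro hc; apply h1; linear_combination -hc
  field_simp
  linear_combination -h

section helpers
variable {n : ℕ} {ζ : ℂ}

lemma hF_lemma (hn : 2 ≤ n) (hζ : IsPrimitiveRoot ζ n) (j : ℕ) :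
    ∑ i ∈ Icc 1 (n-1), ζ ^ (i*j) = (if n ∣ j then (n:ℂ) else 0) - 1 := by
  have hn0 : 0 < n := by omega
  have hsplit : ∑ i ∈ range n, ζ ^ (i*j) = 1 + ∑ i ∈ Icc 1 (n-1), ζ ^ (i*j) := by
    rw [range_eq_Ico, Finset.sum_eq_sum_Ico_succ_bot hn0]
    have : Ico 1 n = Icc 1 (n-1) := by
      rw [← Finset.Ico_add_one_right_eq_Icc]; congr 1; omega
    rw [this]; norm_num
  by_cases hd : n ∣ j
  · have hz1 : ζ ^ j = 1 := (hζ.pow_eq_one_iff_dvd j).mpr hd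
    have hone : ∀ i ∈ Icc 1 (n-1), ζ ^ (i*j) = 1 := fun i _ => by
      rw [mul_comm, pow_mul, hz1, one_pow]
    rw [sum_congr rfl hone, sum_const, Nat.card_Icc, if_pos hd]
    have : n - 1 + 1 - 1 = n - 1 := by omega
    rw [this, nsmul_eq_mul, mul_one]
    push_cast [Nat.cast_sub (by omega : 1 ≤ n)]
    ring
  · have hz1 : ζ ^ j ≠ 1 := fun h => hd ((hζ.pow_eq_one_iff_dvd j).mp h)
    have h2 : ((ζ:ℂ)^j) ^ n = 1 := by
      rw [← pow_mul, mul_comm, pow_mul, hζ.pow_eq_one, one_pow]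
    have hg : ∑ i ∈ range n, (ζ^j) ^ i = 0 := by
      have h := geom_sum_mul (ζ^j) n
      rw [h2, sub_self] at h
      exact (mul_eq_zero.mp h).resolve_right (sub_ne_zero.mpr hz1)
    have h0 : ∑ i ∈ range n, ζ ^ (i*j) = 0 := by
      rw [← hg]; exact sum_congr rfl fun i _ => by rw [mul_comm, pow_mul]
    rw [h0] at hsplit
    rw [if_neg hd]
    linear_combination -hsplit
end helpers

theorem stmt1 (n : ℕ) (hn : 2 ≤ n) (ζ : ℂ) (hζ : IsPrimitiveRoot ζ n) :
    ∑ i₁ ∈ Finset.Icc 1 (n - 1), ∑ i₂ ∈ Finset.Icc i₁ (n - 1),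
      ((1 - ζ ^ i₁) * (1 - ζ ^ i₂))⁻¹ = ((n : ℂ) + 1) * ((n : ℂ) - 1) / 12 := by
  have hn0 : 0 < n := by omega
  have hnC : (n:ℂ) ≠ 0 := Nat.cast_ne_zero.mpr hn0.ne'
  set m := n - 1 with hm
  set f : ℕ → ℂ := fun i => (1 - ζ ^ i)⁻¹ with hf
  have hne : ∀ i ∈ Icc 1 m, ζ ^ i ≠ 1 := by
    intro i hi
    rw [mem_Icc] at hi
    rw [Ne, hζ.pow_eq_one_iff_dvd]
    intro hdvd
    have := Nat.le_of_dvd (by omega) hdvd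
    omega
  have hrepr : ∀ i ∈ Icc 1 m, f i = -(1/n) * ∑ j ∈ range n, (j:ℂ) * ζ ^ (i*j) := by
    intro i hi
    have hzi : (ζ ^ i) ^ n = 1 := by
      rw [← pow_mul, mul_comm, pow_mul, hζ.pow_eq_one, one_pow]
    have h := inv_repr n hn0 (ζ^i) hzi (hne i hi)
    simp only [hf, ← pow_mul] at h ⊢
    exact h
  have hF : ∀ j : ℕ, ∑ i ∈ Icc 1 m, ζ ^ (i*j) = (if n ∣ j then (n:ℂ) else 0) - 1 :=
    fun j => hF_lemma hn hζ j
  -- S1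
  have hS1 : ∑ i ∈ Icc 1 m, f i = ((n:ℂ) - 1)/2 := by
    rw [sum_congr rfl hrepr, ← mul_sum, sum_comm]
    have : ∀ j ∈ range n, ∑ i ∈ Icc 1 m, (j:ℂ) * ζ ^ (i*j)
        = (j:ℂ) * ((if n ∣ j then (n:ℂ) else 0) - 1) := by
      intro j _
      rw [← mul_sum, hF j]
    rw [sum_congr rfl this]
    simp_rw [mul_sub, mul_one]
    rw [sum_sub_distrib]
    have hzero : ∑ j ∈ range n, (j:ℂ) * (if n ∣ j then (n:ℂ) else 0) = 0 := by
      apply sum_eq_zero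
      intro j hj
      rw [mem_range] at hj
      by_cases hd : n ∣ j
      · have hj0 : j = 0 := Nat.eq_zero_of_dvd_of_lt hd hj
        subst hj0; simp
      · rw [if_neg hd, mul_zero]
    rw [hzero, sum_cast_id']
    field_simp
    ring
  -- S2
  have hS2 : ∑ i ∈ Icc 1 m, f i * f i = ((n:ℂ) - 1) * (5 - (n:ℂ)) / 12 := by
    have step1 : ∀ i ∈ Icc 1 m, f i * f i
        = (1/(n:ℂ))^2 * ∑ j ∈ range n, ∑ l ∈ range n, (j:ℂ) * (l:ℂ) * ζ ^ (i*(j+l)) := by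
      intro i hi
      rw [hrepr i hi]
      have hr : ∀ A : ℂ, (-(1/(n:ℂ))*A)*(-(1/(n:ℂ))*A) = (1/(n:ℂ))^2 * (A*A) :=
        fun A => by ring
      rw [hr, Finset.sum_mul_sum]
      congr 1
      refine sum_congr rfl fun j _ => sum_congr rfl fun l _ => ?_
      rw [mul_mul_mul_comm, ← pow_add, ← Nat.mul_add]
    rw [sum_congr rfl step1, ← mul_sum, sum_comm]
    have step2 : ∀ j ∈ range n, ∑ i ∈ Icc 1 m, ∑ l ∈ range n, (j:ℂ) * (l:ℂ) * ζ ^ (i*(j+l))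
        = ∑ l ∈ range n, (j:ℂ) * (l:ℂ) * ((if n ∣ (j+l) then (n:ℂ) else 0) - 1) := by
      intro j _
      rw [sum_comm]
      refine sum_congr rfl fun l _ => ?_
      rw [← mul_sum, hF (j+l)]
    rw [sum_congr rfl step2]
    simp_rw [mul_sub, mul_one, sum_sub_distrib]
    have hD1 : ∀ j ∈ range n,
        ∑ l ∈ range n, (j:ℂ) * (l:ℂ) * (if n ∣ (j+l) then (n:ℂ) else 0)
          = (j:ℂ) * ((n:ℂ) - (j:ℂ)) * n := by
      intro j hj
      rw [mem_range] at hj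
      rcases Nat.eq_zero_or_pos j with hj0 | hj1
      · subst hj0; simp
      · have hcond : ∀ l ∈ range n,
            (j:ℂ) * (l:ℂ) * (if n ∣ (j+l) then (n:ℂ) else 0)
              = if l = n - j then (j:ℂ) * (l:ℂ) * n else 0 := by
          intro l hl
          rw [mem_range] at hl
          by_cases hd : n ∣ (j + l)
          · have : l = n - j := by
              obtain ⟨c, hc⟩ := hd
              rcases c with _ | _ | c
              · omega
              · omega
              · exfalso
                have h2 : n * (c + 1 + 1) = n * c + 2 * n := by ring
                rw [h2] at hc
                omega
            rw [if_pos hd, if_pos this]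
          · have : l ≠ n - j := by
              intro h
              exact hd ⟨1, by omega⟩
            rw [if_neg hd, if_neg this, mul_zero]
        rw [sum_congr rfl hcond, Finset.sum_ite_eq' (range n) (n-j)
          (fun l => (j:ℂ) * (l:ℂ) * n), if_pos (by rw [mem_range]; omega)]
        rw [Nat.cast_sub (by omega : j ≤ n)]
    rw [sum_congr rfl hD1]
    have hsum1 : ∑ j ∈ range n, (j:ℂ) * ((n:ℂ) - (j:ℂ)) * n
        = (n:ℂ) * ((n:ℂ) * ((n:ℂ)*((n:ℂ)-1)/2) - (n:ℂ)*((n:ℂ)-1)*(2*(n:ℂ)-1)/6) := by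
      have h : ∀ j ∈ range n, (j:ℂ) * ((n:ℂ) - (j:ℂ)) * n
          = ((n:ℂ)*(n:ℂ)) * (j:ℂ) - (n:ℂ) * (j:ℂ)^2 := fun j _ => by ring
      rw [sum_congr rfl h, sum_sub_distrib, ← mul_sum, ← mul_sum, sum_cast_id', sum_cast_sq']
      ring
    rw [hsum1]
    have hsq : ∀ j ∈ range n, ∑ l ∈ range n, (j:ℂ) * (l:ℂ) = (j:ℂ) * ((n:ℂ)*((n:ℂ)-1)/2) := by
      intro j _
      rw [← mul_sum, sum_cast_id']
    rw [sum_congr rfl hsq, ← sum_mul, sum_cast_id']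
    field_simp
    ring
  -- triangle symmetrization
  have hsym : ∑ i ∈ Icc 1 m, ∑ j ∈ Icc 1 i, f i * f j
      = ∑ i ∈ Icc 1 m, ∑ j ∈ Icc i m, f i * f j := by
    rw [Finset.sum_comm' (s' := fun y => Icc y m) (t' := Icc 1 m)
      (by intro x y; simp only [mem_Icc]; omega)]
    exact sum_congr rfl fun j _ => sum_congr rfl fun i _ => mul_comm _ _
  have hsplit2 : ∀ i ∈ Icc 1 m, ((∑ j ∈ Icc i m, f i * f j) + ∑ j ∈ Icc 1 i, f i * f j)
      = (∑ j ∈ Icc 1 m, f i * f j) + f i * f i := by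
    intro i hi
    rw [mem_Icc] at hi
    rw [← Finset.Ioc_insert_left hi.2, sum_insert (by simp),
      (id (Finset.Icc_add_one_left_eq_Ioc 0 i) : Icc 1 i = Ioc 0 i),
      (id (Finset.Icc_add_one_left_eq_Ioc 0 m) : Icc 1 m = Ioc 0 m)]
    have hcons := Finset.sum_Ioc_consecutive (fun j => f i * f j) (Nat.zero_le i) hi.2
    linear_combination hcons
  have hdouble : (∑ i ∈ Icc 1 m, ∑ j ∈ Icc i m, f i * f j) * 2
      = (∑ i ∈ Icc 1 m, f i) * (∑ i ∈ Icc 1 m, f i) + ∑ i ∈ Icc 1 m, f i * f i := by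
    have h := sum_congr rfl hsplit2
    rw [sum_add_distrib, sum_add_distrib, hsym, ← Finset.sum_mul_sum] at h
    linear_combination h
  have hLHS : ∑ i₁ ∈ Finset.Icc 1 (n - 1), ∑ i₂ ∈ Finset.Icc i₁ (n - 1),
      ((1 - ζ ^ i₁) * (1 - ζ ^ i₂))⁻¹ = ∑ i ∈ Icc 1 m, ∑ j ∈ Icc i m, f i * f j := by
    refine sum_congr rfl fun i _ => sum_congr rfl fun j _ => ?_
    simp only [hf, mul_inv]
  rw [hLHS]
  rw [hS1, hS2] at hdouble
  linear_combination hdouble / 2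
end

section
/- For a primitive n-th root of unity ζ_n (n ≥ 2), the sum over triples 1 ≤ i₁ ≤ i₂ ≤ i₃ ≤ n-1 of ∏_j 1/(1-ζ_n^{i_j}) equals (n+1)(n-1)/24. -/
open Finset Polynomial

private noncomputable def S1 (a : ℕ → ℂ) (T : Finset ℕ) : ℂ := ∑ i ∈ T, a i
private noncomputable def S2 (a : ℕ → ℂ) (T : Finset ℕ) : ℂ :=
  ∑ i ∈ T, a i * S1 a (T.filter (i ≤ ·))
private noncomputable def S3 (a : ℕ → ℂ) (T : Finset ℕ) : ℂ :=
  ∑ i ∈ T, a i * S2 a (T.filter (i ≤ ·))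

private lemma filter_insert_max {m : ℕ} {T : Finset ℕ} (h : ∀ x ∈ T, x < m) {i : ℕ}
    (hi : i ≤ m) : (insert m T).filter (i ≤ ·) = insert m (T.filter (i ≤ ·)) := by
  rw [Finset.filter_insert, if_pos hi]

private lemma filter_insert_self {m : ℕ} {T : Finset ℕ} (h : ∀ x ∈ T, x < m) :
    (insert m T).filter (m ≤ ·) = {m} := by
  rw [Finset.filter_insert, if_pos le_rfl]
  have : T.filter (m ≤ ·) = ∅ := by
    apply Finset.filter_eq_empty_iff.2
    intro x hx
    exact not_le.2 (h x hx)
  rw [this]; rfl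

private lemma not_mem_of_max {m : ℕ} {T : Finset ℕ} (h : ∀ x ∈ T, x < m) : m ∉ T :=
  fun hm => absurd (h m hm) (lt_irrefl m)

private lemma S2_insert (a : ℕ → ℂ) {m : ℕ} {T : Finset ℕ} (h : ∀ x ∈ T, x < m) :
    S2 a (insert m T) = a m ^ 2 + a m * S1 a T + S2 a T := by
  have hm := not_mem_of_max h
  unfold S2
  rw [Finset.sum_insert hm, filter_insert_self h]
  have h1 : S1 a {m} = a m := Finset.sum_singleton _ _
  have h2 : ∀ i ∈ T, a i * S1 a ((insert m T).filter (i ≤ ·))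
      = a m * a i + a i * S1 a (T.filter (i ≤ ·)) := by
    intro i hi
    rw [filter_insert_max h (h i hi).le]
    have hmf : m ∉ T.filter (i ≤ ·) := fun hc => hm (Finset.mem_of_mem_filter _ hc)
    rw [S1, Finset.sum_insert hmf, ← S1]
    ring
  rw [Finset.sum_congr rfl h2, Finset.sum_add_distrib, ← Finset.mul_sum, ← S1, h1]
  ring

private lemma S3_insert (a : ℕ → ℂ) {m : ℕ} {T : Finset ℕ} (h : ∀ x ∈ T, x < m) :
    S3 a (insert m T) = a m ^ 3 + a m ^ 2 * S1 a T + a m * S2 a T + S3 a T := by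
  have hm := not_mem_of_max h
  unfold S3
  rw [Finset.sum_insert hm, filter_insert_self h]
  have h1 : S2 a {m} = a m ^ 2 := by
    unfold S2
    rw [Finset.sum_singleton]
    have : ({m} : Finset ℕ).filter (m ≤ ·) = {m} := by
      rw [Finset.filter_singleton, if_pos le_rfl]
    rw [this, S1, Finset.sum_singleton]; ring
  have h2 : ∀ i ∈ T, a i * S2 a ((insert m T).filter (i ≤ ·))
      = a m ^ 2 * a i + a m * (a i * S1 a (T.filter (i ≤ ·))) + a i * S2 a (T.filter (i ≤ ·)) := by
    intro i hi
    rw [filter_insert_max h (h i hi).le]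
    have hfl : ∀ x ∈ T.filter (i ≤ ·), x < m := fun x hx => h x (Finset.mem_of_mem_filter _ hx)
    rw [S2_insert a hfl]
    ring
  rw [Finset.sum_congr rfl h2, Finset.sum_add_distrib, Finset.sum_add_distrib,
    ← Finset.mul_sum, ← Finset.mul_sum, ← S1, ← S2, h1]
  ring

private lemma key_identity (a : ℕ → ℂ) (T : Finset ℕ) :
    2 * S2 a T = (S1 a T) ^ 2 + (∑ i ∈ T, a i ^ 2) ∧
    6 * S3 a T = (S1 a T) ^ 3 + 3 * S1 a T * (∑ i ∈ T, a i ^ 2) + 2 * (∑ i ∈ T, a i ^ 3) := by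
  induction T using Finset.induction_on_max with
  | empty => simp [S1, S2, S3]
  | insert m T hlt ih =>
    obtain ⟨ih2, ih3⟩ := ih
    have hm := not_mem_of_max hlt
    have hS1i : S1 a (insert m T) = a m + S1 a T := by
      unfold S1; rw [Finset.sum_insert hm]
    rw [S2_insert a hlt, S3_insert a hlt, hS1i, Finset.sum_insert hm, Finset.sum_insert hm]
    constructor
    · linear_combination ih2
    · linear_combination ih3 + 3 * a m * ih2

private lemma deriv_prod_XsubC (c : ℕ → ℂ) (s : Finset ℕ) :
    derivative (∏ i ∈ s, (X - C (c i))) = ∑ i ∈ s, ∏ j ∈ s.erase i, (X - C (c j)) := by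
  classical
  induction s using Finset.induction_on with
  | empty => simp
  | @insert b s ha ih =>
    rw [Finset.prod_insert ha, derivative_mul, derivative_X_sub_C, one_mul, ih,
      Finset.sum_insert ha, Finset.erase_insert ha, Finset.mul_sum]
    congr 1
    apply Finset.sum_congr rfl
    intro i hi
    rw [Finset.erase_insert_of_ne (by rintro rfl; exact ha hi),
      Finset.prod_insert (fun hc => ha (Finset.mem_of_mem_erase hc))]

private lemma sum_descFactorial (k : ℕ) (n : ℕ) :
    (k + 1) * ∑ j ∈ Finset.range n, j.descFactorial k = n.descFactorial (k + 1) := by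
  induction n with
  | zero => simp
  | succ n ih =>
    rw [Finset.sum_range_succ, Nat.mul_add, ih, Nat.succ_descFactorial_succ,
      Nat.descFactorial_succ]
    rcases le_or_gt k n with h | h
    · rw [← Nat.add_mul]; congr 1; omega
    · have h0 : n.descFactorial k = 0 := Nat.descFactorial_eq_zero_iff_lt.2 h
      simp [h0]

private lemma prod_range_XsubC (n : ℕ) (hn : 2 ≤ n) {ζ : ℂ} (hζ : IsPrimitiveRoot ζ n) :
    ∏ i ∈ Finset.range n, (X - C (ζ ^ i)) = X ^ n - 1 := by
  have hn0 : 0 < n := by omega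
  have him : Finset.image (ζ ^ ·) (Finset.range n) = Polynomial.nthRootsFinset n (1 : ℂ) := by
    apply Finset.eq_of_subset_of_card_le
    · intro x hx
      rw [Finset.mem_image] at hx
      obtain ⟨i, _, rfl⟩ := hx
      rw [Polynomial.mem_nthRootsFinset hn0, ← pow_mul, mul_comm, pow_mul, hζ.pow_eq_one,
        one_pow]
    · rw [hζ.card_nthRootsFinset, Finset.card_image_of_injOn hζ.injOn_pow, Finset.card_range]
  rw [Polynomial.X_pow_sub_one_eq_prod hn0 hζ, ← him,
    Finset.prod_image (fun x hx y hy hxy => hζ.injOn_pow hx hy hxy)]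

private lemma prod_Icc_XsubC (n : ℕ) (hn : 2 ≤ n) {ζ : ℂ} (hζ : IsPrimitiveRoot ζ n) :
    ∏ i ∈ Finset.Icc 1 (n - 1), (X - C (ζ ^ i)) = ∑ j ∈ Finset.range n, (X : ℂ[X]) ^ j := by
  have h0 : (0 : ℕ) ∈ Finset.range n := by simp; omega
  have hT : Finset.Icc 1 (n - 1) = (Finset.range n).erase 0 := by
    ext x; simp [Finset.mem_Icc, Finset.mem_range]; omega
  have hsplit : ∏ i ∈ Finset.range n, (X - C (ζ ^ i))
      = (X - 1) * ∏ i ∈ (Finset.range n).erase 0, (X - C (ζ ^ i)) := by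
    rw [← Finset.mul_prod_erase _ _ h0]; norm_num
  have hgeom : ((X : ℂ[X]) - 1) * ∑ j ∈ Finset.range n, (X : ℂ[X]) ^ j = X ^ n - 1 := by
    rw [mul_comm, geom_sum_mul]
  have hX1 : ((X : ℂ[X]) - 1) ≠ 0 := by
    have := Polynomial.X_sub_C_ne_zero (R := ℂ) 1
    simpa using this
  apply mul_left_cancel₀ hX1
  rw [← hT] at hsplit
  rw [hgeom, ← hsplit, prod_range_XsubC n hn hζ]

theorem stmt2 (n : ℕ) (hn : 2 ≤ n) (ζ : ℂ) (hζ : IsPrimitiveRoot ζ n) :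
    ∑ i₁ ∈ Finset.Icc 1 (n - 1), ∑ i₂ ∈ Finset.Icc i₁ (n - 1), ∑ i₃ ∈ Finset.Icc i₂ (n - 1),
      ((1 - ζ ^ i₁) * (1 - ζ ^ i₂) * (1 - ζ ^ i₃))⁻¹
      = ((n : ℂ) + 1) * ((n : ℂ) - 1) / 24 := by
  classical
  have hnC : (n : ℂ) ≠ 0 := Nat.cast_ne_zero.2 (by omega)
  set T : Finset ℕ := Finset.Icc 1 (n - 1) with hT
  have hQ := prod_Icc_XsubC n hn hζ
  rw [← hT] at hQ
  -- nonvanishing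
  have hne : ∀ i ∈ T, (1 : ℂ) - ζ ^ i ≠ 0 := by
    intro i hi
    rw [hT, Finset.mem_Icc] at hi
    have h1 := hζ.pow_ne_one_of_pos_of_lt (l := i) (by omega) (by omega)
    intro hc
    exact h1 (by linear_combination -hc)
  -- evaluation of products at 1
  have hprodT : ∏ i ∈ T, ((1 : ℂ) - ζ ^ i) = n := by
    have h := congrArg (Polynomial.eval 1) hQ
    rw [Polynomial.eval_prod, Polynomial.eval_finset_sum] at h
    simpa using h
  have hprod1 : ∀ i ∈ T, ∏ j ∈ T.erase i, ((1 : ℂ) - ζ ^ j) = n * (1 - ζ ^ i)⁻¹ := by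
    intro i hi
    rw [eq_mul_inv_iff_mul_eq₀ (hne i hi), mul_comm, Finset.mul_prod_erase T (fun x => (1:ℂ) - ζ ^ x) hi, hprodT]
  have hprod2 : ∀ i ∈ T, ∀ j ∈ T.erase i, ∏ k ∈ (T.erase i).erase j, ((1 : ℂ) - ζ ^ k)
      = n * (1 - ζ ^ i)⁻¹ * (1 - ζ ^ j)⁻¹ := by
    intro i hi j hj
    rw [eq_mul_inv_iff_mul_eq₀ (hne j (Finset.mem_of_mem_erase hj)), mul_comm,
      Finset.mul_prod_erase (T.erase i) (fun x => (1:ℂ) - ζ ^ x) hj, hprod1 i hi]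
  have hprod3 : ∀ i ∈ T, ∀ j ∈ T.erase i, ∀ k ∈ (T.erase i).erase j,
      ∏ l ∈ ((T.erase i).erase j).erase k, ((1 : ℂ) - ζ ^ l)
      = n * (1 - ζ ^ i)⁻¹ * (1 - ζ ^ j)⁻¹ * (1 - ζ ^ k)⁻¹ := by
    intro i hi j hj k hk
    have hkT : k ∈ T := Finset.mem_of_mem_erase (Finset.mem_of_mem_erase hk)
    rw [eq_mul_inv_iff_mul_eq₀ (hne k hkT), mul_comm,
      Finset.mul_prod_erase ((T.erase i).erase j) (fun x => (1:ℂ) - ζ ^ x) hk, hprod2 i hi j hj]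
  -- derivative identities
  have hder1 : (∑ i ∈ T, ∏ j ∈ T.erase i, (X - C (ζ ^ j)))
      = ∑ j ∈ Finset.range n, C ((j : ℂ)) * X ^ (j - 1) := by
    rw [← deriv_prod_XsubC, hQ, derivative_sum]
    exact Finset.sum_congr rfl fun j _ => derivative_X_pow j
  have hder2 : (∑ i ∈ T, ∑ j ∈ T.erase i, ∏ k ∈ (T.erase i).erase j, (X - C (ζ ^ k)))
      = ∑ j ∈ Finset.range n, C ((j : ℂ)) * (C (((j - 1 : ℕ) : ℂ)) * X ^ (j - 1 - 1)) := by
    calc ∑ i ∈ T, ∑ j ∈ T.erase i, ∏ k ∈ (T.erase i).erase j, (X - C (ζ ^ k))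
        = ∑ i ∈ T, derivative (∏ j ∈ T.erase i, (X - C (ζ ^ j))) :=
          Finset.sum_congr rfl fun i _ => (deriv_prod_XsubC _ _).symm
      _ = derivative (∑ i ∈ T, ∏ j ∈ T.erase i, (X - C (ζ ^ j))) := (derivative_sum).symm
      _ = derivative (∑ j ∈ Finset.range n, C ((j : ℂ)) * X ^ (j - 1)) := by rw [hder1]
      _ = ∑ j ∈ Finset.range n, C ((j : ℂ)) * (C (((j - 1 : ℕ) : ℂ)) * X ^ (j - 1 - 1)) := by
          rw [derivative_sum]
          exact Finset.sum_congr rfl fun j _ => by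
            rw [derivative_C_mul, derivative_X_pow]
  have hder3 : (∑ i ∈ T, ∑ j ∈ T.erase i, ∑ k ∈ (T.erase i).erase j,
        ∏ l ∈ ((T.erase i).erase j).erase k, (X - C (ζ ^ l)))
      = ∑ j ∈ Finset.range n, C ((j : ℂ)) * (C (((j - 1 : ℕ) : ℂ))
          * (C (((j - 1 - 1 : ℕ) : ℂ)) * X ^ (j - 1 - 1 - 1))) := by
    calc ∑ i ∈ T, ∑ j ∈ T.erase i, ∑ k ∈ (T.erase i).erase j,
          ∏ l ∈ ((T.erase i).erase j).erase k, (X - C (ζ ^ l))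
        = ∑ i ∈ T, ∑ j ∈ T.erase i, derivative (∏ k ∈ (T.erase i).erase j, (X - C (ζ ^ k))) :=
          Finset.sum_congr rfl fun i _ => Finset.sum_congr rfl fun j _ =>
            (deriv_prod_XsubC _ _).symm
      _ = derivative (∑ i ∈ T, ∑ j ∈ T.erase i, ∏ k ∈ (T.erase i).erase j, (X - C (ζ ^ k))) := by
          rw [derivative_sum]
          exact Finset.sum_congr rfl fun i _ => (derivative_sum).symm
      _ = ∑ j ∈ Finset.range n, C ((j : ℂ)) * (C (((j - 1 : ℕ) : ℂ))
            * (C (((j - 1 - 1 : ℕ) : ℂ)) * X ^ (j - 1 - 1 - 1))) := by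
          rw [hder2, derivative_sum]
          exact Finset.sum_congr rfl fun j _ => by
            rw [derivative_C_mul, derivative_C_mul, derivative_X_pow]
  -- power sums
  set p1 := ∑ i ∈ T, ((1:ℂ) - ζ ^ i)⁻¹ with hp1
  set p2 := ∑ i ∈ T, (((1:ℂ) - ζ ^ i)⁻¹) ^ 2 with hp2
  set p3 := ∑ i ∈ T, (((1:ℂ) - ζ ^ i)⁻¹) ^ 3 with hp3
  have hevalP : ∀ s : Finset ℕ, Polynomial.eval 1 (∏ j ∈ s, (X - C (ζ ^ j)))
      = ∏ j ∈ s, ((1:ℂ) - ζ ^ j) := by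
    intro s; rw [Polynomial.eval_prod]; exact Finset.prod_congr rfl fun j _ => by simp
  have hE1 : (n:ℂ) * p1 = ∑ j ∈ Finset.range n, (j : ℂ) := by
    have h := congrArg (Polynomial.eval 1) hder1
    rw [Polynomial.eval_finset_sum, Polynomial.eval_finset_sum] at h
    calc (n:ℂ) * p1 = ∑ i ∈ T, (n:ℂ) * ((1:ℂ) - ζ ^ i)⁻¹ := by rw [hp1, Finset.mul_sum]
      _ = ∑ i ∈ T, Polynomial.eval 1 (∏ j ∈ T.erase i, (X - C (ζ ^ j))) := by
          refine Finset.sum_congr rfl fun i hi => ?_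
          rw [hevalP, hprod1 i hi]
      _ = ∑ j ∈ Finset.range n, Polynomial.eval 1 (C ((j:ℂ)) * X ^ (j-1)) := h
      _ = ∑ j ∈ Finset.range n, (j : ℂ) := Finset.sum_congr rfl fun j _ => by simp
  have hE2 : (n:ℂ) * (p1 ^ 2 - p2) = ∑ j ∈ Finset.range n, (j:ℂ) * ((j-1:ℕ):ℂ) := by
    have h := congrArg (Polynomial.eval 1) hder2
    rw [Polynomial.eval_finset_sum, Polynomial.eval_finset_sum] at h
    calc (n:ℂ) * (p1 ^ 2 - p2)
        = ∑ i ∈ T, ((n:ℂ) * p1 * ((1:ℂ)-ζ^i)⁻¹ - (n:ℂ) * (((1:ℂ)-ζ^i)⁻¹)^2) := by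
          rw [Finset.sum_sub_distrib, ← Finset.mul_sum, ← Finset.mul_sum, ← hp1, ← hp2]; ring
      _ = ∑ i ∈ T, ((n:ℂ) * ((1:ℂ)-ζ^i)⁻¹) * (p1 - ((1:ℂ)-ζ^i)⁻¹) :=
          Finset.sum_congr rfl fun i _ => by ring
      _ = ∑ i ∈ T, ∑ j ∈ T.erase i, (n:ℂ) * ((1:ℂ)-ζ^i)⁻¹ * ((1:ℂ)-ζ^j)⁻¹ := by
          refine Finset.sum_congr rfl fun i hi => ?_
          rw [← Finset.mul_sum, Finset.sum_erase_eq_sub hi, ← hp1]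
      _ = ∑ i ∈ T, Polynomial.eval 1
            (∑ j ∈ T.erase i, ∏ k ∈ (T.erase i).erase j, (X - C (ζ ^ k))) := by
          refine Finset.sum_congr rfl fun i hi => ?_
          rw [Polynomial.eval_finset_sum]
          refine Finset.sum_congr rfl fun j hj => ?_
          rw [hevalP, hprod2 i hi j hj]
      _ = ∑ j ∈ Finset.range n, Polynomial.eval 1
            (C ((j:ℂ)) * (C (((j-1:ℕ):ℂ)) * X ^ (j-1-1))) := h
      _ = ∑ j ∈ Finset.range n, (j:ℂ) * ((j-1:ℕ):ℂ) := Finset.sum_congr rfl fun j _ => by simp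
  have hE3 : (n:ℂ) * (p1 ^ 3 - 3 * p1 * p2 + 2 * p3)
      = ∑ j ∈ Finset.range n, (j:ℂ) * (((j-1:ℕ):ℂ) * ((j-1-1:ℕ):ℂ)) := by
    have h := congrArg (Polynomial.eval 1) hder3
    rw [Polynomial.eval_finset_sum, Polynomial.eval_finset_sum] at h
    calc (n:ℂ) * (p1 ^ 3 - 3 * p1 * p2 + 2 * p3)
        = ∑ i ∈ T, ((n:ℂ) * (p1^2 - p2) * ((1:ℂ)-ζ^i)⁻¹
            - 2 * (n:ℂ) * p1 * (((1:ℂ)-ζ^i)⁻¹)^2 + 2 * (n:ℂ) * (((1:ℂ)-ζ^i)⁻¹)^3) := by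
          rw [Finset.sum_add_distrib, Finset.sum_sub_distrib, ← Finset.mul_sum,
            ← Finset.mul_sum, ← Finset.mul_sum, ← hp1, ← hp2, ← hp3]; ring
      _ = ∑ i ∈ T, ((n:ℂ) * ((1:ℂ)-ζ^i)⁻¹)
            * ((p1 - ((1:ℂ)-ζ^i)⁻¹)^2 - (p2 - (((1:ℂ)-ζ^i)⁻¹)^2)) :=
          Finset.sum_congr rfl fun i _ => by ring
      _ = ∑ i ∈ T, ∑ j ∈ T.erase i,
            ((n:ℂ) * ((1:ℂ)-ζ^i)⁻¹ * ((1:ℂ)-ζ^j)⁻¹) * (p1 - ((1:ℂ)-ζ^i)⁻¹ - ((1:ℂ)-ζ^j)⁻¹) := by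
          refine Finset.sum_congr rfl fun i hi => ?_
          have e1 : ∑ j ∈ T.erase i, ((1:ℂ)-ζ^j)⁻¹ = p1 - ((1:ℂ)-ζ^i)⁻¹ := by
            rw [Finset.sum_erase_eq_sub hi, ← hp1]
          have e2 : ∑ j ∈ T.erase i, (((1:ℂ)-ζ^j)⁻¹)^2 = p2 - (((1:ℂ)-ζ^i)⁻¹)^2 := by
            rw [Finset.sum_erase_eq_sub hi, ← hp2]
          calc ((n:ℂ) * ((1:ℂ)-ζ^i)⁻¹)
                * ((p1 - ((1:ℂ)-ζ^i)⁻¹)^2 - (p2 - (((1:ℂ)-ζ^i)⁻¹)^2))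
              = ((n:ℂ) * ((1:ℂ)-ζ^i)⁻¹ * (p1 - ((1:ℂ)-ζ^i)⁻¹))
                  * (∑ j ∈ T.erase i, ((1:ℂ)-ζ^j)⁻¹)
                - ((n:ℂ) * ((1:ℂ)-ζ^i)⁻¹) * (∑ j ∈ T.erase i, (((1:ℂ)-ζ^j)⁻¹)^2) := by
                rw [e1, e2]; ring
            _ = ∑ j ∈ T.erase i, (((n:ℂ) * ((1:ℂ)-ζ^i)⁻¹ * (p1 - ((1:ℂ)-ζ^i)⁻¹))
                  * ((1:ℂ)-ζ^j)⁻¹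
                - ((n:ℂ) * ((1:ℂ)-ζ^i)⁻¹) * (((1:ℂ)-ζ^j)⁻¹)^2) := by
                rw [Finset.sum_sub_distrib, ← Finset.mul_sum, ← Finset.mul_sum]
            _ = ∑ j ∈ T.erase i, ((n:ℂ) * ((1:ℂ)-ζ^i)⁻¹ * ((1:ℂ)-ζ^j)⁻¹)
                  * (p1 - ((1:ℂ)-ζ^i)⁻¹ - ((1:ℂ)-ζ^j)⁻¹) :=
                Finset.sum_congr rfl fun j _ => by ring
      _ = ∑ i ∈ T, ∑ j ∈ T.erase i, ∑ k ∈ (T.erase i).erase j,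
            (n:ℂ) * ((1:ℂ)-ζ^i)⁻¹ * ((1:ℂ)-ζ^j)⁻¹ * ((1:ℂ)-ζ^k)⁻¹ := by
          refine Finset.sum_congr rfl fun i hi => Finset.sum_congr rfl fun j hj => ?_
          rw [← Finset.mul_sum, Finset.sum_erase_eq_sub hj,
            Finset.sum_erase_eq_sub hi, ← hp1]
      _ = ∑ i ∈ T, Polynomial.eval 1 (∑ j ∈ T.erase i, ∑ k ∈ (T.erase i).erase j,
            ∏ l ∈ ((T.erase i).erase j).erase k, (X - C (ζ ^ l))) := by
          refine Finset.sum_congr rfl fun i hi => ?_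
          rw [Polynomial.eval_finset_sum]
          refine Finset.sum_congr rfl fun j hj => ?_
          rw [Polynomial.eval_finset_sum]
          refine Finset.sum_congr rfl fun k hk => ?_
          rw [hevalP, hprod3 i hi j hj k hk]
      _ = ∑ j ∈ Finset.range n, Polynomial.eval 1 (C ((j:ℂ)) * (C (((j-1:ℕ):ℂ))
            * (C (((j-1-1:ℕ):ℂ)) * X ^ (j-1-1-1)))) := h
      _ = ∑ j ∈ Finset.range n, (j:ℂ) * (((j-1:ℕ):ℂ) * ((j-1-1:ℕ):ℂ)) :=
          Finset.sum_congr rfl fun j _ => by simp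
  -- values of the range sums
  have hsum1 : (2:ℂ) * (∑ j ∈ Finset.range n, (j:ℂ)) = (n:ℂ) * ((n:ℂ) - 1) := by
    have h := sum_descFactorial 1 n
    have hd : n.descFactorial 2 = (n - 1) * n := by
      rw [Nat.descFactorial_succ, Nat.descFactorial_one]
    calc (2:ℂ) * (∑ j ∈ Finset.range n, (j:ℂ))
        = ((2 * ∑ j ∈ Finset.range n, j.descFactorial 1 : ℕ) : ℂ) := by
          push_cast [Nat.descFactorial_one]; ring
      _ = ((n.descFactorial 2 : ℕ) : ℂ) := by rw [h]
      _ = (n:ℂ) * ((n:ℂ) - 1) := by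
          rw [hd, Nat.cast_mul, Nat.cast_sub (by omega : 1 ≤ n)]; push_cast; ring
  have hsum2 : (3:ℂ) * (∑ j ∈ Finset.range n, (j:ℂ) * ((j-1:ℕ):ℂ))
      = (n:ℂ) * ((n:ℂ) - 1) * ((n:ℂ) - 2) := by
    have h := sum_descFactorial 2 n
    have hterm : ∀ j : ℕ, ((j.descFactorial 2 : ℕ) : ℂ) = (j:ℂ) * ((j-1:ℕ):ℂ) := by
      intro j
      rw [Nat.descFactorial_succ, Nat.descFactorial_one, Nat.cast_mul]; ring
    have hd : n.descFactorial 3 = (n - 2) * ((n - 1) * n) := by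
      rw [Nat.descFactorial_succ, Nat.descFactorial_succ, Nat.descFactorial_one]
    calc (3:ℂ) * (∑ j ∈ Finset.range n, (j:ℂ) * ((j-1:ℕ):ℂ))
        = ((3 * ∑ j ∈ Finset.range n, j.descFactorial 2 : ℕ) : ℂ) := by
          rw [Finset.sum_congr rfl fun j _ => (hterm j).symm]; push_cast; ring
      _ = ((n.descFactorial 3 : ℕ) : ℂ) := by rw [h]
      _ = (n:ℂ) * ((n:ℂ) - 1) * ((n:ℂ) - 2) := by
          rw [hd, Nat.cast_mul, Nat.cast_mul, Nat.cast_sub (by omega : 2 ≤ n),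
            Nat.cast_sub (by omega : 1 ≤ n)]
          push_cast; ring
  have hsum3 : (4:ℂ) * (∑ j ∈ Finset.range n, (j:ℂ) * (((j-1:ℕ):ℂ) * ((j-1-1:ℕ):ℂ)))
      = (n:ℂ) * ((n:ℂ) - 1) * ((n:ℂ) - 2) * ((n:ℂ) - 3) := by
    have h := sum_descFactorial 3 n
    have hterm : ∀ j : ℕ, ((j.descFactorial 3 : ℕ) : ℂ)
        = (j:ℂ) * (((j-1:ℕ):ℂ) * ((j-1-1:ℕ):ℂ)) := by
      intro j
      have h2 : j - 2 = j - 1 - 1 := by omega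
      rw [Nat.descFactorial_succ, Nat.descFactorial_succ, Nat.descFactorial_one, h2,
        Nat.cast_mul, Nat.cast_mul]
      ring
    calc (4:ℂ) * (∑ j ∈ Finset.range n, (j:ℂ) * (((j-1:ℕ):ℂ) * ((j-1-1:ℕ):ℂ)))
        = ((4 * ∑ j ∈ Finset.range n, j.descFactorial 3 : ℕ) : ℂ) := by
          rw [Finset.sum_congr rfl fun j _ => (hterm j).symm]; push_cast; ring
      _ = ((n.descFactorial 4 : ℕ) : ℂ) := by rw [h]
      _ = (n:ℂ) * ((n:ℂ) - 1) * ((n:ℂ) - 2) * ((n:ℂ) - 3) := by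
          rcases Nat.lt_or_ge n 3 with h3 | h3
          · have hn2 : n = 2 := by omega
            subst hn2; norm_num [Nat.descFactorial]
          · rw [Nat.descFactorial_succ, Nat.descFactorial_succ, Nat.descFactorial_succ,
              Nat.descFactorial_one, Nat.cast_mul, Nat.cast_mul, Nat.cast_mul,
              Nat.cast_sub (by omega : 3 ≤ n), Nat.cast_sub (by omega : 2 ≤ n),
              Nat.cast_sub (by omega : 1 ≤ n)]
            push_cast; ring
  -- convert the goal to S3
  have hgoal : ∑ i₁ ∈ T, ∑ i₂ ∈ Finset.Icc i₁ (n - 1), ∑ i₃ ∈ Finset.Icc i₂ (n - 1),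
      ((1 - ζ ^ i₁) * (1 - ζ ^ i₂) * (1 - ζ ^ i₃))⁻¹
      = S3 (fun i => ((1:ℂ) - ζ ^ i)⁻¹) T := by
    unfold S3
    refine Finset.sum_congr rfl fun i₁ h₁ => ?_
    have hm₁ : 1 ≤ i₁ ∧ i₁ ≤ n - 1 := by rw [hT, Finset.mem_Icc] at h₁; exact h₁
    have hset1 : T.filter (i₁ ≤ ·) = Finset.Icc i₁ (n - 1) := by
      rw [hT]; ext x
      simp only [Finset.mem_filter, Finset.mem_Icc]
      omega
    unfold S2
    rw [hset1, Finset.mul_sum]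
    refine Finset.sum_congr rfl fun i₂ h₂ => ?_
    have hm₂ : i₁ ≤ i₂ ∧ i₂ ≤ n - 1 := by rw [Finset.mem_Icc] at h₂; exact h₂
    have hset2 : (Finset.Icc i₁ (n-1)).filter (i₂ ≤ ·) = Finset.Icc i₂ (n - 1) := by
      ext x
      simp only [Finset.mem_filter, Finset.mem_Icc]
      omega
    unfold S1
    rw [hset2, Finset.mul_sum, Finset.mul_sum]
    refine Finset.sum_congr rfl fun i₃ h₃ => ?_
    rw [mul_inv, mul_inv]
    ring
  rw [hgoal]
  -- solve
  obtain ⟨-, hk6⟩ := key_identity (fun i => ((1:ℂ) - ζ ^ i)⁻¹) T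
  have hS1T : S1 (fun i => ((1:ℂ) - ζ ^ i)⁻¹) T = p1 := by rw [S1, hp1]
  rw [hS1T] at hk6
  rw [← hp2, ← hp3] at hk6
  -- derive explicit values
  have hv1 : p1 = ((n:ℂ) - 1) / 2 := by
    apply mul_left_cancel₀ hnC
    linear_combination hE1 + hsum1 / 2
  have hv2 : p2 = p1 ^ 2 - ((n:ℂ) - 1) * ((n:ℂ) - 2) / 3 := by
    apply mul_left_cancel₀ hnC
    linear_combination -hE2 - hsum2 / 3
  have hv3 : p3 = (3 * p1 * p2 - p1 ^ 3) / 2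
      + ((n:ℂ) - 1) * ((n:ℂ) - 2) * ((n:ℂ) - 3) / 8 := by
    apply mul_left_cancel₀ hnC
    linear_combination hE3 / 2 + hsum3 / 8
  rw [hv1] at hv2
  rw [hv1, hv2] at hv3
  rw [hv1, hv2, hv3] at hk6
  linear_combination hk6 / 6
end

section
/- For a primitive n-th root of unity ζ_n (n ≥ 2), the sum over 1 ≤ i₁ ≤ i₂ ≤ i₃ ≤ i₄ ≤ n-1 of ∏_j 1/(1-ζ_n^{i_j}) equals -(n+1)(n-1)(n²-19)/720. -/
open Finset Polynomial

namespace Stmt3Aux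

noncomputable def E1 (f : ℕ → ℂ) (N a : ℕ) : ℂ := ∑ i ∈ Icc a N, f i
noncomputable def E2 (f : ℕ → ℂ) (N a : ℕ) : ℂ := ∑ i ∈ Icc a N, f i * E1 f N (i+1)
noncomputable def E3 (f : ℕ → ℂ) (N a : ℕ) : ℂ := ∑ i ∈ Icc a N, f i * E2 f N (i+1)
noncomputable def E4 (f : ℕ → ℂ) (N a : ℕ) : ℂ := ∑ i ∈ Icc a N, f i * E3 f N (i+1)
noncomputable def H2 (f : ℕ → ℂ) (N a : ℕ) : ℂ := ∑ i ∈ Icc a N, f i * E1 f N i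
noncomputable def H3 (f : ℕ → ℂ) (N a : ℕ) : ℂ := ∑ i ∈ Icc a N, f i * H2 f N i
noncomputable def H4 (f : ℕ → ℂ) (N a : ℕ) : ℂ := ∑ i ∈ Icc a N, f i * H3 f N i

lemma sum_peel (g : ℕ → ℂ) {a N : ℕ} (h : a ≤ N) :
    ∑ i ∈ Icc a N, g i = g a + ∑ i ∈ Icc (a+1) N, g i := by
  rw [Finset.Icc_add_one_left_eq_Ioc, ← Finset.Ioc_insert_left h, Finset.sum_insert (by simp)]

lemma key (f : ℕ → ℂ) (N : ℕ) : ∀ a,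
    H2 f N a = (E1 f N a)^2 - E2 f N a
    ∧ H3 f N a = (E1 f N a)^3 - 2*(E1 f N a)*(E2 f N a) + E3 f N a
    ∧ H4 f N a = (E1 f N a)^4 - 3*(E1 f N a)^2*(E2 f N a) + (E2 f N a)^2
        + 2*(E1 f N a)*(E3 f N a) - E4 f N a := by
  suffices h : ∀ d a, N + 1 - a ≤ d → (H2 f N a = (E1 f N a)^2 - E2 f N a
    ∧ H3 f N a = (E1 f N a)^3 - 2*(E1 f N a)*(E2 f N a) + E3 f N a
    ∧ H4 f N a = (E1 f N a)^4 - 3*(E1 f N a)^2*(E2 f N a) + (E2 f N a)^2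
        + 2*(E1 f N a)*(E3 f N a) - E4 f N a) from
    fun a => h (N + 1) a (by omega)
  intro d
  induction d with
  | zero =>
    intro a ha
    have h : ¬ a ≤ N := by omega
    simp [H2, H3, H4, E1, E2, E3, E4, Finset.Icc_eq_empty h]
  | succ d ih =>
    intro a ha
    by_cases hle : a ≤ N
    · obtain ⟨ih2, ih3, ih4⟩ := ih (a+1) (by omega)
      have e1p : E1 f N a = f a + E1 f N (a+1) := sum_peel _ hle
      have e2p : E2 f N a = f a * E1 f N (a+1) + E2 f N (a+1) := sum_peel _ hle
      have e3p : E3 f N a = f a * E2 f N (a+1) + E3 f N (a+1) := sum_peel _ hle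
      have e4p : E4 f N a = f a * E3 f N (a+1) + E4 f N (a+1) := sum_peel _ hle
      have h2p : H2 f N a = f a * E1 f N a + H2 f N (a+1) := sum_peel _ hle
      have h3p : H3 f N a = f a * H2 f N a + H3 f N (a+1) := sum_peel _ hle
      have h4p : H4 f N a = f a * H3 f N a + H4 f N (a+1) := sum_peel _ hle
      have h2 : H2 f N a = (E1 f N a)^2 - E2 f N a := by
        rw [h2p, ih2, e1p, e2p]; ring
      have h3 : H3 f N a = (E1 f N a)^3 - 2*(E1 f N a)*(E2 f N a) + E3 f N a := by
        rw [h3p, h2, ih3, e1p, e2p, e3p]; ring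
      refine ⟨h2, h3, ?_⟩
      rw [h4p, h3, ih4, e1p, e2p, e3p, e4p]; ring
    · have h : ¬ a ≤ N := hle
      simp [H2, H3, H4, E1, E2, E3, E4, Finset.Icc_eq_empty h]

noncomputable def Q (f : ℕ → ℂ) (N a : ℕ) : Polynomial ℂ :=
  ∏ i ∈ Icc a N, (1 + C (f i) * X)

lemma keyQ (f : ℕ → ℂ) (N : ℕ) : ∀ a,
    (Q f N a).coeff 0 = 1 ∧ (Q f N a).coeff 1 = E1 f N a ∧ (Q f N a).coeff 2 = E2 f N a
    ∧ (Q f N a).coeff 3 = E3 f N a ∧ (Q f N a).coeff 4 = E4 f N a := by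
  suffices h : ∀ d a, N + 1 - a ≤ d → ((Q f N a).coeff 0 = 1 ∧ (Q f N a).coeff 1 = E1 f N a
      ∧ (Q f N a).coeff 2 = E2 f N a ∧ (Q f N a).coeff 3 = E3 f N a
      ∧ (Q f N a).coeff 4 = E4 f N a) from fun a => h (N+1) a (by omega)
  intro d
  induction d with
  | zero =>
    intro a ha
    have h : ¬ a ≤ N := by omega
    simp [Q, E1, E2, E3, E4, Finset.Icc_eq_empty h, Polynomial.coeff_one]
  | succ d ih =>
    intro a ha
    by_cases hle : a ≤ N
    · obtain ⟨ih0, ih1, ih2, ih3, ih4⟩ := ih (a+1) (by omega)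
      have qp : Q f N a = (1 + C (f a) * X) * Q f N (a+1) := by
        rw [Q, Q, Finset.Icc_add_one_left_eq_Ioc, ← Finset.Ioc_insert_left hle,
          Finset.prod_insert (by simp)]
      have cf : ∀ k, (Q f N a).coeff (k+1) = (Q f N (a+1)).coeff (k+1)
          + f a * (Q f N (a+1)).coeff k := by
        intro k
        rw [qp, add_mul, one_mul, mul_assoc, Polynomial.coeff_add, Polynomial.coeff_C_mul,
          Polynomial.coeff_X_mul]
      have c0 : (Q f N a).coeff 0 = 1 := by
        rw [qp, Polynomial.mul_coeff_zero]
        simp [ih0]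
      have e1p : E1 f N a = f a + E1 f N (a+1) := sum_peel _ hle
      have e2p : E2 f N a = f a * E1 f N (a+1) + E2 f N (a+1) := sum_peel _ hle
      have e3p : E3 f N a = f a * E2 f N (a+1) + E3 f N (a+1) := sum_peel _ hle
      have e4p : E4 f N a = f a * E3 f N (a+1) + E4 f N (a+1) := sum_peel _ hle
      refine ⟨c0, ?_, ?_, ?_, ?_⟩
      · rw [cf 0, ih0, ih1, e1p]; ring
      · rw [cf 1, ih1, ih2, e2p]; ring
      · rw [cf 2, ih2, ih3, e3p]; ring
      · rw [cf 3, ih3, ih4, e4p]; ring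
    · have h : ¬ a ≤ N := hle
      simp [Q, E1, E2, E3, E4, Finset.Icc_eq_empty h, Polynomial.coeff_one]

lemma sum_range_choose' (n k : ℕ) : ∑ j ∈ range n, j.choose k = n.choose (k+1) := by
  induction n with
  | zero => simp
  | succ n ih => rw [Finset.sum_range_succ, ih, Nat.choose_succ_succ']; omega

lemma cast_chooses (n : ℕ) :
    ((n.choose 2 : ℕ) : ℂ) = n*(n-1)/2
    ∧ ((n.choose 3 : ℕ) : ℂ) = n*(n-1)*(n-2)/6
    ∧ ((n.choose 4 : ℕ) : ℂ) = n*(n-1)*(n-2)*(n-3)/24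
    ∧ ((n.choose 5 : ℕ) : ℂ) = n*(n-1)*(n-2)*(n-3)*(n-4)/120 := by
  induction n with
  | zero => norm_num
  | succ n ih =>
    obtain ⟨h2, h3, h4, h5⟩ := ih
    refine ⟨?_, ?_, ?_, ?_⟩ <;>
      rw [Nat.choose_succ_succ'] <;> push_cast [h2, h3, h4, h5, Nat.choose_one_right] <;> ring

lemma prod_range_eq (n : ℕ) (hn : 2 ≤ n) (ζ : ℂ) (hζ : IsPrimitiveRoot ζ n) :
    ∏ i ∈ range n, (X - C (ζ^i)) = X^n - 1 := by
  have hmon : (X^n - 1 : ℂ[X]).Monic := by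
    simpa using monic_X_pow_sub_C (1:ℂ) (by omega : n ≠ 0)
  have hroots : (X^n - 1 : ℂ[X]).roots = (Multiset.range n).map (ζ ^ ·) := by
    have h1 : (X^n - 1 : ℂ[X]).roots = nthRoots n 1 := by
      rw [nthRoots]; norm_num
    rw [h1, hζ.nthRoots_eq (one_pow n)]
    simp
  have := prod_multiset_X_sub_C_of_monic_of_roots_card_eq hmon ?_
  · rw [← this, hroots, Multiset.map_map]
    rw [Finset.prod, Finset.range_val]
    rfl
  · rw [hroots]
    have : ((X:ℂ[X])^n - 1).natDegree = n := by
      simpa using natDegree_X_pow_sub_C (n := n) (r := (1:ℂ))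
    simp [this]

end Stmt3Aux

open Stmt3Aux

theorem stmt3 (n : ℕ) (hn : 2 ≤ n) (ζ : ℂ) (hζ : IsPrimitiveRoot ζ n) :
    ∑ i₁ ∈ Finset.Icc 1 (n - 1), ∑ i₂ ∈ Finset.Icc i₁ (n - 1), ∑ i₃ ∈ Finset.Icc i₂ (n - 1),
      ∑ i₄ ∈ Finset.Icc i₃ (n - 1),
      ((1 - ζ ^ i₁) * (1 - ζ ^ i₂) * (1 - ζ ^ i₃) * (1 - ζ ^ i₄))⁻¹
      = -(((n : ℂ) + 1) * ((n : ℂ) - 1) * ((n : ℂ) ^ 2 - 19)) / 720 := by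
  set N := n - 1 with hN
  set y : ℕ → ℂ := fun i => (1 - ζ^i)⁻¹ with hy
  have hne : ∀ i ∈ Icc 1 N, (1 - ζ^i) ≠ 0 := by
    intro i hi
    rw [mem_Icc] at hi
    have := hζ.pow_ne_one_of_pos_of_lt (by omega : i ≠ 0) (by omega : i < n)
    exact fun h => this (by linear_combination -h)
  -- the geometric product identity
  have hins : range n = insert 0 (Icc 1 N) := by
    ext x; simp [Finset.mem_insert, mem_Icc, Finset.mem_range]; omega
  have geom : ∏ i ∈ Icc 1 N, (X - C (ζ^i)) = ∑ i ∈ range n, (X:ℂ[X])^i := by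
    have h1 : (X - 1 : ℂ[X]) * ∏ i ∈ Icc 1 N, (X - C (ζ^i)) = X^n - 1 := by
      rw [← prod_range_eq n hn ζ hζ, hins, Finset.prod_insert (by simp)]
      norm_num
    have h2 : (X - 1 : ℂ[X]) * ∑ i ∈ range n, (X:ℂ[X])^i = X^n - 1 := by
      rw [mul_comm, geom_sum_mul]
    have hX1 : (X - 1 : ℂ[X]) ≠ 0 := by
      simpa using Polynomial.X_sub_C_ne_zero (1:ℂ)
    exact mul_left_cancel₀ hX1 (h1.trans h2.symm)
  have prodval : ∏ i ∈ Icc 1 N, (1 - ζ^i) = (n : ℂ) := by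
    have := congrArg (Polynomial.eval 1) geom
    simpa [Polynomial.eval_prod, Polynomial.eval_finset_sum] using this
  -- n • Q = comp of geometric sum
  have hcomp : C (n:ℂ) * Q y N 1 = ∑ j ∈ range n, ((X:ℂ[X]) + 1)^j := by
    have hL : C (n:ℂ) * Q y N 1 = ∏ i ∈ Icc 1 N, (X + C (1 - ζ^i)) := by
      rw [← prodval, map_prod, Q, ← Finset.prod_mul_distrib]
      refine Finset.prod_congr rfl fun i hi => ?_
      have h1 : (1 - ζ^i) * y i = 1 := mul_inv_cancel₀ (hne i hi)
      rw [mul_add, mul_one, ← mul_assoc, ← C_mul, h1, C_1, one_mul, add_comm]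
    have hR : (∑ i ∈ range n, (X:ℂ[X])^i).comp (X + 1) = ∑ j ∈ range n, ((X:ℂ[X]) + 1)^j := by
      simp [Polynomial.X_pow_comp]
    rw [hL, ← hR, ← geom, Polynomial.prod_comp]
    refine Finset.prod_congr rfl fun i hi => ?_
    rw [Polynomial.sub_comp, Polynomial.X_comp, Polynomial.C_comp, C_sub, C_1]
    ring
  have hn0 : (n : ℂ) ≠ 0 := Nat.cast_ne_zero.2 (by omega)
  obtain ⟨q0, q1, q2, q3, q4⟩ := keyQ y N 1
  -- coefficient values
  have hcoeff : ∀ k, (n : ℂ) * (Q y N 1).coeff k = (n.choose (k+1) : ℂ) := by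
    intro k
    have h1 : (C (n:ℂ) * Q y N 1).coeff k = (n:ℂ) * (Q y N 1).coeff k :=
      Polynomial.coeff_C_mul _
    rw [← h1, hcomp, Polynomial.finset_sum_coeff]
    simp only [Polynomial.coeff_X_add_one_pow]
    rw [← Nat.cast_sum, sum_range_choose' n k]
  have hE : ∀ k, (Q y N 1).coeff k = (n.choose (k+1) : ℂ) / n := by
    intro k
    field_simp
    rw [mul_comm, hcoeff k]
  have hE1 : E1 y N 1 = (n.choose 2 : ℂ) / n := by rw [← q1, hE]
  have hE2 : E2 y N 1 = (n.choose 3 : ℂ) / n := by rw [← q2, hE]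
  have hE3 : E3 y N 1 = (n.choose 4 : ℂ) / n := by rw [← q3, hE]
  have hE4 : E4 y N 1 = (n.choose 5 : ℂ) / n := by rw [← q4, hE]
  -- target equals H4
  have hH : (∑ i₁ ∈ Finset.Icc 1 N, ∑ i₂ ∈ Finset.Icc i₁ N, ∑ i₃ ∈ Finset.Icc i₂ N,
      ∑ i₄ ∈ Finset.Icc i₃ N,
      ((1 - ζ ^ i₁) * (1 - ζ ^ i₂) * (1 - ζ ^ i₃) * (1 - ζ ^ i₄))⁻¹) = H4 y N 1 := by
    rw [H4]
    refine Finset.sum_congr rfl fun i₁ _ => ?_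
    rw [H3, Finset.mul_sum]
    refine Finset.sum_congr rfl fun i₂ _ => ?_
    rw [H2, Finset.mul_sum, Finset.mul_sum]
    refine Finset.sum_congr rfl fun i₃ _ => ?_
    rw [E1, Finset.mul_sum, Finset.mul_sum, Finset.mul_sum]
    refine Finset.sum_congr rfl fun i₄ _ => ?_
    simp only [hy, mul_inv]
    ring
  obtain ⟨-, -, k4⟩ := key y N 1
  obtain ⟨c2, c3, c4, c5⟩ := cast_chooses n
  have d2 : ((n.choose 2 : ℕ) : ℂ)/n = ((n:ℂ)-1)/2 := by
    rw [c2]; field_simp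
  have d3 : ((n.choose 3 : ℕ) : ℂ)/n = ((n:ℂ)-1)*((n:ℂ)-2)/6 := by
    rw [c3]; field_simp
  have d4 : ((n.choose 4 : ℕ) : ℂ)/n = ((n:ℂ)-1)*((n:ℂ)-2)*((n:ℂ)-3)/24 := by
    rw [c4]; field_simp
  have d5 : ((n.choose 5 : ℕ) : ℂ)/n = ((n:ℂ)-1)*((n:ℂ)-2)*((n:ℂ)-3)*((n:ℂ)-4)/120 := by
    rw [c5]; field_simp
  rw [hH, k4, hE1, hE2, hE3, hE4, d2, d3, d4, d5]
  ring
end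

section
/- For a primitive n-th root of unity ζ_n (n ≥ 2), the sum over 1 ≤ i ≤ n-1 of 1/(1-ζ_n^i)² equals -(n-1)(n-5)/12. -/
/-!
For a nontrivial `n`-th root of unity `ω`, telescoping gives `(1 - ω) * ∑ k ω^k = -n`
(sums over `k < n`), so `1 / (1 - ω)^2 = (∑ k ω^k)^2 / n^2`. Summing the squares over all
`n`-th roots of unity is a discrete Parseval identity: by orthogonality only the pairs
`(k, l)` with `n ∣ k + l` survive, and the result is `n * ∑ k (n - k) = n^2 (n^2 - 1) / 6`.
Removing the term `ω = 1`, which contributes `(n (n - 1) / 2)^2`, and dividing by `n^2`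
leaves `(n^2 - 1) / 6 - (n - 1)^2 / 4 = -(n - 1)(n - 5) / 12`.
-/

open Finset

section CommRing

variable {R : Type*} [CommRing R]

theorem one_sub_mul_sum_range_mul_pow (ω : R) (n : ℕ) :
    (1 - ω) * ∑ k ∈ range n, (k : R) * ω ^ k = ω * ∑ k ∈ range n, ω ^ k - n * ω ^ n := by
  induction n with
  | zero => simp
  | succ n ih =>
    rw [sum_range_succ, sum_range_succ, mul_add, ih]
    push_cast
    ring

theorem two_mul_sum_range_cast (n : ℕ) : 2 * ∑ k ∈ range n, (k : R) = n * (n - 1) := by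
  induction n with
  | zero => simp
  | succ n ih =>
    rw [sum_range_succ, mul_add, ih]
    push_cast
    ring

theorem six_mul_sum_range_cast_mul_sub (n : ℕ) :
    6 * ∑ k ∈ range n, (k : R) * (n - k) = (n - 1) * n * (n + 1) := by
  induction n with
  | zero => simp
  | succ n ih =>
    have hsplit : ∑ k ∈ range n, (k : R) * ((n + 1 : ℕ) - k)
        = ∑ k ∈ range n, (k : R) * (n - k) + ∑ k ∈ range n, (k : R) := by
      rw [← sum_add_distrib]
      exact sum_congr rfl fun k _ => by push_cast; ring
    rw [sum_range_succ, hsplit, mul_add, mul_add, ih]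
    push_cast
    linear_combination 3 * two_mul_sum_range_cast (R := R) n

theorem Nat.dvd_add_iff_eq_sub {n k l : ℕ} (hk : 0 < k) (hkn : k < n) (hl : l < n) :
    n ∣ k + l ↔ l = n - k := by
  constructor
  · rintro ⟨m, hm⟩
    rcases m with _ | _ | m
    · omega
    · omega
    · nlinarith
  · intro h
    exact ⟨1, by omega⟩

theorem sum_range_ite_dvd_add_cast_mul {n k : ℕ} (hkn : k < n) :
    ∑ l ∈ range n, (if n ∣ k + l then (k : R) * l else 0) = k * (n - k) := by
  rcases Nat.eq_zero_or_pos k with rfl | hk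
  · simp
  calc ∑ l ∈ range n, (if n ∣ k + l then (k : R) * l else 0)
      = ∑ l ∈ range n, (if l = n - k then (k : R) * l else 0) :=
        sum_congr rfl fun l hl => by simp only [Nat.dvd_add_iff_eq_sub hk hkn (mem_range.mp hl)]
    _ = k * (n - k) := by
        rw [sum_ite_eq', if_pos (mem_range.mpr (by omega)), Nat.cast_sub hkn.le]

theorem six_mul_sum_range_sum_range_ite_dvd_add (n : ℕ) :
    6 * ∑ k ∈ range n, ∑ l ∈ range n, (if n ∣ k + l then (k : R) * l else 0)
      = (n - 1) * n * (n + 1) := by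
  rw [sum_congr rfl fun k hk => sum_range_ite_dvd_add_cast_mul (mem_range.mp hk),
    six_mul_sum_range_cast_mul_sub]

end CommRing

section IsDomain

variable {R : Type*} [CommRing R] [IsDomain R]

theorem geom_sum_eq_zero_of_pow_eq_one {ω : R} {n : ℕ} (h1 : ω ^ n = 1) (h2 : ω ≠ 1) :
    ∑ i ∈ range n, ω ^ i = 0 := by
  have h := mul_geom_sum ω n
  rw [h1, sub_self] at h
  exact (mul_eq_zero.mp h).resolve_left (sub_ne_zero.mpr h2)

theorem one_sub_mul_sum_range_mul_pow_of_pow_eq_one {ω : R} {n : ℕ} (h1 : ω ^ n = 1)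
    (h2 : ω ≠ 1) : (1 - ω) * ∑ k ∈ range n, (k : R) * ω ^ k = -n := by
  rw [one_sub_mul_sum_range_mul_pow, geom_sum_eq_zero_of_pow_eq_one h1 h2, h1]
  ring

namespace IsPrimitiveRoot

theorem geom_sum_pow_eq_ite {ζ : R} {n : ℕ} (hζ : IsPrimitiveRoot ζ n) (m : ℕ) :
    ∑ i ∈ range n, (ζ ^ m) ^ i = if n ∣ m then (n : R) else 0 := by
  split_ifs with h
  · simp [(hζ.pow_eq_one_iff_dvd m).mpr h]
  · refine geom_sum_eq_zero_of_pow_eq_one ?_ fun h' => h ((hζ.pow_eq_one_iff_dvd m).mp h')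
    rw [← pow_mul, mul_comm, pow_mul, hζ.pow_eq_one, one_pow]

theorem sum_range_sq_sum_range_mul_pow {ζ : R} {n : ℕ} (hζ : IsPrimitiveRoot ζ n)
    (a : ℕ → R) :
    ∑ i ∈ range n, (∑ k ∈ range n, a k * (ζ ^ i) ^ k) ^ 2
      = n * ∑ k ∈ range n, ∑ l ∈ range n, (if n ∣ k + l then a k * a l else 0) := by
  calc ∑ i ∈ range n, (∑ k ∈ range n, a k * (ζ ^ i) ^ k) ^ 2
      = ∑ i ∈ range n, ∑ k ∈ range n, ∑ l ∈ range n, a k * a l * (ζ ^ (k + l)) ^ i := by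
        refine sum_congr rfl fun i _ => ?_
        rw [sq, sum_mul_sum]
        exact sum_congr rfl fun k _ => sum_congr rfl fun l _ => by ring
    _ = ∑ k ∈ range n, ∑ l ∈ range n, a k * a l * ∑ i ∈ range n, (ζ ^ (k + l)) ^ i := by
        rw [sum_comm]
        refine sum_congr rfl fun k _ => ?_
        rw [sum_comm]
        exact sum_congr rfl fun l _ => (mul_sum _ _ _).symm
    _ = n * ∑ k ∈ range n, ∑ l ∈ range n, (if n ∣ k + l then a k * a l else 0) := by
        simp only [geom_sum_pow_eq_ite hζ, mul_sum]
        refine sum_congr rfl fun k _ => sum_congr rfl fun l _ => ?_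
        split_ifs <;> ring

end IsPrimitiveRoot

end IsDomain

theorem inv_one_sub_eq_neg_sum_range_mul_pow_div {K : Type*} [Field K] {ω : K} {n : ℕ}
    (hn : (n : K) ≠ 0) (h1 : ω ^ n = 1) (h2 : ω ≠ 1) :
    (1 - ω)⁻¹ = -(∑ k ∈ range n, (k : K) * ω ^ k) / n := by
  refine inv_eq_of_mul_eq_one_right ?_
  rw [mul_div_assoc', mul_neg, one_sub_mul_sum_range_mul_pow_of_pow_eq_one h1 h2, neg_neg,
    div_self hn]

theorem stmt4 (n : ℕ) (hn : 2 ≤ n) (ζ : ℂ) (hζ : IsPrimitiveRoot ζ n) :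
    ∑ i ∈ Finset.Icc 1 (n - 1), ((1 - ζ ^ i) ^ 2)⁻¹
      = -(((n : ℂ) - 1) * ((n : ℂ) - 5)) / 12 := by
  set g : ℂ → ℂ := fun ω => ∑ k ∈ range n, (k : ℂ) * ω ^ k
  have hn0 : (n : ℂ) ≠ 0 := Nat.cast_ne_zero.mpr (by omega)
  have hterm : ∀ i ∈ Ico 1 n, ((1 - ζ ^ i) ^ 2)⁻¹ = g (ζ ^ i) ^ 2 / n ^ 2 := by
    intro i hi
    obtain ⟨hi1, hin⟩ := mem_Ico.mp hi
    have h1 : (ζ ^ i) ^ n = 1 := by rw [pow_right_comm, hζ.pow_eq_one, one_pow]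
    rw [← inv_pow, inv_one_sub_eq_neg_sum_range_mul_pow_div hn0 h1
      (hζ.pow_ne_one_of_pos_of_lt (by omega) hin), neg_div, neg_sq, div_pow]
  have hparseval : 6 * ∑ i ∈ range n, g (ζ ^ i) ^ 2 = (n - 1) * n ^ 2 * (n + 1) := by
    rw [hζ.sum_range_sq_sum_range_mul_pow, mul_left_comm, six_mul_sum_range_sum_range_ite_dvd_add]
    ring
  have hg1 : 2 * g 1 = n * (n - 1) := by simpa [g] using two_mul_sum_range_cast (R := ℂ) n
  have hsplit := sum_range_eq_add_Ico (fun i => g (ζ ^ i) ^ 2) (by omega : 0 < n)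
  rw [Icc_sub_one_right_eq_Ico_of_not_isMin (by simpa using (by omega : n ≠ 0)),
    sum_congr rfl hterm, ← sum_div, eq_sub_of_add_eq' hsplit.symm, pow_zero,
    div_eq_div_iff (pow_ne_zero 2 hn0) (by norm_num)]
  linear_combination 2 * hparseval - 3 * (2 * g 1 + n * (n - 1)) * hg1
end

section
/- For a primitive n-th root of unity ζ_n (n ≥ 2), the sum over 1 ≤ i ≤ n-1 of 1/(1-ζ_n^i)³ equals -(n-1)(n-3)/8. -/
open Polynomial Finset

private lemma sumCast1 (n : ℕ) : ∑ k ∈ Finset.range n, (k : ℂ) = n * (n - 1) / 2 := by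
  induction n with
  | zero => simp
  | succ m ih => rw [Finset.sum_range_succ, ih]; push_cast; ring

private lemma sumCast2 (n : ℕ) :
    ∑ k ∈ Finset.range n, (k : ℂ) * ((k : ℂ) - 1) = n * (n - 1) * (n - 2) / 3 := by
  induction n with
  | zero => simp
  | succ m ih => rw [Finset.sum_range_succ, ih]; push_cast; ring

private lemma derivProd (s : Finset ℕ) (f : ℕ → ℂ[X]) :
    derivative (∏ i ∈ s, f i)
      = ∑ i ∈ s, (∏ j ∈ s.erase i, f j) * derivative (f i) := by
  classical
  rw [Finset.prod_eq_multiset_prod, Polynomial.derivative_prod, Finset.sum_eq_multiset_sum]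
  congr 1

private lemma evalD1 (n : ℕ) :
    Polynomial.eval 1 (derivative (∑ k ∈ Finset.range n, (X : ℂ[X]) ^ k))
      = n * ((n : ℂ) - 1) / 2 := by
  rw [derivative_sum]
  simp only [derivative_X_pow, Polynomial.eval_finset_sum, Polynomial.eval_mul,
    Polynomial.eval_pow, Polynomial.eval_X, Polynomial.eval_natCast, Polynomial.eval_C,
    one_pow, mul_one]
  exact sumCast1 n

private lemma evalD2 (n : ℕ) :
    Polynomial.eval 1 (derivative (derivative (∑ k ∈ Finset.range n, (X : ℂ[X]) ^ k)))
      = n * ((n : ℂ) - 1) * ((n : ℂ) - 2) / 3 := by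
  rw [derivative_sum, derivative_sum]
  simp only [derivative_X_pow, derivative_mul, derivative_C, zero_mul, zero_add,
    Polynomial.eval_finset_sum, Polynomial.eval_mul, Polynomial.eval_pow,
    Polynomial.eval_X, Polynomial.eval_natCast, Polynomial.eval_C, one_pow, mul_one]
  rw [← sumCast2 n]
  refine Finset.sum_congr rfl fun k _ => ?_
  rcases Nat.eq_zero_or_pos k with rfl | hk
  · simp
  · push_cast [Nat.cast_sub hk]
    ring

private lemma prodRange (n : ℕ) (hn : 0 < n) (ζ : ℂ) (hζ : IsPrimitiveRoot ζ n) :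
    ∏ i ∈ Finset.range n, (X - C (ζ ^ i)) = X ^ n - 1 := by
  have : NeZero n := ⟨hn.ne'⟩
  have himg : Polynomial.nthRootsFinset n (1 : ℂ) = (Finset.range n).image (ζ ^ ·) := by
    ext x
    constructor
    · intro hx
      obtain ⟨i, hi, rfl⟩ := hζ.eq_pow_of_pow_eq_one ((Polynomial.mem_nthRootsFinset hn 1).1 hx)
      exact Finset.mem_image.2 ⟨i, Finset.mem_range.2 hi, rfl⟩
    · intro hx
      obtain ⟨i, _, rfl⟩ := Finset.mem_image.1 hx
      exact (Polynomial.mem_nthRootsFinset hn 1).2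
        (by rw [← pow_mul, mul_comm, pow_mul, hζ.pow_eq_one, one_pow])
  rw [X_pow_sub_one_eq_prod hn hζ, himg,
    Finset.prod_image (fun a ha b hb h => hζ.injOn_pow ha hb h)]

private lemma prodIcc (n : ℕ) (hn : 2 ≤ n) (ζ : ℂ) (hζ : IsPrimitiveRoot ζ n) :
    ∏ i ∈ Finset.Icc 1 (n - 1), (X - C (ζ ^ i)) = ∑ k ∈ Finset.range n, (X : ℂ[X]) ^ k := by
  have h0 : 0 < n := by omega
  have hsplit : Finset.range n = insert 0 (Finset.Icc 1 (n - 1)) := by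
    ext i
    simp only [Finset.mem_range, Finset.mem_insert, Finset.mem_Icc]
    omega
  have h1 : (X - 1 : ℂ[X]) * ∏ i ∈ Finset.Icc 1 (n - 1), (X - C (ζ ^ i)) = X ^ n - 1 := by
    rw [← prodRange n h0 ζ hζ, hsplit, Finset.prod_insert (by simp)]
    simp
  have h2 : (X - 1 : ℂ[X]) * ∑ k ∈ Finset.range n, (X : ℂ[X]) ^ k = X ^ n - 1 := by
    rw [mul_comm, geom_sum_mul]
  have hX1 : (X - 1 : ℂ[X]) ≠ 0 := by
    simpa using X_sub_C_ne_zero (1 : ℂ)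
  exact mul_left_cancel₀ hX1 (h1.trans h2.symm)

theorem stmt5 (n : ℕ) (hn : 2 ≤ n) (ζ : ℂ) (hζ : IsPrimitiveRoot ζ n) :
    ∑ i ∈ Finset.Icc 1 (n - 1), ((1 - ζ ^ i) ^ 3)⁻¹
      = -(((n : ℂ) - 1) * ((n : ℂ) - 3)) / 8 := by
  have h0 : 0 < n := by omega
  have hnC : (n : ℂ) ≠ 0 := Nat.cast_ne_zero.2 h0.ne'
  set s : Finset ℕ := Finset.Icc 1 (n - 1) with hs
  set y : ℕ → ℂ := fun i => (1 - ζ ^ i)⁻¹ with hy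
  have hne : ∀ i ∈ s, 1 - ζ ^ i ≠ 0 := by
    intro i hi
    rw [hs, Finset.mem_Icc] at hi
    exact sub_ne_zero.2 fun h => hζ.pow_ne_one_of_pos_of_lt (by omega) (by omega) h.symm
  have hP := prodIcc n hn ζ hζ
  rw [← hs] at hP
  -- derivative identities for the product polynomial
  have D1 : derivative (∏ i ∈ s, (X - C (ζ ^ i)))
      = ∑ i ∈ s, ∏ j ∈ s.erase i, (X - C (ζ ^ j)) := by
    rw [derivProd]
    refine Finset.sum_congr rfl fun i _ => ?_
    rw [derivative_sub, derivative_X, derivative_C, sub_zero, mul_one]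
  have D2 : derivative (∑ i ∈ s, ∏ j ∈ s.erase i, (X - C (ζ ^ j)))
      = ∑ i ∈ s, ∑ k ∈ s.erase i, ∏ j ∈ (s.erase i).erase k, (X - C (ζ ^ j)) := by
    rw [derivative_sum]
    refine Finset.sum_congr rfl fun i _ => ?_
    rw [derivProd]
    refine Finset.sum_congr rfl fun k _ => ?_
    rw [derivative_sub, derivative_X, derivative_C, sub_zero, mul_one]
  -- value at 1
  have hprod : ∏ i ∈ s, (1 - ζ ^ i) = (n : ℂ) := by
    have := congrArg (Polynomial.eval 1) hP
    simpa [Polynomial.eval_prod, Polynomial.eval_finset_sum] using this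
  -- first derivative at 1
  have hd1 : ∑ i ∈ s, ∏ j ∈ s.erase i, (1 - ζ ^ j) = (n : ℂ) * ((n : ℂ) - 1) / 2 := by
    have h := congrArg (fun p => Polynomial.eval 1 (derivative p)) hP
    rw [D1, evalD1] at h
    simp only [Polynomial.eval_finset_sum, Polynomial.eval_prod, Polynomial.eval_sub,
      Polynomial.eval_X, eval_C, Polynomial.eval_one] at h
    exact h
  -- second derivative at 1
  have hd2 : ∑ i ∈ s, ∑ k ∈ s.erase i, ∏ j ∈ (s.erase i).erase k, (1 - ζ ^ j)
      = (n : ℂ) * ((n : ℂ) - 1) * ((n : ℂ) - 2) / 3 := by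
    have h := congrArg (fun p => Polynomial.eval 1 (derivative (derivative p))) hP
    rw [D1, D2, evalD2] at h
    simp only [Polynomial.eval_finset_sum, Polynomial.eval_prod, Polynomial.eval_sub,
      Polynomial.eval_X, eval_C, Polynomial.eval_one] at h
    exact h
  -- products over erased sets
  have key1 : ∀ i ∈ s, ∏ j ∈ s.erase i, (1 - ζ ^ j) = (n : ℂ) * y i := by
    intro i hi
    have h : (1 - ζ ^ i) * ∏ j ∈ s.erase i, (1 - ζ ^ j) = (n : ℂ) := by
      have := Finset.mul_prod_erase s (fun j => 1 - ζ ^ j) hi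
      simpa using this.trans hprod
    calc ∏ j ∈ s.erase i, (1 - ζ ^ j)
        = (1 - ζ ^ i)⁻¹ * ((1 - ζ ^ i) * ∏ j ∈ s.erase i, (1 - ζ ^ j)) :=
          (inv_mul_cancel_left₀ (hne i hi) _).symm
      _ = (n : ℂ) * y i := by rw [h]; simp only [hy]; ring
  have key2 : ∀ i ∈ s, ∀ k ∈ s.erase i,
      ∏ j ∈ (s.erase i).erase k, (1 - ζ ^ j) = (n : ℂ) * y i * y k := by
    intro i hi k hk
    have hks : k ∈ s := Finset.mem_of_mem_erase hk
    have h : (1 - ζ ^ k) * ∏ j ∈ (s.erase i).erase k, (1 - ζ ^ j) = (n : ℂ) * y i := by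
      have := Finset.mul_prod_erase (s.erase i) (fun j => 1 - ζ ^ j) hk
      simpa using this.trans (key1 i hi)
    calc ∏ j ∈ (s.erase i).erase k, (1 - ζ ^ j)
        = (1 - ζ ^ k)⁻¹ * ((1 - ζ ^ k) * ∏ j ∈ (s.erase i).erase k, (1 - ζ ^ j)) :=
          (inv_mul_cancel_left₀ (hne k hks) _).symm
      _ = (n : ℂ) * y i * y k := by rw [h]; simp only [hy]; ring
  -- power sums S1, S2
  have hS1 : ∑ i ∈ s, y i = ((n : ℂ) - 1) / 2 := by
    rw [Finset.sum_congr rfl key1, ← Finset.mul_sum] at hd1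
    apply mul_left_cancel₀ hnC
    rw [hd1]; ring
  have hS2 : ∑ i ∈ s, (y i) ^ 2 = ((n : ℂ) - 1) * (5 - (n : ℂ)) / 12 := by
    have h1 : ∀ i ∈ s, ∑ k ∈ s.erase i, ((n : ℂ) * y i * y k)
        = (n : ℂ) * y i * (((n : ℂ) - 1) / 2) - (n : ℂ) * y i ^ 2 := by
      intro i hi
      rw [← Finset.mul_sum, Finset.sum_erase_eq_sub hi, hS1]
      ring
    rw [Finset.sum_congr rfl (fun i hi => Finset.sum_congr rfl (key2 i hi)),
      Finset.sum_congr rfl h1, Finset.sum_sub_distrib] at hd2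
    have e1 : ∑ i ∈ s, (n : ℂ) * y i * (((n : ℂ) - 1) / 2)
        = (n : ℂ) * (((n : ℂ) - 1) / 2) * ∑ i ∈ s, y i := by
      rw [Finset.mul_sum]
      exact Finset.sum_congr rfl fun i _ => by ring
    have e2 : ∑ i ∈ s, (n : ℂ) * y i ^ 2 = (n : ℂ) * ∑ i ∈ s, y i ^ 2 :=
      (Finset.mul_sum _ _ _).symm
    rw [e1, e2, hS1] at hd2
    have h3 : (n : ℂ) * (((n : ℂ) - 1) * (5 - (n : ℂ)) / 12)
        = (n : ℂ) * ∑ i ∈ s, y i ^ 2 := by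
      linear_combination hd2
    exact (mul_left_cancel₀ hnC h3).symm
  -- pairing
  have hmem : ∀ i ∈ s, n - i ∈ s := by
    intro i hi
    rw [hs, Finset.mem_Icc] at hi ⊢
    omega
  have hpairpt : ∀ i ∈ s, y (n - i) = 1 - y i := by
    intro i hi
    have hi' := hi
    rw [hs, Finset.mem_Icc] at hi'
    have hz : ζ ^ i ≠ 0 := pow_ne_zero _ (hζ.ne_zero h0.ne')
    have h1 : ζ ^ (n - i) * ζ ^ i = 1 := by
      rw [← pow_add]
      have h : n - i + i = n := by omega
      rw [h, hζ.pow_eq_one]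
    have h2 := hne _ (hmem i hi)
    have h3 := hne i hi
    simp only [hy]
    field_simp
    linear_combination -h1
  have hpair : ∑ i ∈ s, (y i) ^ 3 = ∑ i ∈ s, (1 - y i) ^ 3 := by
    rw [← Finset.sum_nbij' (i := fun i => n - i) (j := fun i => n - i)
      (hi := hmem) (hj := hmem)
      (left_neg := fun i hi => by
        rw [hs, Finset.mem_Icc] at hi; omega)
      (right_neg := fun i hi => by
        rw [hs, Finset.mem_Icc] at hi; omega)
      (h := fun i hi => by rw [hpairpt i hi])]
  have hcard : ((s.card : ℕ) : ℂ) = (n : ℂ) - 1 := by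
    rw [hs, Nat.card_Icc]
    push_cast [Nat.cast_sub (by omega : 1 ≤ n)]
    ring
  have hS3 : (2 : ℂ) * ∑ i ∈ s, (y i) ^ 3
      = ((n : ℂ) - 1) - 3 * (((n : ℂ) - 1) / 2)
        + 3 * (((n : ℂ) - 1) * (5 - (n : ℂ)) / 12) := by
    have e : ∑ i ∈ s, (1 - y i) ^ 3
        = ∑ i ∈ s, (1 - 3 * y i + 3 * y i ^ 2 - y i ^ 3) :=
      Finset.sum_congr rfl fun i _ => by ring
    have e2 : ∑ i ∈ s, (1 - 3 * y i + 3 * y i ^ 2 - y i ^ 3)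
        = ((s.card : ℕ) : ℂ) - 3 * (∑ i ∈ s, y i) + 3 * (∑ i ∈ s, y i ^ 2)
          - ∑ i ∈ s, y i ^ 3 := by
      rw [Finset.sum_sub_distrib, Finset.sum_add_distrib, Finset.sum_sub_distrib,
        Finset.sum_const, nsmul_eq_mul, mul_one, ← Finset.mul_sum, ← Finset.mul_sum]
    calc (2 : ℂ) * ∑ i ∈ s, (y i) ^ 3
        = (∑ i ∈ s, (y i) ^ 3) + ∑ i ∈ s, (1 - y i) ^ 3 := by rw [← hpair]; ring
      _ = _ := by rw [e, e2, hS1, hS2, hcard]; ring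
  have hfinal : ∑ i ∈ s, (y i) ^ 3 = -(((n : ℂ) - 1) * ((n : ℂ) - 3)) / 8 := by
    linear_combination hS3 / 2
  rw [← hfinal]
  refine Finset.sum_congr rfl fun i _ => ?_
  simp only [hy]
  rw [inv_pow]
end

section
/- For a primitive n-th root of unity ζ_n (n ≥ 2), the sum over pairs 1 ≤ i₁ ≤ i₂ ≤ n-1 of 1/((1-ζ_n^{i₁})²(1-ζ_n^{i₂})²) equals (n+1)(n-1)(n-3)(n-7)/240. -/
open Finset

-- power sums
lemma ps1 (n : ℕ) : ∑ k ∈ range n, (k:ℂ) = ((n:ℂ)^2 - n)/2 := by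
  induction n with
  | zero => simp
  | succ m ih => rw [sum_range_succ, ih]; push_cast; ring

lemma ps2 (n : ℕ) : ∑ k ∈ range n, (k:ℂ)^2 = (2*(n:ℂ)^3 - 3*(n:ℂ)^2 + n)/6 := by
  induction n with
  | zero => simp
  | succ m ih => rw [sum_range_succ, ih]; push_cast; ring

lemma ps3 (n : ℕ) : ∑ k ∈ range n, (k:ℂ)^3 = ((n:ℂ)^4 - 2*(n:ℂ)^3 + (n:ℂ)^2)/4 := by
  induction n with
  | zero => simp
  | succ m ih => rw [sum_range_succ, ih]; push_cast; ring

lemma ps4 (n : ℕ) : ∑ k ∈ range n, (k:ℂ)^4 = (6*(n:ℂ)^5 - 15*(n:ℂ)^4 + 10*(n:ℂ)^3 - n)/30 := by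
  induction n with
  | zero => simp
  | succ m ih => rw [sum_range_succ, ih]; push_cast; ring

-- closed forms
lemma L1 (u : ℂ) (m : ℕ) :
    (1-u)^2 * ∑ k ∈ range m, (k:ℂ) * u^k
      = u - m*u^m + ((m:ℂ)-1)*u^(m+1) := by
  induction m with
  | zero => simp
  | succ m ih =>
    rw [sum_range_succ, mul_add, ih]; push_cast; ring

lemma L2 (u : ℂ) (m : ℕ) :
    (1-u)^3 * ∑ k ∈ range m, (k:ℂ)^2 * u^k
      = u + u^2 - (m:ℂ)^2*u^m + (2*(m:ℂ)^2-2*m-1)*u^(m+1) - ((m:ℂ)-1)^2*u^(m+2) := by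
  induction m with
  | zero => simp
  | succ m ih =>
    rw [sum_range_succ, mul_add, ih]; push_cast; ring

lemma L3 (u : ℂ) (m : ℕ) :
    (1-u)^4 * ∑ k ∈ range m, (k:ℂ)^3 * u^k
      = u + 4*u^2 + u^3 - (m:ℂ)^3*u^m + (3*(m:ℂ)^3-3*(m:ℂ)^2-3*m-1)*u^(m+1)
        - (3*(m:ℂ)^3-6*(m:ℂ)^2+4)*u^(m+2) + ((m:ℂ)-1)^3*u^(m+3) := by
  induction m with
  | zero => simp; ring
  | succ m ih =>
    rw [sum_range_succ, mul_add, ih]; push_cast; ring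

lemma L4 (u : ℂ) (m : ℕ) :
    (1-u)^5 * ∑ k ∈ range m, (k:ℂ)^4 * u^k
      = u + 11*u^2 + 11*u^3 + u^4 - (m:ℂ)^4*u^m
        + (4*(m:ℂ)^4-4*(m:ℂ)^3-6*(m:ℂ)^2-4*m-1)*u^(m+1)
        + (-6*(m:ℂ)^4+12*(m:ℂ)^3+6*(m:ℂ)^2-12*m-11)*u^(m+2)
        + (4*(m:ℂ)^4-12*(m:ℂ)^3+6*(m:ℂ)^2+12*m-11)*u^(m+3)
        - ((m:ℂ)-1)^4*u^(m+4) := by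
  induction m with
  | zero => simp; ring
  | succ m ih =>
    rw [sum_range_succ, mul_add, ih]; push_cast; ring

lemma key2 (n : ℕ) (hn : 0 < n) (u : ℂ) (h1 : u^n = 1) (h2 : u ≠ 1) :
    ((1-u)^2)⁻¹ = (∑ k ∈ range n, (((n:ℂ)-2)*k - (k:ℂ)^2) * u^k) / (2*(n:ℂ)) := by
  have hu : (1:ℂ) - u ≠ 0 := sub_ne_zero.mpr (Ne.symm h2)
  have hn' : (n:ℂ) ≠ 0 := Nat.cast_ne_zero.mpr hn.ne'
  have e1 : u^(n+1) = u := by rw [pow_succ, h1, one_mul]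
  have e2 : u^(n+2) = u^2 := by rw [pow_add, h1, one_mul]
  have split : ∑ k ∈ range n, (((n:ℂ)-2)*k - (k:ℂ)^2) * u^k
      = ((n:ℂ)-2) * ∑ k ∈ range n, (k:ℂ)*u^k - ∑ k ∈ range n, (k:ℂ)^2*u^k := by
    rw [Finset.mul_sum, ← Finset.sum_sub_distrib]
    exact sum_congr rfl fun k _ => by ring
  have h3 : (1-u)^3 * ∑ k ∈ range n, (((n:ℂ)-2)*k - (k:ℂ)^2) * u^k = 2*n*(1-u) := by
    rw [split]
    have := L1 u n
    have := L2 u n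
    calc (1-u)^3 * (((n:ℂ)-2) * (∑ k ∈ range n, (k:ℂ)*u^k) - ∑ k ∈ range n, (k:ℂ)^2*u^k)
        = ((n:ℂ)-2)*(1-u)*((1-u)^2 * ∑ k ∈ range n, (k:ℂ)*u^k)
          - (1-u)^3 * ∑ k ∈ range n, (k:ℂ)^2*u^k := by ring
      _ = 2*n*(1-u) := by rw [L1, L2, h1, e1, e2]; ring
  have H : (1-u)^2 * ∑ k ∈ range n, (((n:ℂ)-2)*k - (k:ℂ)^2) * u^k = 2*n := by
    apply mul_left_cancel₀ hu
    linear_combination h3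
  rw [eq_div_iff (by exact mul_ne_zero two_ne_zero hn'), inv_mul_eq_div,
    div_eq_iff (pow_ne_zero 2 hu)]
  linear_combination -H

lemma key4 (n : ℕ) (hn : 0 < n) (u : ℂ) (h1 : u^n = 1) (h2 : u ≠ 1) :
    ((1-u)^4)⁻¹ = (∑ k ∈ range n,
      ((-4*(n:ℂ)^2+22*n-24)*k + (-(n:ℂ)^2+12*n-22)*(k:ℂ)^2 + (2*(n:ℂ)-8)*(k:ℂ)^3 - (k:ℂ)^4) * u^k)
      / (24*(n:ℂ)) := by
  have hu : (1:ℂ) - u ≠ 0 := sub_ne_zero.mpr (Ne.symm h2)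
  have hn' : (n:ℂ) ≠ 0 := Nat.cast_ne_zero.mpr hn.ne'
  have e1 : u^(n+1) = u := by rw [pow_succ, h1, one_mul]
  have e2 : u^(n+2) = u^2 := by rw [pow_add, h1, one_mul]
  have e3 : u^(n+3) = u^3 := by rw [pow_add, h1, one_mul]
  have e4 : u^(n+4) = u^4 := by rw [pow_add, h1, one_mul]
  set S := ∑ k ∈ range n,
      ((-4*(n:ℂ)^2+22*n-24)*k + (-(n:ℂ)^2+12*n-22)*(k:ℂ)^2 + (2*(n:ℂ)-8)*(k:ℂ)^3 - (k:ℂ)^4) * u^k with hS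
  have split : S = (-4*(n:ℂ)^2+22*n-24) * ∑ k ∈ range n, (k:ℂ)*u^k
      + (-(n:ℂ)^2+12*n-22) * ∑ k ∈ range n, (k:ℂ)^2*u^k
      + (2*(n:ℂ)-8) * ∑ k ∈ range n, (k:ℂ)^3*u^k
      - ∑ k ∈ range n, (k:ℂ)^4*u^k := by
    rw [hS, Finset.mul_sum, Finset.mul_sum, Finset.mul_sum, ← Finset.sum_add_distrib,
      ← Finset.sum_add_distrib, ← Finset.sum_sub_distrib]
    exact sum_congr rfl fun k _ => by ring
  have h3 : (1-u)^5 * S = 24*n*(1-u) := by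
    rw [split]
    calc (1-u)^5 * ((-4*(n:ℂ)^2+22*n-24) * (∑ k ∈ range n, (k:ℂ)*u^k)
          + (-(n:ℂ)^2+12*n-22) * (∑ k ∈ range n, (k:ℂ)^2*u^k)
          + (2*(n:ℂ)-8) * (∑ k ∈ range n, (k:ℂ)^3*u^k)
          - ∑ k ∈ range n, (k:ℂ)^4*u^k)
        = (-4*(n:ℂ)^2+22*n-24)*(1-u)^3*((1-u)^2 * ∑ k ∈ range n, (k:ℂ)*u^k)
          + (-(n:ℂ)^2+12*n-22)*(1-u)^2*((1-u)^3 * ∑ k ∈ range n, (k:ℂ)^2*u^k)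
          + (2*(n:ℂ)-8)*(1-u)*((1-u)^4 * ∑ k ∈ range n, (k:ℂ)^3*u^k)
          - (1-u)^5 * ∑ k ∈ range n, (k:ℂ)^4*u^k := by ring
      _ = 24*n*(1-u) := by rw [L1, L2, L3, L4, h1, e1, e2, e3, e4]; ring
  have H : (1-u)^4 * S = 24*n := by
    apply mul_left_cancel₀ hu
    linear_combination h3
  rw [eq_div_iff (by exact mul_ne_zero (by norm_num) hn'), inv_mul_eq_div,
    div_eq_iff (pow_ne_zero 4 hu)]
  linear_combination -H

lemma rootSum (n : ℕ) (hn : 2 ≤ n) (w : ℂ) (h1 : w^n = 1) (h2 : w ≠ 1) :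
    ∑ i ∈ Icc 1 (n-1), w^i = -1 := by
  have hg : ∑ i ∈ range n, w^i = 0 := by
    rw [geom_sum_eq h2, h1]; simp
  have hIcc : Icc 1 (n-1) = Ico 1 n := by
    rw [← Finset.Ico_add_one_right_eq_Icc]; congr 1; omega
  have hsplit : ∑ i ∈ range n, w^i = w^0 + ∑ i ∈ Ico 1 n, w^i := by
    rw [range_eq_Ico, Finset.sum_eq_sum_Ico_succ_bot (by omega)]
  rw [hIcc]
  have : (0:ℂ) = w^0 + ∑ i ∈ Ico 1 n, w^i := by rw [← hsplit, hg]
  simp at this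
  linear_combination -this

lemma sumSwap (n : ℕ) (ζ : ℂ) (c : ℕ → ℂ) (hc0 : c 0 = 0) (hn : 2 ≤ n) (hζ : IsPrimitiveRoot ζ n) :
    ∑ i ∈ Icc 1 (n-1), ∑ k ∈ range n, c k * (ζ^k)^i = -∑ k ∈ range n, c k := by
  rw [Finset.sum_comm]
  have step : ∀ k ∈ range n, ∑ i ∈ Icc 1 (n-1), c k * (ζ^k)^i
      = (if k = 0 then ((n:ℂ)-1) else -1) * c k := by
    intro k hk
    simp only [mem_range] at hk
    rw [← Finset.mul_sum]
    by_cases h0 : k = 0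
    · subst h0
      simp only [pow_zero, one_pow, if_true]
      rw [Finset.sum_const, Nat.card_Icc]
      rw [hc0]
      ring
    · have h1 : (ζ^k)^n = 1 := by
        rw [← pow_mul, mul_comm, pow_mul, hζ.pow_eq_one, one_pow]
      have h2 : ζ^k ≠ 1 := hζ.pow_ne_one_of_pos_of_lt (by omega) hk
      rw [rootSum n hn _ h1 h2, if_neg h0]
      ring
  rw [sum_congr rfl step]
  have step2 : ∀ k ∈ range n, (if k = 0 then ((n:ℂ)-1) else -1) * c k = -c k := by
    intro k _
    by_cases h0 : k = 0
    · subst h0; simp [hc0]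
    · simp [h0]
  rw [sum_congr rfl step2, ← Finset.sum_neg_distrib]


lemma expand2 (n : ℕ) (ζ : ℂ) (hn : 2 ≤ n) (hζ : IsPrimitiveRoot ζ n) (i : ℕ) (hi : i ∈ Icc 1 (n-1)) :
    ((1 - ζ^i)^2)⁻¹
      = (∑ k ∈ range n, (((n:ℂ)-2)*k - (k:ℂ)^2) * (ζ^k)^i) / (2*(n:ℂ)) := by
  simp only [mem_Icc] at hi
  have h1 : (ζ^i)^n = 1 := by
    rw [← pow_mul, mul_comm, pow_mul, hζ.pow_eq_one, one_pow]
  have h2 : ζ^i ≠ 1 := hζ.pow_ne_one_of_pos_of_lt (by omega) (by omega)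
  rw [key2 n (by omega) (ζ^i) h1 h2]
  congr 1
  exact sum_congr rfl fun k _ => by rw [← pow_mul, ← pow_mul, Nat.mul_comm i k]

lemma expand4 (n : ℕ) (ζ : ℂ) (hn : 2 ≤ n) (hζ : IsPrimitiveRoot ζ n) (i : ℕ) (hi : i ∈ Icc 1 (n-1)) :
    ((1 - ζ^i)^4)⁻¹
      = (∑ k ∈ range n,
          ((-4*(n:ℂ)^2+22*n-24)*k + (-(n:ℂ)^2+12*n-22)*(k:ℂ)^2 + (2*(n:ℂ)-8)*(k:ℂ)^3 - (k:ℂ)^4)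
            * (ζ^k)^i) / (24*(n:ℂ)) := by
  simp only [mem_Icc] at hi
  have h1 : (ζ^i)^n = 1 := by
    rw [← pow_mul, mul_comm, pow_mul, hζ.pow_eq_one, one_pow]
  have h2 : ζ^i ≠ 1 := hζ.pow_ne_one_of_pos_of_lt (by omega) (by omega)
  rw [key4 n (by omega) (ζ^i) h1 h2]
  congr 1
  exact sum_congr rfl fun k _ => by rw [← pow_mul, ← pow_mul, Nat.mul_comm i k]

lemma lemS2 (n : ℕ) (ζ : ℂ) (hn : 2 ≤ n) (hζ : IsPrimitiveRoot ζ n) :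
    ∑ i ∈ Icc 1 (n-1), ((1 - ζ^i)^2)⁻¹ = ((n:ℂ)-1)*(5-(n:ℂ))/12 := by
  have hn' : (n:ℂ) ≠ 0 := Nat.cast_ne_zero.mpr (by omega)
  rw [sum_congr rfl (expand2 n ζ hn hζ), ← sum_div,
    sumSwap n ζ _ (by norm_num) hn hζ]
  have split : ∑ k ∈ range n, (((n:ℂ)-2)*k - (k:ℂ)^2)
      = ((n:ℂ)-2) * ∑ k ∈ range n, (k:ℂ) - ∑ k ∈ range n, (k:ℂ)^2 := by
    rw [Finset.mul_sum, ← Finset.sum_sub_distrib]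
  rw [split, ps1, ps2]
  field_simp
  ring

lemma lemS4 (n : ℕ) (ζ : ℂ) (hn : 2 ≤ n) (hζ : IsPrimitiveRoot ζ n) :
    ∑ i ∈ Icc 1 (n-1), ((1 - ζ^i)^4)⁻¹
      = ((n:ℂ)^4 - 110*(n:ℂ)^2 + 360*(n:ℂ) - 251)/720 := by
  have hn' : (n:ℂ) ≠ 0 := Nat.cast_ne_zero.mpr (by omega)
  rw [sum_congr rfl (expand4 n ζ hn hζ), ← sum_div,
    sumSwap n ζ _ (by norm_num) hn hζ]
  have split : ∑ k ∈ range n,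
      ((-4*(n:ℂ)^2+22*n-24)*k + (-(n:ℂ)^2+12*n-22)*(k:ℂ)^2 + (2*(n:ℂ)-8)*(k:ℂ)^3 - (k:ℂ)^4)
      = (-4*(n:ℂ)^2+22*n-24) * ∑ k ∈ range n, (k:ℂ)
        + (-(n:ℂ)^2+12*n-22) * ∑ k ∈ range n, (k:ℂ)^2
        + (2*(n:ℂ)-8) * ∑ k ∈ range n, (k:ℂ)^3
        - ∑ k ∈ range n, (k:ℂ)^4 := by
    rw [Finset.mul_sum, Finset.mul_sum, Finset.mul_sum, ← Finset.sum_add_distrib,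
      ← Finset.sum_add_distrib, ← Finset.sum_sub_distrib]
  rw [split, ps1, ps2, ps3, ps4]
  field_simp
  ring


lemma tri (N : ℕ) (f : ℕ → ℂ) :
    2 * ∑ i ∈ Icc 1 N, ∑ j ∈ Icc i N, f i * f j
      = (∑ i ∈ Icc 1 N, f i)^2 + ∑ i ∈ Icc 1 N, (f i)^2 := by
  have swap : ∑ i ∈ Icc 1 N, ∑ j ∈ Icc 1 i, f i * f j
      = ∑ i ∈ Icc 1 N, ∑ j ∈ Icc i N, f i * f j := by
    rw [Finset.sum_comm' (by
      intro x y
      simp only [mem_Icc]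
      omega : ∀ x y, x ∈ Icc 1 N ∧ y ∈ Icc 1 x ↔ x ∈ Icc y N ∧ y ∈ Icc 1 N)]
    exact sum_congr rfl fun i _ => sum_congr rfl fun j _ => mul_comm _ _
  have part : ∀ i ∈ Icc 1 N, ∑ j ∈ Icc i N, f i * f j + ∑ j ∈ Icc 1 i, f i * f j
      = (∑ j ∈ Icc 1 N, f i * f j) + f i * f i := by
    intro i hi
    simp only [mem_Icc] at hi
    have hdecomp : ∑ j ∈ Icc i N, f i * f j
        = f i * f i + ∑ j ∈ Ioc i N, f i * f j := by
      rw [← Finset.Icc_erase_left i N,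
        ← Finset.add_sum_erase _ _ (mem_Icc.mpr ⟨le_refl i, hi.2⟩)]
    have hunion : ∑ j ∈ Icc 1 i, f i * f j + ∑ j ∈ Ioc i N, f i * f j
        = ∑ j ∈ Icc 1 N, f i * f j := by
      rw [← Finset.sum_union (by
        rw [Finset.disjoint_left]
        intro a ha hb
        simp only [mem_Icc] at ha
        simp only [mem_Ioc] at hb
        omega)]
      congr 1
      ext a
      simp only [mem_union, mem_Icc, mem_Ioc]
      omega
    rw [hdecomp]
    linear_combination hunion
  calc 2 * ∑ i ∈ Icc 1 N, ∑ j ∈ Icc i N, f i * f j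
      = ∑ i ∈ Icc 1 N, ∑ j ∈ Icc i N, f i * f j
        + ∑ i ∈ Icc 1 N, ∑ j ∈ Icc 1 i, f i * f j := by rw [swap]; ring
    _ = ∑ i ∈ Icc 1 N, ((∑ j ∈ Icc 1 N, f i * f j) + f i * f i) := by
        rw [← Finset.sum_add_distrib]
        exact sum_congr rfl part
    _ = (∑ i ∈ Icc 1 N, f i)^2 + ∑ i ∈ Icc 1 N, (f i)^2 := by
        rw [Finset.sum_add_distrib, sq (∑ i ∈ Icc 1 N, f i), Finset.sum_mul_sum]
        congr 1
        exact sum_congr rfl fun i _ => (sq (f i)).symm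

theorem stmt6 (n : ℕ) (hn : 2 ≤ n) (ζ : ℂ) (hζ : IsPrimitiveRoot ζ n) :
    ∑ i₁ ∈ Finset.Icc 1 (n - 1), ∑ i₂ ∈ Finset.Icc i₁ (n - 1),
      ((1 - ζ ^ i₁) ^ 2 * (1 - ζ ^ i₂) ^ 2)⁻¹
      = ((n : ℂ) + 1) * ((n : ℂ) - 1) * ((n : ℂ) - 3) * ((n : ℂ) - 7) / 240 := by
  have key := tri (n-1) (fun i => ((1 - ζ^i)^2)⁻¹)
  have h2 : ∑ i ∈ Icc 1 (n-1), (((1 - ζ^i)^2)⁻¹)^2 = ∑ i ∈ Icc 1 (n-1), ((1 - ζ^i)^4)⁻¹ :=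
    sum_congr rfl fun i _ => by rw [inv_pow, ← pow_mul]
  rw [h2, lemS2 n ζ hn hζ, lemS4 n ζ hn hζ] at key
  have h1 : ∑ i₁ ∈ Finset.Icc 1 (n-1), ∑ i₂ ∈ Finset.Icc i₁ (n-1),
      ((1 - ζ^i₁)^2 * (1 - ζ^i₂)^2)⁻¹
      = ∑ i₁ ∈ Icc 1 (n-1), ∑ i₂ ∈ Icc i₁ (n-1), ((1 - ζ^i₁)^2)⁻¹ * ((1 - ζ^i₂)^2)⁻¹ :=
    sum_congr rfl fun i _ => sum_congr rfl fun j _ => mul_inv _ _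
  rw [h1]
  linear_combination key/2
end

section
/- For a primitive n-th root of unity ζ_n (n ≥ 2), the sum over pairs 1 ≤ i₁ ≤ i₂ ≤ n-1 of 1/((1-ζ_n^{i₁})³(1-ζ_n^{i₂})³) equals -(n+1)(n-1)(n⁴-650n²+3780n-5291)/(12·7!). -/
open Polynomial Finset

lemma aux_prod_X (n : ℕ) (hn : 2 ≤ n) (ζ : ℂ) (hζ : IsPrimitiveRoot ζ n) :
    ∏ i ∈ Finset.Icc 1 (n-1), (X - C (ζ^i)) = ∑ j ∈ Finset.range n, (X:ℂ[X])^j := by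
  have h0 : (0:ℕ) < n := by omega
  have hprod : (X:ℂ[X])^n - C 1 = ∏ i ∈ Finset.range n, (X - C (ζ^i * 1)) :=
    X_pow_sub_C_eq_prod hζ h0 (one_pow n)
  have hins : Finset.range n = insert 0 (Finset.Icc 1 (n-1)) := by
    ext i; simp [Finset.mem_Icc]; omega
  have hnm : (0:ℕ) ∉ Finset.Icc 1 (n-1) := by simp
  rw [hins, Finset.prod_insert hnm] at hprod
  simp only [pow_zero, one_mul, mul_one] at hprod
  have hgeom := geom_sum_mul (X:ℂ[X]) n
  have hne : (X:ℂ[X]) - C 1 ≠ 0 := X_sub_C_ne_zero 1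
  apply mul_left_cancel₀ hne
  rw [← hprod]
  rw [map_one] at hprod ⊢
  rw [mul_comm] at hgeom
  rw [hgeom]

lemma aux_eval (n : ℕ) (hn : 2 ≤ n) (ζ : ℂ) (hζ : IsPrimitiveRoot ζ n) (t : ℂ) :
    ∏ i ∈ Finset.Icc 1 (n-1), (t - ζ^i) = ∑ j ∈ Finset.range n, t^j := by
  have := congrArg (Polynomial.eval t) (aux_prod_X n hn ζ hζ)
  simpa [eval_prod] using this

lemma aux_prod_n (n : ℕ) (hn : 2 ≤ n) (ζ : ℂ) (hζ : IsPrimitiveRoot ζ n) :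
    ∏ i ∈ Finset.Icc 1 (n-1), (1 - ζ^i) = (n:ℂ) := by
  have := aux_eval n hn ζ hζ 1
  simpa using this

lemma aux_prod2 (n : ℕ) (hn : 2 ≤ n) (ζ : ℂ) (hζ : IsPrimitiveRoot ζ n) :
    ∏ i ∈ Finset.Icc 1 (n-1), ((X+1) - C (ζ^i) * X)
      = ∑ j ∈ Finset.range n, (X+1)^j * (X:ℂ[X])^(n-1-j) := by
  apply Polynomial.funext
  intro x
  simp only [eval_prod, eval_sub, eval_add, eval_mul, eval_C, eval_X, eval_one,
    eval_finset_sum, eval_pow]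
  by_cases hx : x = 0
  · subst hx
    rw [Finset.sum_eq_single (n-1)]
    · simp
    · intro j hj hjne
      simp only [Finset.mem_range] at hj
      rw [zero_add, one_pow, one_mul, zero_pow (by omega)]
    · intro h; exact absurd (Finset.mem_range.2 (by omega)) h
  · have key : ∀ i ∈ Finset.Icc 1 (n-1), x + 1 - ζ^i * x = x * ((x+1)/x - ζ^i) := by
      intro i _; field_simp
    rw [Finset.prod_congr rfl key, Finset.prod_mul_distrib, Finset.prod_const, Nat.card_Icc,
      aux_eval n hn ζ hζ ((x+1)/x), Finset.mul_sum]
    refine Finset.sum_congr rfl fun j hj => ?_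
    simp only [Finset.mem_range] at hj
    rw [div_pow]
    rw [show n - 1 + 1 - 1 = n - 1 by omega]
    rw [show n - 1 = j + (n-1-j) by omega, pow_add]
    field_simp
    simp only [Nat.add_sub_cancel_left]
    ring

lemma aux_esymm (n : ℕ) (hn : 2 ≤ n) (ζ : ℂ) (hζ : IsPrimitiveRoot ζ n) (k : ℕ) :
    ((Finset.Icc 1 (n-1)).val.map (fun i => (1 - ζ^i)⁻¹)).esymm k
      = (n.choose (k+1) : ℂ) / n := by
  have hn0 : (n:ℂ) ≠ 0 := Nat.cast_ne_zero.2 (by omega)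
  set y : ℕ → ℂ := fun i => (1 - ζ^i)⁻¹ with hy
  set M : Multiset ℂ := (Finset.Icc 1 (n-1)).val.map y with hM
  have hcard : Multiset.card M = n - 1 := by
    simp [hM, Nat.card_Icc]
  by_cases hk : k ≤ n - 1
  · have h1 := Multiset.prod_X_add_C_coeff M (show n-1-k ≤ Multiset.card M by omega)
    rw [hcard, show n-1-(n-1-k) = k by omega] at h1
    have h2 : (M.map fun r => (X:ℂ[X]) + C r).prod = ∏ i ∈ Finset.Icc 1 (n-1), (X + C (y i)) := by
      rw [hM, Multiset.map_map]
      rfl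
    have h3 : C (n:ℂ) * ∏ i ∈ Finset.Icc 1 (n-1), (X + C (y i))
        = ∑ j ∈ Finset.range n, (X+1)^j * (X:ℂ[X])^(n-1-j) := by
      rw [← aux_prod2 n hn ζ hζ, ← aux_prod_n n hn ζ hζ, map_prod, ← Finset.prod_mul_distrib]
      refine Finset.prod_congr rfl fun i hi => ?_
      simp only [Finset.mem_Icc] at hi
      have hne : 1 - ζ^i ≠ 0 := by
        rw [sub_ne_zero]
        exact fun h => hζ.pow_ne_one_of_pos_of_lt (by omega) (by omega) h.symm
      rw [mul_add, ← map_mul, mul_inv_cancel₀ hne, map_one]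
      rw [map_sub, map_one]
      ring
    have h4 := congrArg (fun p => Polynomial.coeff p (n-1-k)) h3
    simp only [coeff_C_mul, finset_sum_coeff, coeff_mul_X_pow'] at h4
    rw [h2] at h1
    rw [h1] at h4
    have h5 : ∑ j ∈ Finset.range n, (if n-1-j ≤ n-1-k then ((X+1:ℂ[X])^j).coeff (n-1-k-(n-1-j)) else 0)
        = ((n.choose (k+1) : ℕ) : ℂ) := by
      have h6 : ∀ j ∈ Finset.range n,
          (if n-1-j ≤ n-1-k then ((X+1:ℂ[X])^j).coeff (n-1-k-(n-1-j)) else 0)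
            = ((j.choose k : ℕ) : ℂ) := by
        intro j hj
        simp only [Finset.mem_range] at hj
        by_cases hjk : k ≤ j
        · rw [if_pos (by omega), show n-1-k-(n-1-j) = j - k by omega, coeff_X_add_one_pow,
            Nat.choose_symm hjk]
        · rw [if_neg (by omega), Nat.choose_eq_zero_of_lt (by omega), Nat.cast_zero]
      rw [Finset.sum_congr rfl h6, ← Nat.cast_sum]
      congr 1
      have h7 : ∑ j ∈ Finset.Icc k (n-1), j.choose k = n.choose (k+1) := by
        have := Nat.sum_Icc_choose (n-1) k
        rwa [show n-1+1 = n by omega] at this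
      rw [← h7]
      symm
      apply Finset.sum_subset
      · intro j hj
        simp only [Finset.mem_Icc] at hj
        exact Finset.mem_range.2 (by omega)
      · intro j hj hj2
        simp only [Finset.mem_range] at hj
        simp only [Finset.mem_Icc] at hj2
        exact Nat.choose_eq_zero_of_lt (by omega)
    rw [h5] at h4
    rw [eq_div_iff hn0, mul_comm, ← h4]
  · rw [Multiset.esymm, Multiset.powersetCard_eq_empty k (by omega)]
    rw [Nat.choose_eq_zero_of_lt (by omega)]
    simp

lemma aux_newton (n : ℕ) (hn : 2 ≤ n) (ζ : ℂ) (hζ : IsPrimitiveRoot ζ n) (k : ℕ) (hk : 0 < k) :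
    ∑ i ∈ Finset.Icc 1 (n-1), ((1-ζ^i)⁻¹)^k
      = (-1)^(k+1) * k * ((n.choose (k+1):ℂ)/n)
        - ∑ a ∈ (Finset.HasAntidiagonal.antidiagonal k).filter (fun a => a.1 ∈ Set.Ioo 0 k),
            (-1)^a.1 * ((n.choose (a.1+1):ℂ)/n) * ∑ i ∈ Finset.Icc 1 (n-1), ((1-ζ^i)⁻¹)^a.2 := by
  set σ := {x // x ∈ Finset.Icc 1 (n-1)}
  set f : σ → ℂ := fun i => (1-ζ^(i:ℕ))⁻¹ with hf
  have haePsum : ∀ m, MvPolynomial.aeval f (MvPolynomial.psum σ ℂ m)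
      = ∑ i ∈ Finset.Icc 1 (n-1), ((1-ζ^i)⁻¹)^m := by
    intro m
    rw [MvPolynomial.psum, map_sum]
    simp only [map_pow, MvPolynomial.aeval_X]
    rw [Finset.univ_eq_attach]
    exact Finset.sum_attach (Finset.Icc 1 (n-1)) (fun i => ((1-ζ^i)⁻¹)^m)
  have haeE : ∀ m, MvPolynomial.aeval f (MvPolynomial.esymm σ ℂ m) = ((n.choose (m+1):ℕ):ℂ)/n := by
    intro m
    rw [MvPolynomial.aeval_esymm_eq_multiset_esymm, Finset.univ_eq_attach]
    have h1 : (Finset.attach (Finset.Icc 1 (n-1))).val.map f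
        = (Finset.Icc 1 (n-1)).val.map (fun i => (1-ζ^i)⁻¹) := by
      exact Multiset.attach_map_val' (Finset.Icc 1 (n-1)).val (fun i => (1-ζ^i)⁻¹)
    rw [h1, aux_esymm n hn ζ hζ m]
  have h := MvPolynomial.psum_eq_mul_esymm_sub_sum σ ℂ k hk
  have h2 := congrArg (MvPolynomial.aeval f) h
  simp only [map_sub, map_mul, map_sum, map_pow, map_neg, map_one, map_natCast,
    haePsum, haeE] at h2
  exact h2

lemma aux_tri (d : ℕ) (a : ℕ → ℂ) :
    2 * (∑ i ∈ Finset.Icc 1 d, ∑ j ∈ Finset.Icc i d, a i * a j)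
      = (∑ i ∈ Finset.Icc 1 d, a i)^2 + ∑ i ∈ Finset.Icc 1 d, (a i)^2 := by
  have hswap : (∑ i ∈ Finset.Icc 1 d, ∑ j ∈ Finset.Icc i d, a i * a j)
      = ∑ i ∈ Finset.Icc 1 d, ∑ j ∈ Finset.Icc 1 i, a j * a i := by
    refine Finset.sum_comm' ?_
    intro x y
    simp only [Finset.mem_Icc]
    omega
  have key : ∀ i ∈ Finset.Icc 1 d,
      (∑ j ∈ Finset.Icc i d, a i * a j) + (∑ j ∈ Finset.Icc 1 i, a j * a i)
        = (a i)^2 + a i * ∑ j ∈ Finset.Icc 1 d, a j := by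
    intro i hi
    simp only [Finset.mem_Icc] at hi
    rw [Finset.Icc_eq_cons_Ioc hi.2, Finset.sum_cons]
    have h2 : ∑ j ∈ Finset.Icc 1 i, a j * a i = ∑ j ∈ Finset.Icc 1 i, a i * a j :=
      Finset.sum_congr rfl fun j _ => mul_comm _ _
    rw [h2]
    rw [show Finset.Icc 1 i = Finset.Ioc 0 i from Finset.Icc_add_one_left_eq_Ioc 0 i]
    rw [show Finset.Icc 1 d = Finset.Ioc 0 d from Finset.Icc_add_one_left_eq_Ioc 0 d]
    rw [add_assoc, add_comm (∑ x ∈ Finset.Ioc i d, a i * a x),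
      Finset.sum_Ioc_consecutive _ (Nat.zero_le i) hi.2, Finset.mul_sum, sq]
  rw [two_mul]
  nth_rw 2 [hswap]
  rw [← Finset.sum_add_distrib, Finset.sum_congr rfl key, Finset.sum_add_distrib, ← Finset.sum_mul,
    sq (∑ i ∈ Finset.Icc 1 d, a i)]
  ring

lemma aux_desc (n : ℕ) : ∀ k : ℕ, ((n.descFactorial k : ℕ) : ℂ) = ∏ i ∈ Finset.range k, ((n:ℂ) - i)
  | 0 => by simp
  | (k+1) => by
    rw [Nat.descFactorial_succ, Finset.prod_range_succ, Nat.cast_mul, aux_desc n k]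
    rcases le_or_gt k n with h | h
    · rw [Nat.cast_sub h]; ring
    · have hz : ∏ i ∈ Finset.range k, ((n:ℂ) - i) = 0 :=
        Finset.prod_eq_zero (Finset.mem_range.2 h) (by simp)
      rw [hz]; ring

lemma aux_choose (n k : ℕ) :
    ((n.choose k : ℕ):ℂ) * (k.factorial:ℂ) = ∏ i ∈ Finset.range k, ((n:ℂ) - i) := by
  rw [← Nat.cast_mul, mul_comm, ← Nat.descFactorial_eq_factorial_mul_choose, aux_desc]

set_option maxHeartbeats 1000000 in
theorem stmt7 (n : ℕ) (hn : 2 ≤ n) (ζ : ℂ) (hζ : IsPrimitiveRoot ζ n) :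
    ∑ i₁ ∈ Finset.Icc 1 (n - 1), ∑ i₂ ∈ Finset.Icc i₁ (n - 1),
      ((1 - ζ ^ i₁) ^ 3 * (1 - ζ ^ i₂) ^ 3)⁻¹
      = -(((n : ℂ) + 1) * ((n : ℂ) - 1) *
          ((n : ℂ) ^ 4 - 650 * (n : ℂ) ^ 2 + 3780 * (n : ℂ) - 5291)) / (12 * 5040) := by
  have hn0 : (n:ℂ) ≠ 0 := Nat.cast_ne_zero.2 (by omega)
  have hd2 : ((n.choose 2 : ℕ):ℂ)/(n:ℂ) = (((n:ℂ)-1))/2 := by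
    have h := aux_choose n 2
    rw [show ((Nat.factorial 2 : ℕ):ℂ) = 2 by norm_num [Nat.factorial]] at h
    rw [Finset.prod_range_succ, Finset.prod_range_succ, Finset.prod_range_zero] at h
    push_cast at h
    rw [div_eq_div_iff hn0 (by norm_num : (2:ℂ) ≠ 0)]
    linear_combination h
  have hd3 : ((n.choose 3 : ℕ):ℂ)/(n:ℂ) = (((n:ℂ)-1)*((n:ℂ)-2))/6 := by
    have h := aux_choose n 3
    rw [show ((Nat.factorial 3 : ℕ):ℂ) = 6 by norm_num [Nat.factorial]] at h
    rw [Finset.prod_range_succ, Finset.prod_range_succ, Finset.prod_range_succ, Finset.prod_range_zero] at h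
    push_cast at h
    rw [div_eq_div_iff hn0 (by norm_num : (6:ℂ) ≠ 0)]
    linear_combination h
  have hd4 : ((n.choose 4 : ℕ):ℂ)/(n:ℂ) = (((n:ℂ)-1)*((n:ℂ)-2)*((n:ℂ)-3))/24 := by
    have h := aux_choose n 4
    rw [show ((Nat.factorial 4 : ℕ):ℂ) = 24 by norm_num [Nat.factorial]] at h
    rw [Finset.prod_range_succ, Finset.prod_range_succ, Finset.prod_range_succ, Finset.prod_range_succ, Finset.prod_range_zero] at h
    push_cast at h
    rw [div_eq_div_iff hn0 (by norm_num : (24:ℂ) ≠ 0)]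
    linear_combination h
  have hd5 : ((n.choose 5 : ℕ):ℂ)/(n:ℂ) = (((n:ℂ)-1)*((n:ℂ)-2)*((n:ℂ)-3)*((n:ℂ)-4))/120 := by
    have h := aux_choose n 5
    rw [show ((Nat.factorial 5 : ℕ):ℂ) = 120 by norm_num [Nat.factorial]] at h
    rw [Finset.prod_range_succ, Finset.prod_range_succ, Finset.prod_range_succ, Finset.prod_range_succ, Finset.prod_range_succ, Finset.prod_range_zero] at h
    push_cast at h
    rw [div_eq_div_iff hn0 (by norm_num : (120:ℂ) ≠ 0)]
    linear_combination h
  have hd6 : ((n.choose 6 : ℕ):ℂ)/(n:ℂ) = (((n:ℂ)-1)*((n:ℂ)-2)*((n:ℂ)-3)*((n:ℂ)-4)*((n:ℂ)-5))/720 := by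
    have h := aux_choose n 6
    rw [show ((Nat.factorial 6 : ℕ):ℂ) = 720 by norm_num [Nat.factorial]] at h
    rw [Finset.prod_range_succ, Finset.prod_range_succ, Finset.prod_range_succ, Finset.prod_range_succ, Finset.prod_range_succ, Finset.prod_range_succ, Finset.prod_range_zero] at h
    push_cast at h
    rw [div_eq_div_iff hn0 (by norm_num : (720:ℂ) ≠ 0)]
    linear_combination h
  have hd7 : ((n.choose 7 : ℕ):ℂ)/(n:ℂ) = (((n:ℂ)-1)*((n:ℂ)-2)*((n:ℂ)-3)*((n:ℂ)-4)*((n:ℂ)-5)*((n:ℂ)-6))/5040 := by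
    have h := aux_choose n 7
    rw [show ((Nat.factorial 7 : ℕ):ℂ) = 5040 by norm_num [Nat.factorial]] at h
    rw [Finset.prod_range_succ, Finset.prod_range_succ, Finset.prod_range_succ, Finset.prod_range_succ, Finset.prod_range_succ, Finset.prod_range_succ, Finset.prod_range_succ, Finset.prod_range_zero] at h
    push_cast at h
    rw [div_eq_div_iff hn0 (by norm_num : (5040:ℂ) ≠ 0)]
    linear_combination h
  have hP1 : ∑ i ∈ Finset.Icc 1 (n-1), (1-ζ^i)⁻¹ = ((n:ℂ)-1)/2 := by
    have h := aux_newton n hn ζ hζ 1 (by norm_num)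
    simp only [pow_one] at h
    rw [h, Finset.sum_filter, Finset.Nat.sum_antidiagonal_eq_sum_range_succ_mk]
    simp only [Finset.sum_range_succ, Finset.sum_range_zero, Set.mem_Ioo]
    norm_num
    rw [hd2]
  have hP2 : ∑ i ∈ Finset.Icc 1 (n-1), ((1-ζ^i)^2)⁻¹ = (-((n:ℂ)^2) + 6*(n:ℂ) - 5)/12 := by
    have h := aux_newton n hn ζ hζ 2 (by norm_num)
    simp only [inv_pow] at h
    rw [h, Finset.sum_filter, Finset.Nat.sum_antidiagonal_eq_sum_range_succ_mk]
    simp only [Finset.sum_range_succ, Finset.sum_range_zero, Set.mem_Ioo]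
    norm_num
    rw [hP1, hd2, hd3]
    field_simp
    ring
  have hP3 : ∑ i ∈ Finset.Icc 1 (n-1), ((1-ζ^i)^3)⁻¹ = (-((n:ℂ)^2) + 4*(n:ℂ) - 3)/8 := by
    have h := aux_newton n hn ζ hζ 3 (by norm_num)
    simp only [inv_pow] at h
    rw [h, Finset.sum_filter, Finset.Nat.sum_antidiagonal_eq_sum_range_succ_mk]
    simp only [Finset.sum_range_succ, Finset.sum_range_zero, Set.mem_Ioo]
    norm_num
    rw [hP2, hP1, hd2, hd3, hd4]
    field_simp
    ring
  have hP4 : ∑ i ∈ Finset.Icc 1 (n-1), ((1-ζ^i)^4)⁻¹ = ((n:ℂ)^4 - 110*(n:ℂ)^2 + 360*(n:ℂ) - 251)/720 := by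
    have h := aux_newton n hn ζ hζ 4 (by norm_num)
    simp only [inv_pow] at h
    rw [h, Finset.sum_filter, Finset.Nat.sum_antidiagonal_eq_sum_range_succ_mk]
    simp only [Finset.sum_range_succ, Finset.sum_range_zero, Set.mem_Ioo]
    norm_num
    rw [hP3, hP2, hP1, hd2, hd3, hd4, hd5]
    field_simp
    ring
  have hP5 : ∑ i ∈ Finset.Icc 1 (n-1), ((1-ζ^i)^5)⁻¹ = ((n:ℂ)^4 - 50*(n:ℂ)^2 + 144*(n:ℂ) - 95)/288 := by
    have h := aux_newton n hn ζ hζ 5 (by norm_num)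
    simp only [inv_pow] at h
    rw [h, Finset.sum_filter, Finset.Nat.sum_antidiagonal_eq_sum_range_succ_mk]
    simp only [Finset.sum_range_succ, Finset.sum_range_zero, Set.mem_Ioo]
    norm_num
    rw [hP4, hP3, hP2, hP1, hd2, hd3, hd4, hd5, hd6]
    field_simp
    ring
  have hP6 : ∑ i ∈ Finset.Icc 1 (n-1), ((1-ζ^i)^6)⁻¹ = (-2*(n:ℂ)^6 + 357*(n:ℂ)^4 - 11508*(n:ℂ)^2 + 30240*(n:ℂ) - 19087)/60480 := by
    have h := aux_newton n hn ζ hζ 6 (by norm_num)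
    simp only [inv_pow] at h
    rw [h, Finset.sum_filter, Finset.Nat.sum_antidiagonal_eq_sum_range_succ_mk]
    simp only [Finset.sum_range_succ, Finset.sum_range_zero, Set.mem_Ioo]
    norm_num
    rw [hP5, hP4, hP3, hP2, hP1, hd2, hd3, hd4, hd5, hd6, hd7]
    field_simp
    ring
  have hrw : ∀ i₁ ∈ Finset.Icc 1 (n-1), ∀ i₂ ∈ Finset.Icc i₁ (n-1),
      ((1 - ζ ^ i₁) ^ 3 * (1 - ζ ^ i₂) ^ 3)⁻¹ = ((1-ζ^i₁)^3)⁻¹ * ((1-ζ^i₂)^3)⁻¹ := by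
    intro i₁ _ i₂ _
    rw [mul_inv]
  rw [Finset.sum_congr rfl (fun i₁ h₁ => Finset.sum_congr rfl (hrw i₁ h₁))]
  have ht := aux_tri (n-1) (fun i => ((1-ζ^i)⁻¹)^3)
  simp only [← pow_mul, inv_pow] at ht
  norm_num at ht
  rw [hP3, hP6] at ht
  linear_combination ht / 2
end

section
/- For a primitive n-th root of unity ζ_n and 1 ≤ m ≤ n-1, the value 𝔷_n^⋆(ζ_n; m, 1) satisfies the recurrence 𝔷_n^⋆(ζ_n; m, 1) = ∑_{j=0}^{m-1} ((-1)^{m-j+1}/(m-j+1))·C(n-1, m-j)·𝔷_n^⋆(ζ_n; j, 1), with 𝔷_n^⋆(ζ_n; 0, 1) = 1. -/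
open Finset

/-- The `q`-multiple zeta-star value `𝔷_n^⋆(ζ; m, s)`. -/
noncomputable def zetaStar (n : ℕ) (ζ : ℂ) (m s : ℕ) : ℂ :=
  ∑ f ∈ Finset.univ.filter
      (fun f : Fin m → Fin n => (∀ j, 1 ≤ (f j : ℕ)) ∧ ∀ j k, j ≤ k → f j ≤ f k),
    ∏ j, ((1 - ζ ^ (f j : ℕ)) ^ s)⁻¹

lemma geom_inv (a : ℂ) :
    (1 - PowerSeries.C a * PowerSeries.X) * PowerSeries.mk (fun k => a ^ k) = 1 := by
  ext k
  rw [sub_mul, one_mul, mul_assoc]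
  cases k with
  | zero => simp
  | succ k =>
    simp [PowerSeries.coeff_succ_X_mul, pow_succ, mul_comm]

lemma prod_X_sub_zeta {n : ℕ} {ζ : ℂ} (hn : 2 ≤ n) (hζ : IsPrimitiveRoot ζ n) :
    ∏ i ∈ Icc 1 (n-1), (Polynomial.X - Polynomial.C (ζ^i))
      = ∑ j ∈ range n, (Polynomial.X : Polynomial ℂ) ^ j := by
  have h0 : (0:ℕ) < n := by omega
  have key : (Polynomial.X ^ n - Polynomial.C (1:ℂ))
      = ∏ i ∈ Finset.range n, (Polynomial.X - Polynomial.C (ζ ^ i)) := by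
    simpa using X_pow_sub_C_eq_prod hζ h0 (one_pow n)
  have hrange : Finset.range n = insert 0 (Icc 1 (n-1)) := by
    ext j; simp only [mem_range, mem_insert, mem_Icc]; omega
  rw [hrange, Finset.prod_insert (by simp)] at key
  have hcancel : ((∑ j ∈ range n, (Polynomial.X : Polynomial ℂ) ^ j)) * (Polynomial.X - Polynomial.C 1)
      = (∏ i ∈ Icc 1 (n-1), (Polynomial.X - Polynomial.C (ζ^i))) * (Polynomial.X - Polynomial.C 1) := by
    calc (∑ j ∈ range n, (Polynomial.X : Polynomial ℂ) ^ j) * (Polynomial.X - Polynomial.C 1)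
        = Polynomial.X ^ n - Polynomial.C 1 := by rw [Polynomial.C_1]; exact geom_sum_mul _ n
      _ = _ := key
      _ = _ := by rw [pow_zero]; ring
  have hne : (Polynomial.X - Polynomial.C (1:ℂ)) ≠ 0 := Polynomial.X_sub_C_ne_zero 1
  exact (mul_right_cancel₀ hne hcancel).symm

lemma prod_one_sub_zeta {n : ℕ} {ζ : ℂ} (hn : 2 ≤ n) (hζ : IsPrimitiveRoot ζ n) :
    ∏ i ∈ Icc 1 (n-1), (1 - ζ^i) = (n : ℂ) := by
  have := congrArg (Polynomial.eval 1) (prod_X_sub_zeta hn hζ)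
  simpa [Polynomial.eval_prod, Polynomial.eval_finset_sum] using this

noncomputable def Epoly (n : ℕ) (ζ : ℂ) : Polynomial ℂ :=
  ∏ i ∈ Icc 1 (n-1), (1 - Polynomial.C ((1 - ζ^i)⁻¹) * Polynomial.X)

lemma one_sub_zeta_ne {n : ℕ} {ζ : ℂ} (hn : 2 ≤ n) (hζ : IsPrimitiveRoot ζ n)
    {i : ℕ} (hi : i ∈ Icc 1 (n-1)) : (1 - ζ^i) ≠ 0 := by
  simp only [mem_Icc] at hi
  have := hζ.pow_ne_one_of_pos_of_lt (by omega : i ≠ 0) (by omega : i < n)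
  intro h
  apply this
  linear_combination -h

lemma nE_eq {n : ℕ} {ζ : ℂ} (hn : 2 ≤ n) (hζ : IsPrimitiveRoot ζ n) :
    Polynomial.C (n:ℂ) * Epoly n ζ = ∑ j ∈ range n, (1 - Polynomial.X : Polynomial ℂ) ^ j := by
  have h1 : Polynomial.C (n:ℂ) = ∏ i ∈ Icc 1 (n-1), Polynomial.C (1 - ζ^i) := by
    rw [← map_prod, prod_one_sub_zeta hn hζ]
  rw [h1, Epoly, ← Finset.prod_mul_distrib]
  have h2 : ∀ i ∈ Icc 1 (n-1),
      Polynomial.C (1 - ζ^i) * (1 - Polynomial.C ((1 - ζ^i)⁻¹) * Polynomial.X)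
        = Polynomial.C (1 - ζ^i) - Polynomial.X := by
    intro i hi
    have hne := one_sub_zeta_ne hn hζ hi
    rw [mul_sub, mul_one, ← mul_assoc, ← map_mul, mul_inv_cancel₀ hne, Polynomial.C_1, one_mul]
  rw [Finset.prod_congr rfl h2]
  have h3 : ∏ i ∈ Icc 1 (n-1), ((1 - Polynomial.X : Polynomial ℂ) - Polynomial.C (ζ^i))
      = ∑ j ∈ range n, (1 - Polynomial.X : Polynomial ℂ)^j := by
    have := congrArg (Polynomial.aeval (1 - Polynomial.X : Polynomial ℂ)) (prod_X_sub_zeta hn hζ)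
    simpa [map_prod, map_sub, Polynomial.aeval_X, Polynomial.aeval_C,
      Polynomial.algebraMap_eq] using this
  rw [← h3]
  exact Finset.prod_congr rfl fun i _ => by rw [map_sub, Polynomial.C_1]; ring

lemma coeff_one_sub_X_pow (j k : ℕ) :
    ((1 - Polynomial.X : Polynomial ℂ) ^ j).coeff k = (-1)^k * (j.choose k) := by
  rw [sub_pow]
  have hc : ∀ m ∈ range (j+1),
      ((-1 : Polynomial ℂ)^(m+j) * 1^m * Polynomial.X^(j-m) * (j.choose m : Polynomial ℂ))
        = Polynomial.C ((-1:ℂ)^(m+j) * (j.choose m : ℂ)) * Polynomial.X^(j-m) := by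
    intro m _
    simp only [map_mul, map_pow, map_neg, Polynomial.C_1, Polynomial.C_eq_natCast, one_pow, mul_one]
    ring
  rw [Finset.sum_congr rfl hc, Polynomial.finset_sum_coeff]
  simp only [Polynomial.coeff_C_mul, Polynomial.coeff_X_pow, mul_ite, mul_one, mul_zero]
  rcases le_or_gt k j with h | h
  · rw [Finset.sum_eq_single (j - k)]
    · rw [if_pos (by omega)]
      rw [show j - k + j = 2*(j-k) + k by omega, pow_add, pow_mul, Nat.choose_symm h]
      norm_num
    · intro m hm hne
      rw [if_neg (by simp at hm; omega)]
    · intro hm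
      simp at hm
  · rw [Nat.choose_eq_zero_of_lt h]
    rw [Finset.sum_eq_zero]
    · simp
    · intro m hm
      rw [if_neg (by simp at hm; omega)]

lemma sum_choose_range (n k : ℕ) (hn : 1 ≤ n) :
    ∑ j ∈ range n, j.choose k = n.choose (k+1) := by
  have h := Nat.sum_Icc_choose (n-1) k
  rw [show n-1+1 = n by omega] at h
  rw [← h]
  refine (Finset.sum_subset (fun j hj => ?_) (fun j hj hj2 => ?_)).symm
  · simp only [mem_Icc] at hj; simp only [mem_range]; omega
  · simp only [mem_range] at hj
    simp only [mem_Icc, not_and, not_le] at hj2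
    exact Nat.choose_eq_zero_of_lt (by omega)

lemma coeff_Epoly {n : ℕ} {ζ : ℂ} (hn : 2 ≤ n) (hζ : IsPrimitiveRoot ζ n) (k : ℕ) :
    (Epoly n ζ).coeff k = (-1)^k * (n.choose (k+1)) / n := by
  have hne : (n : ℂ) ≠ 0 := Nat.cast_ne_zero.mpr (by omega)
  have := congrArg (fun p => Polynomial.coeff p k) (nE_eq hn hζ)
  simp only [Polynomial.coeff_C_mul, Polynomial.finset_sum_coeff, coeff_one_sub_X_pow] at this
  rw [← Finset.mul_sum, ← Nat.cast_sum, sum_choose_range n k (by omega)] at this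
  rw [eq_div_iff hne]
  linear_combination this

lemma coeff_H {n : ℕ} (hn : 2 ≤ n) (ζ : ℂ) (m : ℕ) :
    (PowerSeries.coeff m) (∏ i ∈ Icc 1 (n-1), PowerSeries.mk (fun k => ((1 - ζ^i)⁻¹)^k))
      = zetaStar n ζ m 1 := by
  rw [PowerSeries.coeff_prod]
  simp only [PowerSeries.coeff_mk]
  rw [zetaStar]
  refine (Finset.sum_bij'
    (i := fun f _ => Multiset.toFinsupp (Multiset.map (fun j => ((f j : ℕ))) Finset.univ.val))
    (j := fun l _ => fun (j : Fin m) =>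
      (⟨min ((Multiset.sort (Finsupp.toMultiset l) (· ≤ ·)).getD j 0) (n-1),
        lt_of_le_of_lt (Nat.min_le_right _ _) (by omega)⟩ : Fin n))
    ?_ ?_ ?_ ?_ ?_).symm
  · -- hi : image of f lands in finsuppAntidiag
    intro f hf
    simp only [Finset.mem_filter, Finset.mem_univ, true_and] at hf
    rw [Finset.mem_finsuppAntidiag]
    have hsupp : (Multiset.toFinsupp (Multiset.map (fun j => ((f j : ℕ))) Finset.univ.val)).support
        ⊆ Icc 1 (n-1) := by
      rw [Multiset.toFinsupp_support]
      intro a ha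
      rw [Multiset.mem_toFinset, Multiset.mem_map] at ha
      obtain ⟨j, _, rfl⟩ := ha
      simp only [mem_Icc]
      exact ⟨hf.1 j, by have := (f j).isLt; omega⟩
    refine ⟨?_, hsupp⟩
    have h0 : ∀ x ∈ Icc 1 (n-1),
        x ∉ (Multiset.toFinsupp (Multiset.map (fun j => ((f j : ℕ))) Finset.univ.val)).support →
        (Multiset.toFinsupp (Multiset.map (fun j => ((f j : ℕ))) Finset.univ.val)) x = 0 :=
      fun x _ hx => Finsupp.notMem_support_iff.mp hx
    have h1 := (Finset.sum_subset hsupp h0).symm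
    rw [h1]
    have h2 := Multiset.toFinsupp_sum_eq (Multiset.map (fun j => ((f j : ℕ))) Finset.univ.val)
    rw [Finsupp.sum] at h2
    simp only [id] at h2
    rw [h2, Multiset.card_map]
    simp [← Finset.card_def]
  · -- hj : preimage lands in filter
    intro l hl
    rw [Finset.mem_finsuppAntidiag] at hl
    obtain ⟨hsum, hsupp⟩ := hl
    have hmem : ∀ a ∈ Multiset.sort (Finsupp.toMultiset l) (· ≤ ·), a ∈ Icc 1 (n-1) := by
      intro a ha
      rw [Multiset.mem_sort, Finsupp.mem_toMultiset] at ha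
      exact hsupp ha
    have hlen : (Multiset.sort (Finsupp.toMultiset l) (· ≤ ·)).length = m := by
      rw [Multiset.length_sort, Finsupp.card_toMultiset, Finsupp.sum]
      simp only [id]
      rw [Finset.sum_subset hsupp (fun x _ hx => Finsupp.notMem_support_iff.mp hx)]
      exact hsum
    simp only [Finset.mem_filter, Finset.mem_univ, true_and]
    constructor
    · intro j
      have hj : (j : ℕ) < (Multiset.sort (Finsupp.toMultiset l) (· ≤ ·)).length := by
        rw [hlen]; exact j.isLt
      have := hmem _ (List.getElem_mem hj)
      rw [mem_Icc] at this
      rw [List.getD_eq_getElem _ _ hj]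
      exact le_min this.1 (by omega)
    · intro j k hjk
      rw [Fin.mk_le_mk]
      have hj : (j : ℕ) < (Multiset.sort (Finsupp.toMultiset l) (· ≤ ·)).length := by
        rw [hlen]; exact j.isLt
      have hk : (k : ℕ) < (Multiset.sort (Finsupp.toMultiset l) (· ≤ ·)).length := by
        rw [hlen]; exact k.isLt
      rw [List.getD_eq_getElem _ _ hj, List.getD_eq_getElem _ _ hk]
      have hs := Multiset.pairwise_sort (Finsupp.toMultiset l) (· ≤ ·)
      have := hs.rel_get_of_le (a := ⟨j, hj⟩) (b := ⟨k, hk⟩) (by exact hjk)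
      simp only [List.get_eq_getElem] at this
      exact min_le_min this (le_refl _)
  · -- left_inv
    intro f hf
    simp only [Finset.mem_filter, Finset.mem_univ, true_and] at hf
    beta_reduce
    rw [Multiset.toFinsupp_toMultiset]
    have huv : Multiset.map (fun j => ((f j : ℕ))) Finset.univ.val
        = ↑(List.ofFn (fun j => ((f j : ℕ)))) := Fin.univ_val_map _
    have hsort : Multiset.sort ↑(List.ofFn (fun j => ((f j : ℕ)))) (· ≤ ·)
        = List.ofFn (fun j => ((f j : ℕ))) := by
      refine List.Perm.eq_of_pairwise' (r := (· ≤ ·))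
        (Multiset.pairwise_sort _ _) ?_ (Multiset.coe_eq_coe.mp (Multiset.sort_eq _ _))
      rw [← List.sortedLE_iff_pairwise, List.sortedLE_ofFn_iff]
      intro a b hab
      exact hf.2 a b hab
    rw [huv, hsort]
    funext j
    apply Fin.ext
    have hj : (j : ℕ) < (List.ofFn (fun j => ((f j : ℕ)))).length := by
      rw [List.length_ofFn]; exact j.isLt
    simp only [List.getD_eq_getElem _ _ hj, List.getElem_ofFn, Fin.eta]
    exact Nat.min_eq_left (by have := (f j).isLt; omega)
  · -- right_inv
    intro l hl
    rw [Finset.mem_finsuppAntidiag] at hl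
    obtain ⟨hsum, hsupp⟩ := hl
    have hmem : ∀ a ∈ Multiset.sort (Finsupp.toMultiset l) (· ≤ ·), a ∈ Icc 1 (n-1) := by
      intro a ha
      rw [Multiset.mem_sort, Finsupp.mem_toMultiset] at ha
      exact hsupp ha
    have hlen : (Multiset.sort (Finsupp.toMultiset l) (· ≤ ·)).length = m := by
      rw [Multiset.length_sort, Finsupp.card_toMultiset, Finsupp.sum]
      simp only [id]
      rw [Finset.sum_subset hsupp (fun x _ hx => Finsupp.notMem_support_iff.mp hx)]
      exact hsum
    have huv : Multiset.map
          (fun (j : Fin m) => ((min ((Multiset.sort (Finsupp.toMultiset l) (· ≤ ·)).getD j 0) (n-1) : ℕ)))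
          Finset.univ.val
        = ↑(List.ofFn (fun (j : Fin m) =>
            min ((Multiset.sort (Finsupp.toMultiset l) (· ≤ ·)).getD j 0) (n-1))) :=
      Fin.univ_val_map _
    simp only
    rw [huv]
    have hlist : List.ofFn (fun (j : Fin m) =>
        min ((Multiset.sort (Finsupp.toMultiset l) (· ≤ ·)).getD j 0) (n-1))
        = Multiset.sort (Finsupp.toMultiset l) (· ≤ ·) := by
      apply List.ext_getElem
      · rw [List.length_ofFn, hlen]
      · intro i h1 h2
        rw [List.getElem_ofFn]
        have := hmem _ (List.getElem_mem h2)
        rw [mem_Icc] at this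
        rw [List.getD_eq_getElem _ _ h2]
        exact Nat.min_eq_left this.2
    rw [hlist]
    rw [Multiset.sort_eq]
    exact Finsupp.toMultiset_toFinsupp l
  · -- values
    intro f hf
    simp only [Finset.mem_filter, Finset.mem_univ, true_and] at hf
    simp only [pow_one, Multiset.toFinsupp_apply]
    have h1 : ∏ j : Fin m, (1 - ζ ^ ((f j : ℕ)))⁻¹
        = ((Multiset.map (fun j => ((f j : ℕ))) Finset.univ.val).map
            (fun i => (1 - ζ ^ i)⁻¹)).prod := by
      rw [Multiset.map_map]
      rfl
    rw [h1, Finset.prod_multiset_map_count]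
    apply Finset.prod_subset
    · intro a ha
      rw [Multiset.mem_toFinset, Multiset.mem_map] at ha
      obtain ⟨j, _, rfl⟩ := ha
      simp only [mem_Icc]
      exact ⟨hf.1 j, by have := (f j).isLt; omega⟩
    · intro x _ hx
      rw [Multiset.count_eq_zero_of_notMem (fun h => hx (Multiset.mem_toFinset.mpr h))]
      exact pow_zero _

lemma EH_eq_one (n : ℕ) (ζ : ℂ) :
    (Epoly n ζ : PowerSeries ℂ)
      * (∏ i ∈ Icc 1 (n-1), PowerSeries.mk (fun k => ((1 - ζ^i)⁻¹)^k)) = 1 := by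
  rw [Epoly]
  have hcoe : ((∏ i ∈ Icc 1 (n-1), (1 - Polynomial.C ((1 - ζ^i)⁻¹) * Polynomial.X)
        : Polynomial ℂ) : PowerSeries ℂ)
      = ∏ i ∈ Icc 1 (n-1),
          ((1 - Polynomial.C ((1 - ζ^i)⁻¹) * Polynomial.X : Polynomial ℂ) : PowerSeries ℂ) := by
    simp only [← Polynomial.coeToPowerSeries.ringHom_apply]
    exact map_prod _ _ _
  rw [hcoe]
  simp only [Polynomial.coe_sub, Polynomial.coe_one, Polynomial.coe_mul, Polynomial.coe_C,
    Polynomial.coe_X]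
  rw [← Finset.prod_mul_distrib]
  rw [Finset.prod_congr rfl (fun i _ => geom_inv ((1 - ζ^i)⁻¹))]
  exact Finset.prod_const_one

theorem stmt12 (n : ℕ) (hn : 2 ≤ n) (ζ : ℂ) (hζ : IsPrimitiveRoot ζ n)
    (m : ℕ) (hm : 1 ≤ m) (hmn : m ≤ n - 1) :
    zetaStar n ζ m 1
      = ∑ j ∈ Finset.range m,
          (-1 : ℂ) ^ (m - j + 1) / (m - j + 1) * ((n - 1).choose (m - j))
            * zetaStar n ζ j 1 := by
  have hnC : (n : ℂ) ≠ 0 := Nat.cast_ne_zero.mpr (by omega)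
  have key := congrArg (PowerSeries.coeff m) (EH_eq_one n ζ)
  rw [PowerSeries.coeff_mul] at key
  rw [PowerSeries.coeff_one, if_neg (by omega)] at key
  rw [Finset.Nat.sum_antidiagonal_eq_sum_range_succ
    (f := fun a b => (PowerSeries.coeff a) (Epoly n ζ : PowerSeries ℂ)
      * (PowerSeries.coeff b) (∏ i ∈ Icc 1 (n-1), PowerSeries.mk (fun k => ((1 - ζ^i)⁻¹)^k)))] at key
  simp only [Polynomial.coeff_coe, coeff_Epoly hn hζ, coeff_H hn ζ] at key
  rw [Finset.sum_range_succ'] at key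
  simp only [pow_zero, zero_add, Nat.choose_one_right, one_mul, Nat.sub_zero] at key
  rw [div_self hnC, one_mul] at key
  -- key : ∑ k ∈ range m, (-1)^(k+1) * C(n,k+2)/n * z (m - (k+1)) + z m = 0
  rw [← Finset.sum_range_reflect]
  have hterm : ∀ k ∈ range m,
      (-1:ℂ) ^ (m - (m - 1 - k) + 1) / ((m:ℂ) - ((m - 1 - k : ℕ) : ℂ) + 1)
          * (((n - 1).choose (m - (m - 1 - k))) : ℂ) * zetaStar n ζ (m - 1 - k) 1
        = -((-1:ℂ) ^ (k+1) * (n.choose (k+1+1) : ℂ) / (n:ℂ) * zetaStar n ζ (m - (k+1)) 1) := by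
    intro k hk
    rw [mem_range] at hk
    have h1 : m - (m - 1 - k) = k + 1 := by omega
    have h2 : m - (k+1) = m - 1 - k := by omega
    have hc : ((m - 1 - k : ℕ):ℂ) = (m:ℂ) - 1 - (k:ℂ) := by
      push_cast [Nat.cast_sub (show k ≤ m-1 by omega), Nat.cast_sub (show 1 ≤ m by omega)]
      ring
    rw [h1, h2, hc]
    rw [show (m:ℂ) - ((m:ℂ) - 1 - (k:ℂ)) + 1 = (k:ℂ) + 2 by ring]
    have h3 : (n:ℕ) * ((n-1).choose (k+1)) = n.choose (k+2) * (k+2) := by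
      have := Nat.add_one_mul_choose_eq (n-1) (k+1)
      rw [show n - 1 + 1 = n by omega] at this
      simpa [mul_comm] using this
    have h4 : (n:ℂ) * ((n-1).choose (k+1)) = (n.choose (k+2)) * ((k:ℂ)+2) := by
      exact_mod_cast congrArg (Nat.cast : ℕ → ℂ) h3
    have hk2 : ((k:ℂ)+2) ≠ 0 := by
      have h5 : ((k+2:ℕ):ℂ) ≠ 0 := Nat.cast_ne_zero.mpr (by omega)
      push_cast at h5
      exact h5
    have hscal : (-1:ℂ)^(k+1+1) / ((k:ℂ)+2) * (((n-1).choose (k+1) : ℕ) : ℂ)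
        = -((-1:ℂ)^(k+1) * ((n.choose (k+1+1) : ℕ) : ℂ) / (n:ℂ)) := by
      field_simp
      ring_nf
      ring_nf at h4
      linear_combination ((-1:ℂ))^k * h4
    rw [hscal, neg_mul]
  rw [Finset.sum_congr rfl hterm]
  rw [Finset.sum_neg_distrib]
  linear_combination key
end

section
/- For a primitive n-th root of unity ζ_n (n ≥ 2) and positive integer s, the generating function identity ∑_{m≥0} 𝔷_n^⋆(ζ_n; m, s)·X^m = n^s · ∏_{j=1}^{n-1} 1/((1-ζ_n^j)^s - X) holds as formal power series (the sum terminates since 𝔷_n^⋆ is a polynomial identity for |X| small). -/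
open Finset

noncomputable def Ztr (n : ℕ) (ζ : ℂ) (s t m : ℕ) : ℂ :=
  ∑ f ∈ Finset.univ.filter
      (fun f : Fin m → Fin n =>
        (∀ j, 1 ≤ (f j : ℕ) ∧ (f j : ℕ) ≤ t) ∧ ∀ j k, j ≤ k → f j ≤ f k),
    ∏ j, ((1 - ζ ^ (f j : ℕ)) ^ s)⁻¹

lemma Ztr_zero_right (n : ℕ) (ζ : ℂ) (s t : ℕ) : Ztr n ζ s t 0 = 1 := by
  rw [Ztr]
  rw [Finset.sum_eq_single (fun j : Fin 0 => j.elim0)]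
  · simp
  · intro f hf hne
    exact absurd (funext fun j => j.elim0) hne
  · intro h
    exact absurd (Finset.mem_filter.2 ⟨Finset.mem_univ _,
      ⟨fun j => j.elim0, fun j => j.elim0⟩⟩) h

lemma Ztr_zero (n : ℕ) (ζ : ℂ) (s m : ℕ) (hm : m ≠ 0) : Ztr n ζ s 0 m = 0 := by
  rw [Ztr, Finset.sum_eq_zero]
  intro f hf
  rw [Finset.mem_filter] at hf
  obtain ⟨m', rfl⟩ := Nat.exists_eq_succ_of_ne_zero hm
  have := hf.2.1 0
  omega

lemma Ztr_succ (n : ℕ) (ζ : ℂ) (s t m : ℕ) (ht : t + 1 < n) :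
    Ztr n ζ s (t+1) (m+1)
      = Ztr n ζ s t (m+1) + ((1 - ζ ^ (t+1)) ^ s)⁻¹ * Ztr n ζ s (t+1) m := by
  classical
  rw [Ztr,
    ← Finset.sum_filter_add_sum_filter_not _
      (fun f : Fin (m+1) → Fin n => (f (Fin.last m) : ℕ) ≤ t)]
  congr 1
  · rw [Ztr, Finset.filter_filter]
    refine Finset.sum_congr ?_ (fun _ _ => rfl)
    ext f
    simp only [Finset.mem_filter, Finset.mem_univ, true_and]
    constructor
    · rintro ⟨⟨hb, hm⟩, hlast⟩
      refine ⟨fun j => ⟨(hb j).1, ?_⟩, hm⟩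
      exact le_trans (Fin.le_def.mp (hm j (Fin.last m) (Fin.le_last j))) hlast
    · rintro ⟨hb, hm⟩
      exact ⟨⟨fun j => ⟨(hb j).1, le_trans (hb j).2 (Nat.le_succ t)⟩, hm⟩, (hb _).2⟩
  · rw [Ztr, Finset.filter_filter, Finset.mul_sum]
    refine Finset.sum_nbij' (fun f => f ∘ Fin.castSucc)
      (fun g => Fin.snoc g ⟨t+1, ht⟩) ?_ ?_ ?_ ?_ ?_
    · rintro f hf
      simp only [Finset.mem_filter, Finset.mem_univ, true_and] at hf ⊢
      obtain ⟨⟨hb, hm⟩, _⟩ := hf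
      exact ⟨fun j => hb _, fun j k hjk => hm _ _ (Fin.castSucc_le_castSucc_iff.mpr hjk)⟩
    · rintro g hg
      simp only [Finset.mem_filter, Finset.mem_univ, true_and] at hg ⊢
      obtain ⟨hb, hm⟩ := hg
      have hle : ∀ j : Fin (m+1), ((Fin.snoc (α := fun _ => Fin n) g ⟨t+1, ht⟩ j) : ℕ) ≤ t + 1 := by
        intro j
        refine Fin.lastCases ?_ ?_ j
        · simp
        · intro i; simp only [Fin.snoc_castSucc]; exact (hb i).2
      have h1 : ∀ j : Fin (m+1), 1 ≤ ((Fin.snoc (α := fun _ => Fin n) g ⟨t+1, ht⟩ j) : ℕ) := by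
        intro j
        refine Fin.lastCases ?_ ?_ j
        · simp
        · intro i; simp only [Fin.snoc_castSucc]; exact (hb i).1
      refine ⟨⟨fun j => ⟨h1 j, hle j⟩, ?_⟩, ?_⟩
      · intro j k
        refine Fin.lastCases ?_ ?_ k
        · intro _
          rw [Fin.le_def]
          simpa using hle j
        · intro i
          refine Fin.lastCases ?_ ?_ j
          · intro h
            exact absurd h (not_le.mpr (Fin.castSucc_lt_last i))
          · intro i' h
            simp only [Fin.snoc_castSucc]
            exact hm _ _ (Fin.castSucc_le_castSucc_iff.mp h)
      · simp
    · rintro f hf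
      simp only [Finset.mem_filter, Finset.mem_univ, true_and] at hf
      obtain ⟨⟨hb, hm⟩, hlast⟩ := hf
      have hfl : f (Fin.last m) = (⟨t+1, ht⟩ : Fin n) := by
        have := (hb (Fin.last m)).2
        apply Fin.ext
        show (f (Fin.last m) : ℕ) = t + 1
        omega
      funext j
      refine Fin.lastCases ?_ ?_ j
      · simp [hfl]
      · intro i; simp
    · rintro g hg
      funext j
      simp
    · rintro f hf
      simp only [Finset.mem_filter, Finset.mem_univ, true_and] at hf
      obtain ⟨⟨hb, hm⟩, hlast⟩ := hf
      have hfl : (f (Fin.last m) : ℕ) = t + 1 := by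
        have := (hb (Fin.last m)).2; omega
      rw [Fin.prod_univ_castSucc]
      rw [hfl, mul_comm]
      rfl

lemma Ztr_key (n : ℕ) (ζ : ℂ) (s : ℕ) (t : ℕ) (ht : t < n) :
    (PowerSeries.mk fun m => Ztr n ζ s t m) *
      ∏ j ∈ Icc 1 t,
        (1 - PowerSeries.C ((1 - ζ ^ j) ^ s)⁻¹ * PowerSeries.X) = 1 := by
  induction t with
  | zero =>
    rw [show (Finset.Icc 1 0 : Finset ℕ) = ∅ by rfl, Finset.prod_empty, mul_one]
    ext m
    rw [PowerSeries.coeff_mk, PowerSeries.coeff_one]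
    by_cases hm : m = 0
    · simp [hm, Ztr_zero_right]
    · simp [hm, Ztr_zero n ζ s m hm]
  | succ t ih =>
    have ht' : t < n := Nat.lt_of_succ_lt ht
    rw [Finset.prod_Icc_succ_top (Nat.succ_le_succ (Nat.zero_le t))]
    have step : (PowerSeries.mk fun m => Ztr n ζ s (t+1) m) *
        (1 - PowerSeries.C ((1 - ζ ^ (t+1)) ^ s)⁻¹ * PowerSeries.X)
        = PowerSeries.mk fun m => Ztr n ζ s t m := by
      ext m
      rw [mul_sub, mul_one, map_sub, PowerSeries.coeff_mk, PowerSeries.coeff_mk]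
      rw [show (PowerSeries.mk fun m => Ztr n ζ s (t+1) m) *
          (PowerSeries.C ((1 - ζ ^ (t+1)) ^ s)⁻¹ * PowerSeries.X)
        = PowerSeries.C ((1 - ζ ^ (t+1)) ^ s)⁻¹ *
            ((PowerSeries.mk fun m => Ztr n ζ s (t+1) m) * PowerSeries.X) by ring]
      cases m with
      | zero =>
        simp [Ztr_zero_right]
      | succ m =>
        rw [PowerSeries.coeff_C_mul, PowerSeries.coeff_succ_mul_X, PowerSeries.coeff_mk,
          Ztr_succ n ζ s t m ht]
        ring
    calc (PowerSeries.mk fun m => Ztr n ζ s (t+1) m) *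
          ((∏ j ∈ Icc 1 t, (1 - PowerSeries.C ((1 - ζ ^ j) ^ s)⁻¹ * PowerSeries.X)) *
            (1 - PowerSeries.C ((1 - ζ ^ (t+1)) ^ s)⁻¹ * PowerSeries.X))
        = ((PowerSeries.mk fun m => Ztr n ζ s (t+1) m) *
            (1 - PowerSeries.C ((1 - ζ ^ (t+1)) ^ s)⁻¹ * PowerSeries.X)) *
            ∏ j ∈ Icc 1 t, (1 - PowerSeries.C ((1 - ζ ^ j) ^ s)⁻¹ * PowerSeries.X) := by
          ring
      _ = 1 := by rw [step]; exact ih ht'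





open Finset

lemma zetaStar_eq_Ztr (n : ℕ) (ζ : ℂ) (m s : ℕ) :
    zetaStar n ζ m s = Ztr n ζ s (n - 1) m := by
  rw [zetaStar, Ztr]
  refine Finset.sum_congr ?_ (fun _ _ => rfl)
  ext f
  simp only [Finset.mem_filter, Finset.mem_univ, true_and]
  constructor
  · rintro ⟨hb, hm⟩
    exact ⟨fun j => ⟨hb j, by have := (f j).isLt; omega⟩, hm⟩
  · rintro ⟨hb, hm⟩
    exact ⟨fun j => (hb j).1, hm⟩


/-- The generating-function identity
`∑_{m≥0} 𝔷_n^⋆(ζ_n; m, s) X^m = n^s ∏_{j=1}^{n-1} 1/((1-ζ_n^j)^s - X)`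
as formal power series, written multiplied out (the product on the left has
invertible constant term `n^s ≠ 0`). -/
theorem stmt15 (n : ℕ) (hn : 2 ≤ n) (ζ : ℂ) (hζ : IsPrimitiveRoot ζ n) (s : ℕ) (hs : 1 ≤ s) :
    (PowerSeries.mk fun m => zetaStar n ζ m s)
        * ∏ j ∈ Finset.Icc 1 (n - 1),
            (PowerSeries.C ((1 - ζ ^ j) ^ s) - PowerSeries.X)
      = PowerSeries.C ((n : ℂ) ^ s) := by
  have hne : ∀ j ∈ Finset.Icc 1 (n - 1), (1 - ζ ^ j) ^ s ≠ 0 := by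
    intro j hj
    rw [Finset.mem_Icc] at hj
    refine pow_ne_zero _ (sub_ne_zero.mpr ?_)
    exact fun h => hζ.pow_ne_one_of_pos_of_lt (by omega) (by omega) h.symm
  have hprod : ∏ j ∈ Finset.Icc 1 (n - 1), (1 - ζ ^ j) ^ s = (n : ℂ) ^ s := by
    rw [Finset.prod_pow]
    congr 1
    obtain ⟨n', rfl⟩ : ∃ n', n = n' + 1 := ⟨n - 1, by omega⟩
    have h := hζ.prod_one_sub_pow_eq_order
    rw [Nat.add_sub_cancel]
    rw [show Finset.Icc 1 n' = Finset.Ico 1 (n' + 1) by rw [Finset.Ico_add_one_right_eq_Icc],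
      Finset.prod_Ico_eq_prod_range, Nat.add_sub_cancel]
    rw [Nat.cast_add, Nat.cast_one, ← h]
    refine Finset.prod_congr rfl fun k hk => by rw [add_comm]
  have key := Ztr_key n ζ s (n - 1) (by omega)
  have hfac : ∏ j ∈ Finset.Icc 1 (n - 1),
      (PowerSeries.C ((1 - ζ ^ j) ^ s) - PowerSeries.X)
      = PowerSeries.C ((n : ℂ) ^ s) *
        ∏ j ∈ Finset.Icc 1 (n - 1),
          (1 - PowerSeries.C ((1 - ζ ^ j) ^ s)⁻¹ * PowerSeries.X) := by
    rw [← hprod, map_prod, ← Finset.prod_mul_distrib]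
    refine Finset.prod_congr rfl fun j hj => ?_
    rw [mul_sub, mul_one, ← mul_assoc, ← map_mul, mul_inv_cancel₀ (hne j hj), map_one, one_mul]
  rw [hfac, show (PowerSeries.mk fun m => zetaStar n ζ m s) =
      PowerSeries.mk fun m => Ztr n ζ s (n - 1) m from
        congrArg _ (funext fun m => zetaStar_eq_Ztr n ζ m s)]
  rw [mul_comm (PowerSeries.C ((n:ℂ)^s)) _, ← mul_assoc, key, one_mul]
end

section
/- For positive integers n, m, s with m ≤ n-1, the q-multiple zeta function satisfies 𝔷_n(q; m, s) = (1/((1-q)^{ms}([n-1]_q!)^s)) · [n choose m+1]₁^{(1,s)}_q, where [·]₁^{(1,s)}_q denotes the q-generalized (1,s)-Stirling number of the first kind defined by the recurrence T(n,k) = T(n-1,k-1) + ([n-1]_q)^s·T(n-1,k). -/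
open Finset

/-- The `q`-number `[i]_q = (q^i - 1)/(q - 1)`. -/
noncomputable def qnum (q : ℂ) (i : ℕ) : ℂ := (q ^ i - 1) / (q - 1)

/-- The `q`-factorial `[n]_q! = [n]_q [n-1]_q ⋯ [1]_q`. -/
noncomputable def qfact (q : ℂ) (n : ℕ) : ℂ := ∏ i ∈ Finset.Icc 1 n, qnum q i

/-- The `q`-generalized `(1,s)`-Stirling numbers of the first kind, defined by the
recurrence `T(n,k) = T(n-1,k-1) + ([n-1]_q)^s T(n-1,k)` with `T(0,0) = 1`,
`T(n,0) = 0` for `n ≥ 1` and `T(0,k) = 0` for `k ≥ 1`. -/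
noncomputable def qStirlingFirst (q : ℂ) (s : ℕ) : ℕ → ℕ → ℂ
  | 0, 0 => 1
  | 0, _ + 1 => 0
  | _ + 1, 0 => 0
  | n + 1, k + 1 =>
      qStirlingFirst q s n k + (qnum q n) ^ s * qStirlingFirst q s n (k + 1)

/-- The `q`-multiple zeta value `𝔷_n(q; m, s)`: the sum over strictly increasing
tuples `1 ≤ i₁ < … < i_m ≤ n-1` of `∏_j 1/(1-q^{i_j})^s`. -/
noncomputable def zetaQ (n : ℕ) (q : ℂ) (m s : ℕ) : ℂ :=
  ∑ f ∈ Finset.univ.filter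
      (fun f : Fin m → Fin n => (∀ j, 1 ≤ (f j : ℕ)) ∧ ∀ j k, j < k → f j < f k),
    ∏ j, ((1 - q ^ (f j : ℕ)) ^ s)⁻¹

lemma qStirling_eq_zero (q : ℂ) (s : ℕ) : ∀ n k, n < k → qStirlingFirst q s n k = 0
  | 0, 0, h => absurd h (lt_irrefl 0)
  | 0, k+1, _ => rfl
  | n+1, 0, h => by omega
  | n+1, k+1, h => by
      rw [qStirlingFirst, qStirling_eq_zero q s n k (by omega),
        qStirling_eq_zero q s n (k+1) (by omega)]
      ring

lemma qStirling_diag (q : ℂ) (s : ℕ) : ∀ n, qStirlingFirst q s n n = 1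
  | 0 => rfl
  | n+1 => by
      rw [qStirlingFirst, qStirling_diag q s n, qStirling_eq_zero q s n (n+1) (by omega)]
      ring

lemma qStirling_sum (q : ℂ) (s : ℕ) :
    ∀ n, 1 ≤ n → ∀ k, k ≤ n - 1 →
      qStirlingFirst q s n (k+1)
        = ∑ A ∈ (Finset.Icc 1 (n-1)).powersetCard (n-1-k), ∏ i ∈ A, (qnum q i)^s := by
  intro n
  induction n with
  | zero => omega
  | succ n ih =>
    intro _ k hk
    rcases Nat.eq_zero_or_pos n with rfl | hn
    · interval_cases k
      simp [qStirlingFirst]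
    obtain ⟨p, rfl⟩ : ∃ p, n = p + 1 := ⟨n - 1, by omega⟩
    simp only [Nat.add_sub_cancel] at hk ⊢
    rcases Nat.lt_or_ge k (p+1) with hkp | hkp
    · -- k ≤ p
      have hkp' : k ≤ p := by omega
      have hins : Finset.Icc 1 (p+1) = insert (p+1) (Finset.Icc 1 p) := by
        rw [← Finset.insert_Icc_right_eq_Icc_add_one (by omega)]
      have hnotmem : (p+1) ∉ Finset.Icc 1 p := by simp
      have hcard : (p+1) - k = (p - k) + 1 := by omega
      rw [hins, hcard, Finset.powersetCard_succ_insert hnotmem]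
      have hdisj : Disjoint ((Finset.Icc 1 p).powersetCard (p-k+1))
          (((Finset.Icc 1 p).powersetCard (p-k)).image (insert (p+1))) := by
        rw [Finset.disjoint_left]
        intro A hA hA'
        obtain ⟨B, hB, rfl⟩ := Finset.mem_image.mp hA'
        have := (Finset.mem_powersetCard.mp hA).1
        exact hnotmem (this (Finset.mem_insert_self _ _))
      rw [Finset.sum_union hdisj, Finset.sum_image ?hinj]
      case hinj =>
        intro A hA B hB hAB
        have hA' : (p+1) ∉ A := fun h => hnotmem ((Finset.mem_powersetCard.mp hA).1 h)
        have hB' : (p+1) ∉ B := fun h => hnotmem ((Finset.mem_powersetCard.mp hB).1 h)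
        rw [← Finset.erase_insert hA', hAB, Finset.erase_insert hB']
      have hprodins : ∀ A ∈ (Finset.Icc 1 p).powersetCard (p-k),
          ∏ i ∈ insert (p+1) A, (qnum q i)^s = (qnum q (p+1))^s * ∏ i ∈ A, (qnum q i)^s := by
        intro A hA
        exact Finset.prod_insert (fun h => hnotmem ((Finset.mem_powersetCard.mp hA).1 h))
      rw [Finset.sum_congr rfl hprodins, ← Finset.mul_sum]
      rw [show qStirlingFirst q s (p+1+1) (k+1)
            = qStirlingFirst q s (p+1) k + (qnum q (p+1))^s * qStirlingFirst q s (p+1) (k+1)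
          from rfl]
      rw [ih (by omega) k (by simpa using hkp')]
      simp only [Nat.add_sub_cancel]
      congr 1
      rcases Nat.eq_zero_or_pos k with rfl | hk1
      · rw [show qStirlingFirst q s (p+1) 0 = 0 from rfl]
        rw [Finset.powersetCard_eq_empty.mpr (by simp [Nat.card_Icc]), Finset.sum_empty]
      · obtain ⟨k', rfl⟩ : ∃ k', k = k' + 1 := ⟨k - 1, by omega⟩
        rw [ih (by omega) k' (by simp; omega)]
        simp only [Nat.add_sub_cancel]
        congr 2
        omega
    · -- k = p + 1
      have : k = p + 1 := by omega
      subst this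
      rw [qStirling_diag, Nat.sub_self, Finset.powersetCard_zero]
      simp

set_option maxHeartbeats 2000000 in
lemma zetaQ_eq_sum (n m s : ℕ) (q : ℂ) (hn : 1 ≤ n) :
    zetaQ n q m s
      = ∑ A ∈ (Finset.Icc 1 (n-1)).powersetCard m, ∏ i ∈ A, ((1 - q ^ i) ^ s)⁻¹ := by
  rw [zetaQ]
  refine Finset.sum_bij'
    (i := fun f _ => Finset.image (fun j => ((f j : ℕ))) Finset.univ)
    (j := fun A hA => fun k =>
      ⟨A.orderEmbOfFin (Finset.mem_powersetCard.mp hA).2 k, by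
        have h1 := A.orderEmbOfFin_mem (Finset.mem_powersetCard.mp hA).2 k
        have h2 := (Finset.mem_powersetCard.mp hA).1 h1
        have := (Finset.mem_Icc.mp h2).2
        omega⟩)
    ?_ ?_ ?_ ?_ ?_
  · -- hi
    intro f hf
    obtain ⟨-, h1, h2⟩ := Finset.mem_filter.mp hf
    have hmono : StrictMono (fun j => ((f j : ℕ))) := fun a b hab => h2 a b hab
    rw [Finset.mem_powersetCard]
    constructor
    · intro x hx
      obtain ⟨j, -, rfl⟩ := Finset.mem_image.mp hx
      exact Finset.mem_Icc.mpr ⟨h1 j, by have := (f j).2; omega⟩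
    · rw [Finset.card_image_of_injective _ hmono.injective, Finset.card_univ,
        Fintype.card_fin]
  · -- hj
    intro A hA
    rw [Finset.mem_filter]
    refine ⟨Finset.mem_univ _, fun k => ?_, fun j k hjk => ?_⟩
    · have h1 := A.orderEmbOfFin_mem (Finset.mem_powersetCard.mp hA).2 k
      exact (Finset.mem_Icc.mp ((Finset.mem_powersetCard.mp hA).1 h1)).1
    · exact Fin.mk_lt_mk.mpr ((A.orderEmbOfFin _).strictMono hjk)
  · -- left_inv
    intro f hf
    obtain ⟨-, h1, h2⟩ := Finset.mem_filter.mp hf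
    have hmono : StrictMono (fun j => ((f j : ℕ))) := fun a b hab => h2 a b hab
    have hc : (Finset.image (fun j => ((f j : ℕ))) Finset.univ).card = m := by
      rw [Finset.card_image_of_injective _ hmono.injective, Finset.card_univ,
        Fintype.card_fin]
    have key := Finset.orderEmbOfFin_unique hc
      (f := fun j => ((f j : ℕ))) (fun x => Finset.mem_image_of_mem _ (Finset.mem_univ x))
      hmono
    funext k
    apply Fin.ext
    exact (congrFun key k).symm
  · -- right_inv
    intro A hA
    have hcard := (Finset.mem_powersetCard.mp hA).2
    apply Finset.eq_of_subset_of_card_le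
    · intro x hx
      obtain ⟨j, -, rfl⟩ := Finset.mem_image.mp hx
      exact A.orderEmbOfFin_mem hcard j
    · rw [Finset.card_image_of_injective _ ]
      · simp [hcard]
      · intro a b hab
        exact (A.orderEmbOfFin hcard).injective (by exact_mod_cast hab)
  · -- values
    intro f hf
    obtain ⟨-, h1, h2⟩ := Finset.mem_filter.mp hf
    have hmono : StrictMono (fun j => ((f j : ℕ))) := fun a b hab => h2 a b hab
    rw [Finset.prod_image (fun a _ b _ hab => hmono.injective hab)]

theorem stmt16 (n m s : ℕ) (hn : 1 ≤ n) (hm : 1 ≤ m) (hs : 1 ≤ s) (hmn : m ≤ n - 1)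
    (q : ℂ) (hq : q ≠ 1) (hqi : ∀ i, 1 ≤ i → i ≤ n - 1 → q ^ i ≠ 1) :
    zetaQ n q m s
      = ((1 - q) ^ (m * s) * (qfact q (n - 1)) ^ s)⁻¹ * qStirlingFirst q s n (m + 1) := by
  have hq' : q - 1 ≠ 0 := sub_ne_zero.mpr hq
  have hq1 : (1 : ℂ) - q ≠ 0 := sub_ne_zero.mpr (Ne.symm hq)
  have hScard : (Finset.Icc 1 (n-1)).card = n - 1 := by simp [Nat.card_Icc]
  rw [zetaQ_eq_sum n m s q hn, qStirling_sum q s n hn m hmn, Finset.mul_sum]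
  refine Finset.sum_bij' (i := fun A _ => Finset.Icc 1 (n-1) \ A)
    (j := fun A _ => Finset.Icc 1 (n-1) \ A) ?_ ?_ ?_ ?_ ?_
  · intro A hA
    obtain ⟨hAS, hAc⟩ := Finset.mem_powersetCard.mp hA
    exact Finset.mem_powersetCard.mpr ⟨Finset.sdiff_subset,
      by rw [Finset.card_sdiff_of_subset hAS, hScard, hAc]⟩
  · intro A hA
    obtain ⟨hAS, hAc⟩ := Finset.mem_powersetCard.mp hA
    refine Finset.mem_powersetCard.mpr ⟨Finset.sdiff_subset, ?_⟩
    rw [Finset.card_sdiff_of_subset hAS, hScard, hAc]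
    omega
  · intro A hA
    exact Finset.sdiff_sdiff_eq_self (Finset.mem_powersetCard.mp hA).1
  · intro A hA
    exact Finset.sdiff_sdiff_eq_self (Finset.mem_powersetCard.mp hA).1
  · intro A hA
    obtain ⟨hAS, hAc⟩ := Finset.mem_powersetCard.mp hA
    have hnum : ∀ i ∈ Finset.Icc 1 (n-1), qnum q i ≠ 0 := by
      intro i hi
      obtain ⟨hi1, hi2⟩ := Finset.mem_Icc.mp hi
      exact div_ne_zero (sub_ne_zero.mpr (hqi i hi1 hi2)) hq'
    have ha : (∏ i ∈ A, (qnum q i)^s) ≠ 0 :=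
      Finset.prod_ne_zero_iff.mpr (fun i hi => pow_ne_zero _ (hnum i (hAS hi)))
    have hb : (∏ i ∈ Finset.Icc 1 (n-1) \ A, (qnum q i)^s) ≠ 0 :=
      Finset.prod_ne_zero_iff.mpr
        (fun i hi => pow_ne_zero _ (hnum i (Finset.mem_sdiff.mp hi).1))
    have hfac : ∀ i ∈ A, ((1 - q^i)^s)⁻¹ = ((1-q)^s * (qnum q i)^s)⁻¹ := by
      intro i _
      rw [← mul_pow]
      congr 2
      rw [qnum]
      field_simp
      ring
    have hqf : (qfact q (n-1))^s
        = (∏ i ∈ Finset.Icc 1 (n-1) \ A, (qnum q i)^s) * ∏ i ∈ A, (qnum q i)^s := by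
      rw [qfact, ← Finset.prod_pow, ← Finset.prod_sdiff hAS]
    rw [Finset.prod_congr rfl hfac, Finset.prod_inv_distrib, Finset.prod_mul_distrib,
      Finset.prod_const, hAc, hqf, ← pow_mul, Nat.mul_comm s m]
    field_simp
end

section
/- For r ≤ m ≤ n-1 and r ≥ 1, the q-generalized (r,s)-Stirling number of the first kind satisfies T_{r,s}(n, m) = ([n-1]_q!/[r-1]_q!)^s · ∑_{r ≤ i₁ < … < i_{m-r} ≤ n-1} 1/([i₁]_q ⋯ [i_{m-r}]_q)^s. -/
/-!
By Vieta, `T_{r,s}(n,m)` is the elementary symmetric function `e_{n-m}` of the values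
`[i]_q^s`, `r ≤ i < n`. Passing to complements inside this `(n-r)`-element index set turns
`e_{n-m}` into the product of all the values times `e_{m-r}` of their reciprocals, and that
product is `([n-1]_q! / [r-1]_q!)^s`. Finally, the `(m-r)`-subsets of `[r, n)` are listed by
their strictly increasing enumerations `Fin (m-r) → Fin n`.
-/

open Finset Polynomial

/-- The `q`-generalized `(r,s)`-Stirling numbers of the first kind `T_{r,s}(n,k)`,
defined (for `n ≥ r`) as the coefficients in
`x^r ∏_{i=r}^{n-1} (x - ([i]_q)^s) = ∑_k (-1)^{n-k} T_{r,s}(n,k) x^k`. -/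
noncomputable def qStirlingFirstRS (q : ℂ) (r s n k : ℕ) : ℂ :=
  (-1 : ℂ) ^ (n - k) *
    ((Polynomial.X ^ r *
        ∏ i ∈ Finset.Ico r n, (Polynomial.X - Polynomial.C ((qnum q i) ^ s)) :
      Polynomial ℂ)).coeff k

theorem Finset.prod_X_sub_C_coeff {R ι : Type*} [CommRing R] (s : Finset ι) (a : ι → R)
    {k : ℕ} (hk : k ≤ #s) :
    (∏ i ∈ s, (X - C (a i))).coeff k
      = (-1) ^ (#s - k) * ∑ t ∈ s.powersetCard (#s - k), ∏ i ∈ t, a i := by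
  rw [Finset.prod, show s.val.map (fun i => X - C (a i)) = (s.val.map a).map (X - C ·) by
      rw [Multiset.map_map]; rfl,
    Multiset.prod_X_sub_C_coeff _ (by simpa using hk), Multiset.card_map, esymm_map_val]
  rfl

theorem Finset.sum_powersetCard_prod_eq_prod_mul_sum_inv {K ι : Type*} [Field K] [DecidableEq ι]
    (s : Finset ι) (a : ι → K) (ha : ∀ i ∈ s, a i ≠ 0) {k : ℕ} (hk : k ≤ #s) :
    ∑ t ∈ s.powersetCard (#s - k), ∏ i ∈ t, a i
      = (∏ i ∈ s, a i) * ∑ t ∈ s.powersetCard k, (∏ i ∈ t, a i)⁻¹ := by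
  rw [mul_sum]
  refine sum_nbij' (s \ ·) (s \ ·) ?_ ?_ ?_ ?_ ?_
  · intro t ht
    rw [mem_powersetCard] at ht ⊢
    exact ⟨sdiff_subset, by rw [card_sdiff_of_subset ht.1, ht.2]; omega⟩
  · intro t ht
    rw [mem_powersetCard] at ht ⊢
    exact ⟨sdiff_subset, by rw [card_sdiff_of_subset ht.1, ht.2]⟩
  · exact fun t ht => sdiff_sdiff_eq_self (mem_powersetCard.1 ht).1
  · exact fun t ht => sdiff_sdiff_eq_self (mem_powersetCard.1 ht).1
  · intro t ht
    have hts : t ⊆ s := (mem_powersetCard.1 ht).1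
    have hsdiff : ∏ i ∈ s \ t, a i ≠ 0 :=
      prod_ne_zero_iff.2 fun i hi => ha i (mem_sdiff.1 hi).1
    rw [← prod_sdiff (sdiff_subset : s \ t ⊆ s), mul_inv_cancel_right₀ hsdiff,
      sdiff_sdiff_eq_self hts]

theorem sum_strictMono_fin_eq_sum_powersetCard_Ico {β : Type*} [AddCommMonoid β]
    (r n k : ℕ) (g : Finset ℕ → β) :
    ∑ f ∈ univ.filter (fun f : Fin k → Fin n =>
        (∀ j, r ≤ (f j : ℕ)) ∧ ∀ j l, j < l → f j < f l),
      g (univ.image fun j => (f j : ℕ))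
      = ∑ t ∈ (Ico r n).powersetCard k, g t := by
  have hmono {f : Fin k → Fin n} (hf : ∀ j l, j < l → f j < f l) :
      StrictMono fun j => (f j : ℕ) := fun j l h => hf j l h
  have hcard {f : Fin k → Fin n} (hf : ∀ j l, j < l → f j < f l) :
      #(univ.image fun j => (f j : ℕ)) = k := by
    rw [card_image_of_injective _ (hmono hf).injective, card_univ, Fintype.card_fin]
  have hmem {t : Finset ℕ} (ht : t ∈ (Ico r n).powersetCard k) (j : Fin k) :=
    mem_Ico.1 ((mem_powersetCard.1 ht).1 (t.orderEmbOfFin_mem (mem_powersetCard.1 ht).2 j))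
  refine sum_bij' (fun f _ => univ.image fun j => (f j : ℕ))
    (fun t ht j => ⟨t.orderEmbOfFin (mem_powersetCard.1 ht).2 j, (hmem ht j).2⟩)
    (fun f hf => ?_) (fun t ht => ?_) (fun f hf => ?_) (fun t ht => ?_) fun _ _ => rfl
  · obtain ⟨hr, hf⟩ := (mem_filter.1 hf).2
    refine mem_powersetCard.2 ⟨fun i hi => ?_, hcard hf⟩
    obtain ⟨j, -, rfl⟩ := mem_image.1 hi
    exact mem_Ico.2 ⟨hr j, (f j).2⟩
  · exact mem_filter.2 ⟨mem_univ _, fun j => (hmem ht j).1,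
      fun j l h => (t.orderEmbOfFin _).strictMono h⟩
  · obtain ⟨-, hf⟩ := (mem_filter.1 hf).2
    funext j
    exact Fin.ext (congrFun (orderEmbOfFin_unique (hcard hf)
      (fun j => mem_image_of_mem _ (mem_univ j)) (hmono hf)) j).symm
  · apply Finset.coe_injective
    simp only [coe_image, coe_univ, Set.image_univ, range_orderEmbOfFin]

theorem qfact_sub_one_eq_mul_prod_Ico (q : ℂ) {r n : ℕ} (hr : 1 ≤ r) (hrn : r ≤ n) :
    qfact q (n - 1) = qfact q (r - 1) * ∏ i ∈ Ico r n, qnum q i := by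
  have hIcc : ∀ m, 1 ≤ m → Icc 1 (m - 1) = Ico 1 m := fun m hm => by
    ext x; simp only [mem_Icc, mem_Ico]; omega
  rw [qfact, qfact, hIcc n (hr.trans hrn), hIcc r hr, prod_Ico_consecutive _ hr hrn]

theorem qStirlingFirstRS_eq_sum_powersetCard (q : ℂ) {r s n k : ℕ} (hrk : r ≤ k) (hkn : k ≤ n) :
    qStirlingFirstRS q r s n k
      = ∑ t ∈ (Ico r n).powersetCard (n - k), ∏ i ∈ t, qnum q i ^ s := by
  have hcard : #(Ico r n) - (k - r) = n - k := by rw [Nat.card_Ico]; omega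
  rw [qStirlingFirstRS, coeff_X_pow_mul', if_pos hrk,
    prod_X_sub_C_coeff _ _ (by rw [Nat.card_Ico]; omega), hcard, ← mul_assoc, ← pow_add,
    Even.neg_one_pow ⟨n - k, rfl⟩, one_mul]

theorem stmt17_general (q : ℂ) (r s n m : ℕ) (hr : 1 ≤ r)
    (hrm : r ≤ m) (hmn : m ≤ n - 1)
    (hq : ∀ i, 1 ≤ i → i ≤ n - 1 → qnum q i ≠ 0) :
    qStirlingFirstRS q r s n m
      = (qfact q (n - 1) / qfact q (r - 1)) ^ s *
          ∑ f ∈ Finset.univ.filter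
              (fun f : Fin (m - r) → Fin n =>
                (∀ j, r ≤ (f j : ℕ)) ∧ ∀ j k, j < k → f j < f k),
            ((∏ j, qnum q (f j : ℕ)) ^ s)⁻¹ := by
  have hqfact : qfact q (r - 1) ≠ 0 :=
    prod_ne_zero_iff.2 fun i hi => hq i (mem_Icc.1 hi).1 (by grind)
  have hqIco : ∀ i ∈ Ico r n, qnum q i ^ s ≠ 0 := fun i hi =>
    pow_ne_zero _ (hq i (hr.trans (mem_Ico.1 hi).1) (by grind))
  rw [qStirlingFirstRS_eq_sum_powersetCard q hrm (by omega),
    qfact_sub_one_eq_mul_prod_Ico q hr (by omega), mul_div_cancel_left₀ _ hqfact, ← prod_pow,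
    show n - m = #(Ico r n) - (m - r) by rw [Nat.card_Ico]; omega,
    sum_powersetCard_prod_eq_prod_mul_sum_inv _ _ hqIco (by rw [Nat.card_Ico]; omega),
    ← sum_strictMono_fin_eq_sum_powersetCard_Ico r n (m - r) fun t => (∏ i ∈ t, qnum q i ^ s)⁻¹]
  refine congrArg _ (sum_congr rfl fun f hf => ?_)
  have hinj : Function.Injective fun j => (f j : ℕ) :=
    StrictMono.injective fun j l h => (mem_filter.1 hf).2.2 j l h
  rw [prod_image fun j _ l _ h => hinj h, prod_pow]

theorem stmt17 (q : ℂ) (r s n m : ℕ) (hr : 1 ≤ r) (hs : 1 ≤ s)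
    (hrm : r ≤ m) (hmn : m ≤ n - 1)
    (hq : ∀ i, 1 ≤ i → i ≤ n - 1 → qnum q i ≠ 0) :
    qStirlingFirstRS q r s n m
      = (qfact q (n - 1) / qfact q (r - 1)) ^ s *
          ∑ f ∈ Finset.univ.filter
              (fun f : Fin (m - r) → Fin n =>
                (∀ j, r ≤ (f j : ℕ)) ∧ ∀ j k, j < k → f j < f k),
            ((∏ j, qnum q (f j : ℕ)) ^ s)⁻¹ :=
  stmt17_general q r s n m hr hrm hmn hq
end

section
/- For n - k ≥ r ≥ 1, the q-generalized (r,s)-Stirling number of the second kind satisfies S_{r,s}(n, n-k) = ∑_{r ≤ i₁ ≤ i₂ ≤ … ≤ i_k ≤ n-k} ([i₁]_q[i₂]_q⋯[i_k]_q)^s. -/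
/-! Both sides obey the same recurrence. For the complete homogeneous symmetric polynomials
`h_k(x_a, …, x_b)`, splitting the monotone sequences according to whether their last entry is `b`
gives `h_{k+1}(x_a, …, x_b) = h_{k+1}(x_a, …, x_{b-1}) + x_b h_k(x_a, …, x_b)`. With
`x_i = [i]_q^s` this is the defining recurrence of `S_{r,s}(m + k, m)`, and the boundary values
`S_{r,s}(m, m) = 1` and `S_{r,s}(n, j) = 0` for `j < r` match `h_0 = 1` and the empty sum. -/

open Finset

/-- The `q`-generalized `(r,s)`-Stirling numbers of the second kind `S_{r,s}(n,k)`,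
characterized by the recurrence
`S_{r,s}(n,k) = S_{r,s}(n-1,k-1) + ([k]_q)^s S_{r,s}(n-1,k)` for `n > r`,
with base `S_{r,s}(r,k) = δ_{k,r}`, and `S_{r,s}(n,k) = 0` for `n < r`
(so in particular `S_{r,s}(n,k) = 0` whenever `k ≤ r - 1` and `n ≥ 1`). -/
noncomputable def qStirlingSecondRS (q : ℂ) (r s : ℕ) : ℕ → ℕ → ℂ
  | 0, 0 => if r = 0 then 1 else 0
  | 0, _ + 1 => 0
  | n + 1, k =>
      if n + 1 < r then 0
      else if n + 1 = r then (if k = r then 1 else 0)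
      else
        match k with
        | 0 => 0
        | k + 1 =>
            qStirlingSecondRS q r s n k
              + (qnum q (k + 1)) ^ s * qStirlingSecondRS q r s n (k + 1)

section Recurrence

variable (q : ℂ) (r s : ℕ)

local notation "S" => qStirlingSecondRS q r s

theorem qStirlingSecondRS_eq_zero_of_left_lt_r {n : ℕ} (hn : n < r) (j : ℕ) : S n j = 0 := by
  rcases n with _ | n
  · rcases j with _ | j
    · rw [qStirlingSecondRS.eq_1, if_neg hn.ne']
    · rw [qStirlingSecondRS.eq_2]
  · rw [qStirlingSecondRS.eq_def]
    exact if_pos hn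

theorem qStirlingSecondRS_r_left (j : ℕ) : S r j = if j = r then 1 else 0 := by
  rcases r with _ | r
  · rcases j with _ | j <;> simp [qStirlingSecondRS]
  · rw [qStirlingSecondRS.eq_def]
    rcases j with _ | j <;> simp

theorem qStirlingSecondRS_succ_zero {n : ℕ} (hn : r ≤ n) : S (n + 1) 0 = 0 := by
  rw [qStirlingSecondRS.eq_3, if_neg (by omega), if_neg (by omega)]

theorem qStirlingSecondRS_succ_succ {n : ℕ} (hn : r ≤ n) (j : ℕ) :
    S (n + 1) (j + 1) = S n j + qnum q (j + 1) ^ s * S n (j + 1) := by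
  rw [qStirlingSecondRS.eq_4, if_neg (by omega), if_neg (by omega)]

theorem qStirlingSecondRS_eq_zero_of_lt {n j : ℕ} (h : n < j) : S n j = 0 := by
  rcases lt_or_ge n r with hn | hn
  · exact qStirlingSecondRS_eq_zero_of_left_lt_r q r s hn j
  induction n, hn using Nat.le_induction generalizing j with
  | base => simp [qStirlingSecondRS_r_left, h.ne']
  | succ n hn ih =>
    obtain ⟨j, rfl⟩ : ∃ i, j = i + 1 := ⟨j - 1, by omega⟩
    rw [qStirlingSecondRS_succ_succ q r s hn, ih (by omega), ih (by omega), mul_zero, add_zero]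

theorem qStirlingSecondRS_eq_zero_of_right_lt_r (n : ℕ) {j : ℕ} (hj : j < r) :
    S n j = 0 := by
  rcases lt_or_ge n r with hn | hn
  · exact qStirlingSecondRS_eq_zero_of_left_lt_r q r s hn j
  induction n, hn using Nat.le_induction generalizing j with
  | base => simp [qStirlingSecondRS_r_left, hj.ne]
  | succ n hn ih =>
    rcases j with _ | j
    · exact qStirlingSecondRS_succ_zero q r s hn
    · rw [qStirlingSecondRS_succ_succ q r s hn, ih (by omega), ih hj, mul_zero, add_zero]

theorem qStirlingSecondRS_self {n : ℕ} (hn : r ≤ n) : S n n = 1 := by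
  induction n, hn using Nat.le_induction with
  | base => simp [qStirlingSecondRS_r_left]
  | succ n hn ih =>
    rw [qStirlingSecondRS_succ_succ q r s hn, ih,
      qStirlingSecondRS_eq_zero_of_lt q r s n.lt_succ_self, mul_zero, add_zero]

end Recurrence

theorem Fin.monotone_snoc {α : Type*} [Preorder α] {k : ℕ} {f : Fin k → α} {a : α}
    (hf : Monotone f) (ha : ∀ i, f i ≤ a) : Monotone (Fin.snoc f a : Fin (k + 1) → α) := by
  intro i j hij
  induction j using Fin.lastCases with
  | last =>
    induction i using Fin.lastCases with
    | last => exact le_rfl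
    | cast i => simpa using ha i
  | cast j =>
    induction i using Fin.lastCases with
    | last => exact absurd hij (not_le.2 (Fin.castSucc_lt_last j))
    | cast i => simpa using hf (Fin.castSucc_le_castSucc_iff.1 hij)

section CompleteHomogeneous

variable {R : Type*} [CommSemiring R] (x : ℕ → R)

-- the complete homogeneous symmetric polynomial `h_k(x_a, …, x_b)`
noncomputable def hsymmIcc (a b k : ℕ) : R :=
  ∑ f ∈ (Fintype.piFinset fun _ : Fin k => Icc a b).filter Monotone, ∏ j, x (f j)

theorem hsymmIcc_zero (a b : ℕ) : hsymmIcc x a b 0 = 1 := by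
  simp [hsymmIcc, Subsingleton.monotone]

theorem hsymmIcc_eq_zero_of_lt {a b : ℕ} (h : b < a) (k : ℕ) :
    hsymmIcc x a b (k + 1) = 0 := by
  simp [hsymmIcc, h]

theorem hsymmIcc_succ_succ {a b : ℕ} (h : a ≤ b + 1) (k : ℕ) :
    hsymmIcc x a (b + 1) (k + 1) =
      hsymmIcc x a b (k + 1) + x (b + 1) * hsymmIcc x a (b + 1) k := by
  set A := (Fintype.piFinset fun _ : Fin (k + 1) => Icc a (b + 1)).filter Monotone
  have h_below : A.filter (fun f => f (Fin.last k) ≠ b + 1) =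
      (Fintype.piFinset fun _ : Fin (k + 1) => Icc a b).filter Monotone := by
    ext f
    simp only [A, mem_filter, Fintype.mem_piFinset, mem_Icc]
    constructor
    · rintro ⟨⟨hf, hmono⟩, hlast⟩
      refine ⟨fun j => ⟨(hf j).1, ?_⟩, hmono⟩
      have := hmono (Fin.le_last j)
      have := (hf (Fin.last k)).2
      omega
    · rintro ⟨hf, hmono⟩
      have := (hf (Fin.last k)).2
      exact ⟨⟨fun j => ⟨(hf j).1, by have := (hf j).2; omega⟩, hmono⟩, by omega⟩
  have h_top : ∑ f ∈ A.filter (fun f => f (Fin.last k) = b + 1), ∏ j, x (f j) =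
      x (b + 1) * hsymmIcc x a (b + 1) k := by
    rw [hsymmIcc, mul_sum]
    refine sum_nbij' Fin.init (fun g => Fin.snoc g (b + 1)) ?_ ?_ ?_ ?_ ?_
    · intro f hf
      simp only [A, mem_filter, Fintype.mem_piFinset] at hf ⊢
      exact ⟨fun j => hf.1.1 _, Monotone.comp hf.1.2 Fin.strictMono_castSucc.monotone⟩
    · intro g hg
      simp only [A, mem_filter, Fintype.mem_piFinset, mem_Icc] at hg ⊢
      refine ⟨⟨fun j => ?_, Fin.monotone_snoc hg.2 fun j => (hg.1 j).2⟩, Fin.snoc_last _ _⟩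
      induction j using Fin.lastCases with
      | last => simpa using h
      | cast j => simpa using hg.1 j
    · intro f hf
      rw [← (mem_filter.1 hf).2, Fin.snoc_init_self]
    · intro g _
      exact Fin.init_snoc _ _
    · intro f hf
      rw [Fin.prod_univ_castSucc, (mem_filter.1 hf).2, mul_comm]
      rfl
  have h_split := sum_filter_not_add_sum_filter A (fun f => f (Fin.last k) = b + 1)
    (fun f => ∏ j, x (f j))
  rw [h_below, h_top] at h_split
  exact h_split.symm

theorem sum_monotone_fin_eq_hsymmIcc (a : ℕ) {n k : ℕ} (hkn : k ≤ n) :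
    ∑ f ∈ univ.filter (fun f : Fin k → Fin n =>
        (∀ j, a ≤ (f j : ℕ) ∧ (f j : ℕ) ≤ n - k) ∧ ∀ j l, j ≤ l → f j ≤ f l),
      ∏ j, x (f j) = hsymmIcc x a (n - k) k := by
  refine sum_bij (fun f _ => Fin.val ∘ f) ?_ ?_ ?_ ?_
  · intro f hf
    simp only [mem_filter, mem_univ, true_and] at hf
    simp only [mem_filter, Fintype.mem_piFinset, mem_Icc]
    exact ⟨hf.1, fun i j hij => hf.2 i j hij⟩
  · intro f _ g _ hfg
    funext j
    exact Fin.ext (congrFun hfg j)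
  · intro g hg
    simp only [mem_filter, Fintype.mem_piFinset, mem_Icc] at hg
    have hlt : ∀ j, g j < n := fun j => by
      have := (hg.1 j).2
      have := j.isLt
      omega
    refine ⟨fun j => ⟨g j, hlt j⟩, ?_, rfl⟩
    simp only [mem_filter, mem_univ, true_and]
    exact ⟨hg.1, fun i j hij => hg.2 hij⟩
  · intro f _
    rfl

end CompleteHomogeneous

theorem qStirlingSecondRS_add_self_eq_hsymmIcc (q : ℂ) {r : ℕ} (s : ℕ) (hr : 1 ≤ r)
    (k : ℕ) {m : ℕ} (hm : r ≤ m) :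
    qStirlingSecondRS q r s (m + k) m = hsymmIcc (fun i => qnum q i ^ s) r m k := by
  induction k generalizing m with
  | zero => rw [add_zero, qStirlingSecondRS_self q r s hm, hsymmIcc_zero]
  | succ k ihk =>
    induction m with
    | zero => omega
    | succ b ihb =>
      have h_prev : qStirlingSecondRS q r s (b + (k + 1)) b =
          hsymmIcc (fun i => qnum q i ^ s) r b (k + 1) := by
        rcases le_or_gt r b with hb | hb
        · exact ihb hb
        · rw [qStirlingSecondRS_eq_zero_of_right_lt_r q r s _ hb,
            hsymmIcc_eq_zero_of_lt _ hb]
      rw [show b + 1 + (k + 1) = b + (k + 1) + 1 by omega,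
        qStirlingSecondRS_succ_succ q r s (by omega), h_prev,
        show b + (k + 1) = b + 1 + k by omega, ihk hm, hsymmIcc_succ_succ _ hm]

theorem stmt18_general (q : ℂ) (r s n k : ℕ) (hr : 1 ≤ r) (hnk : r + k ≤ n) :
    qStirlingSecondRS q r s n (n - k)
      = ∑ f ∈ Finset.univ.filter
          (fun f : Fin k → Fin n =>
            (∀ j, r ≤ (f j : ℕ) ∧ (f j : ℕ) ≤ n - k) ∧ ∀ j l, j ≤ l → f j ≤ f l),
        (∏ j, qnum q (f j : ℕ)) ^ s := by
  simp_rw [← prod_pow]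
  rw [sum_monotone_fin_eq_hsymmIcc (fun i => qnum q i ^ s) r (by omega)]
  obtain ⟨m, rfl⟩ : ∃ m, n = m + k := ⟨n - k, by omega⟩
  rw [Nat.add_sub_cancel]
  exact qStirlingSecondRS_add_self_eq_hsymmIcc q s hr k (by omega)

theorem stmt18 (q : ℂ) (r s n k : ℕ) (hr : 1 ≤ r) (hs : 1 ≤ s) (hnk : r + k ≤ n) :
    qStirlingSecondRS q r s n (n - k)
      = ∑ f ∈ Finset.univ.filter
          (fun f : Fin k → Fin n =>
            (∀ j, r ≤ (f j : ℕ) ∧ (f j : ℕ) ≤ n - k) ∧ ∀ j l, j ≤ l → f j ≤ f l),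
        (∏ j, qnum q (f j : ℕ)) ^ s :=
  stmt18_general q r s n k hr hnk
end
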